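/- arXiv:2505.18410 — 4 statements merged into one kernel-verified Lean document; each statement's English description precedes it below -/
import Mathlib

section
/- Let 𝒳_1, …, 𝒳_J be finite nonempty sets and fix subsets C_j ⊆ 𝒳_j. Let Γ be a J×K binary matrix such that: (i) Γ is double triangular, witnessed by disjoint row sets S1, S2 ⊆ {1,…,J} of size K each; and (ii) for every k ∈ {1,…,K} there exists j ∈ {1,…,J} \ (S1 ∪ S2) with Γ_{j,k} = 1. Let (P_{j,h}) be pmfs on 𝒳_j compatible with Γ, monotone with respect to Γ and (C_j), and let π : {0,1}^K → (0,1] be strictly positive with Σ_h π_h = 1. Let Γ̃ be any J×K binary matrix, (Q_{j,h}) pmfs compatible with Γ̃ and monotone with respect to Γ̃ and the same sets (C_j), and π̃ strictly positive with Σ_h π̃_h = 1. If Σ_h π_h ∏_j P_{j,h}(x_j) = Σ_h π̃_h ∏_j Q_{j,h}(x_j) for every x ∈ ∏_j 𝒳_j, then there exists a permutation τ of {1,…,K} such that, defining φ : {0,1}^K → {0,1}^K by φ(h)_{τ(k)} = h_k, one has Γ̃_{j,τ(k)} = Γ_{j,k}, π̃_{φ(h)} = π_h, and Q_{j,φ(h)}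 = P_{j,h} for all j, k, h. That is, under monotonicity the model is identifiable up to latent label permutation only, with no sign-flipping ambiguity and without the subset condition. -/
open Finset Function Matrix



/-- A `K × K` binary matrix is triangular if its rows and columns can be reordered
(by possibly different permutations) so that all diagonal entries equal `1` and all entries
strictly above the diagonal equal `0`. -/
def IsTriangular {K : ℕ} (M : Fin K → Fin K → Bool) : Prop :=
  ∃ ρ c : Equiv.Perm (Fin K),
    (∀ k, M (ρ k) (c k) = true) ∧ ∀ k k' : Fin K, k < k' → M (ρ k) (c k') = false

/-- A family of pmfs `(P j h)` on finite sets is monotone with respect to a bipartite graph `Γ`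
and baseline sets `C j` if `P_{j,h}(C_j) > P_{j,h'}(C_j)` whenever `h' ⪯ h` on the parents of
`j` with strict inequality at some parent. -/
def IsMonotone {J K : ℕ} {X : Fin J → Type*} [∀ j, Fintype (X j)]
    (Γ : Fin J → Fin K → Bool) (C : (j : Fin J) → Finset (X j))
    (P : (j : Fin J) → (Fin K → Bool) → X j → ℝ) : Prop :=
  ∀ (j : Fin J) (h h' : Fin K → Bool),
    ((∀ k, Γ j k = true → h' k ≤ h k) ∧ (∃ k, Γ j k = true ∧ h' k < h k)) →
    ∑ x ∈ C j, P j h' x < ∑ x ∈ C j, P j h x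




lemma lemA {K : ℕ} (c : Equiv.Perm (Fin K)) (ε : Fin K → (Fin K → Bool) → ℝ)
    (hdep : ∀ (m : Fin K) (h h' : Fin K → Bool), (∀ i, i ≤ m → h (c i) = h' (c i)) →
      ε m h = ε m h')
    (hmono : ∀ (m : Fin K) (h : Fin K → Bool),
      ε m (Function.update h (c m) false) < ε m (Function.update h (c m) true))
    (lam : (Fin K → Bool) → ℝ)
    (hlam : ∀ s : Fin K → Bool,
      ∑ h, lam h * ∏ m ∈ Finset.univ.filter (fun m => s m = true), ε m h = 0) :
    lam = 0 := by
  classical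
  -- pairing helper: for any G, sum of the two updates equals twice the sum
  have pairing : ∀ (a : Fin K) (G : (Fin K → Bool) → ℝ),
      ∑ h, (G (Function.update h a false) + G (Function.update h a true))
        = 2 * ∑ h, G h := by
    intro a G
    have flinv : ∀ h : Fin K → Bool,
        Function.update (fun k => if k = a then !h k else h k) a (!((fun k => if k = a then !h k else h k) a)) = h := by
      intro h; funext k
      by_cases hk : k = a
      · subst hk; simp
      · simp [Function.update, hk]
    set fl : (Fin K → Bool) → (Fin K → Bool) := fun h => fun k => if k = a then !h k else h k with hfl
    have flfl : ∀ h, fl (fl h) = h := by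
      intro h; funext k; by_cases hk : k = a <;> simp [fl, hk]
    have step : ∀ h : Fin K → Bool,
        G (Function.update h a false) + G (Function.update h a true) = G h + G (fl h) := by
      intro h
      have hup : ∀ b, Function.update h a b = if h a = b then h else fl h := by
        intro b
        by_cases hb : h a = b
        · rw [if_pos hb, ← hb, Function.update_eq_self]
        · rw [if_neg hb]
          funext k
          by_cases hk : k = a
          · subst hk
            simp [fl]
            cases hb' : h k <;> cases b <;> simp_all
          · simp [Function.update, hk, fl]
      cases hb : h a
      · rw [hup false, hup true, if_pos hb, if_neg (by simp [hb])]
      · rw [hup false, hup true, if_neg (by simp [hb]), if_pos hb, add_comm]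
    calc ∑ h, (G (Function.update h a false) + G (Function.update h a true))
        = ∑ h, (G h + G (fl h)) := by exact Finset.sum_congr rfl (fun h _ => step h)
      _ = (∑ h, G h) + ∑ h, G (fl h) := Finset.sum_add_distrib
      _ = (∑ h, G h) + ∑ h, G h := by
            congr 1
            exact Equiv.sum_comp (⟨fl, fl, fun h => flfl h, fun h => flfl h⟩ :
              (Fin K → Bool) ≃ (Fin K → Bool)) G
      _ = 2 * ∑ h, G h := by ring
  -- main induction
  suffices hmain : ∀ (j : ℕ) (μ : (Fin K → Bool) → ℝ),
      (∀ h h', (∀ i : Fin K, (i : ℕ) < j → h (c i) = h' (c i)) → μ h = μ h') →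
      (∀ s : Fin K → Bool, (∀ i, s i = true → (i : ℕ) < j) →
        ∑ h, μ h * ∏ m ∈ Finset.univ.filter (fun m => s m = true), ε m h = 0) →
      μ = 0 by
    refine hmain K lam ?_ ?_
    · intro h h' hagree
      have : h = h' := by
        funext k
        have := hagree (c.symm k) (c.symm k).isLt
        simpa using this
      rw [this]
    · intro s _; exact hlam s
  intro j
  induction j with
  | zero =>
    intro μ hdepμ hs
    have hconst : ∀ h, μ h = μ (fun _ => false) := fun h => hdepμ h _ (by omega)
    have h0 := hs (fun _ => false) (by simp)
    have h1 : ∑ h : Fin K → Bool, μ h = 0 := by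
      simpa using h0
    have h2 : (Fintype.card (Fin K → Bool) : ℝ) * μ (fun _ => false) = 0 := by
      rw [← h1, Finset.sum_congr rfl (fun h _ => hconst h), Finset.sum_const,
        nsmul_eq_mul, Finset.card_univ]
    have hcard : (Fintype.card (Fin K → Bool) : ℝ) ≠ 0 :=
      Nat.cast_ne_zero.mpr Fintype.card_ne_zero
    have hz : μ (fun _ => false) = 0 := by
      rcases mul_eq_zero.mp h2 with h | h
      · exact absurd h hcard
      · exact h
    funext h
    show μ h = 0
    rw [hconst h, hz]
  | succ j IH =>
    intro μ hdepμ hs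
    by_cases hj : j < K
    · set m : Fin K := ⟨j, hj⟩ with hm
      set a : Fin K := c m with ha
      -- invariance of filtered products for s supported below j
      have Finv : ∀ (s : Fin K → Bool), (∀ i, s i = true → (i:ℕ) < j) →
          ∀ (h : Fin K → Bool) (b : Bool),
          ∏ m' ∈ Finset.univ.filter (fun m' => s m' = true), ε m' (Function.update h a b)
            = ∏ m' ∈ Finset.univ.filter (fun m' => s m' = true), ε m' h := by
        intro s hsupp h b
        refine Finset.prod_congr rfl (fun m' hm' => ?_)
        rw [Finset.mem_filter] at hm'
        refine hdep m' _ _ (fun i hi => ?_)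
        have : c i ≠ a := by
          intro hia
          have him : i = m := c.injective hia
          have h1 : (i:ℕ) = j := by rw [him]
          have h2 : (i:ℕ) ≤ (m':ℕ) := Fin.le_def.mp hi
          have h3 := hsupp m' hm'.2
          omega
        rw [Function.update_of_ne this]
      -- define the reduced coefficient functions
      set μ0 : (Fin K → Bool) → ℝ := fun h => μ (Function.update h a false) with hμ0
      set μ1 : (Fin K → Bool) → ℝ := fun h => μ (Function.update h a true) with hμ1
      set ν : (Fin K → Bool) → ℝ := fun h => μ0 h + μ1 h with hν
      have hνdep : ∀ h h', (∀ i : Fin K, (i:ℕ) < j → h (c i) = h' (c i)) → ν h = ν h' := by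
        intro h h' hag
        have key : ∀ b : Bool, μ (Function.update h a b) = μ (Function.update h' a b) := by
          intro b
          refine hdepμ _ _ (fun i hi => ?_)
          by_cases hia : c i = a
          · rw [hia]; simp
          · rw [Function.update_of_ne hia, Function.update_of_ne hia]
            refine hag i ?_
            have : i ≠ m := fun hh => hia (by rw [hh])
            have : (i:ℕ) ≠ j := by
              intro hcon
              exact this (Fin.ext (by simp [hm, hcon]))
            omega
        simp only [hν, hμ0, hμ1, key false, key true]
      have hνsum : ∀ s : Fin K → Bool, (∀ i, s i = true → (i:ℕ) < j) →
          ∑ h, ν h * ∏ m' ∈ Finset.univ.filter (fun m' => s m' = true), ε m' h = 0 := by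
        intro s hsupp
        have h2 := pairing a (fun h => μ h * ∏ m' ∈ Finset.univ.filter (fun m' => s m' = true), ε m' h)
        have hz := hs s (fun i hi => Nat.lt_succ_of_lt (hsupp i hi))
        rw [hz, mul_zero] at h2
        calc ∑ h, ν h * ∏ m' ∈ Finset.univ.filter (fun m' => s m' = true), ε m' h
            = ∑ h, ((fun h => μ h * ∏ m' ∈ Finset.univ.filter (fun m' => s m' = true), ε m' h) (Function.update h a false)
              + (fun h => μ h * ∏ m' ∈ Finset.univ.filter (fun m' => s m' = true), ε m' h) (Function.update h a true)) := by
              refine Finset.sum_congr rfl (fun h _ => ?_)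
              simp only [hν, hμ0, hμ1]
              rw [Finv s hsupp h false, Finv s hsupp h true]
              ring
          _ = 0 := h2
      have hν0 : ν = 0 := IH ν hνdep hνsum
      -- now the epsilon-weighted equations
      set ν' : (Fin K → Bool) → ℝ := fun h =>
        μ1 h * (ε m (Function.update h a true) - ε m (Function.update h a false)) with hν'
      have hν'dep : ∀ h h', (∀ i : Fin K, (i:ℕ) < j → h (c i) = h' (c i)) → ν' h = ν' h' := by
        intro h h' hag
        have keyμ : μ (Function.update h a true) = μ (Function.update h' a true) := by
          refine hdepμ _ _ (fun i hi => ?_)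
          by_cases hia : c i = a
          · rw [hia]; simp
          · rw [Function.update_of_ne hia, Function.update_of_ne hia]
            refine hag i ?_
            have hne : i ≠ m := fun hh => hia (by rw [hh])
            have : (i:ℕ) ≠ j := fun hcon => hne (Fin.ext (by simp [hm, hcon]))
            omega
        have keyε : ∀ b : Bool, ε m (Function.update h a b) = ε m (Function.update h' a b) := by
          intro b
          refine hdep m _ _ (fun i hi => ?_)
          by_cases hia : c i = a
          · have : i = m := c.injective hia
            subst this
            simp [ha]
          · rw [Function.update_of_ne hia, Function.update_of_ne hia]
            refine hag i ?_
            have hne : i ≠ m := fun hh => hia (by rw [hh])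
            have hle : (i:ℕ) ≤ j := by exact_mod_cast hi
            have : (i:ℕ) ≠ j := fun hcon => hne (Fin.ext (by simp [hm, hcon]))
            omega
        simp only [hν', hμ1, keyμ, keyε false, keyε true]
      have hν'sum : ∀ s : Fin K → Bool, (∀ i, s i = true → (i:ℕ) < j) →
          ∑ h, ν' h * ∏ m' ∈ Finset.univ.filter (fun m' => s m' = true), ε m' h = 0 := by
        intro s hsupp
        -- use s' := s with m added
        set s' : Fin K → Bool := Function.update s m true with hs'
        have hsupp' : ∀ i, s' i = true → (i:ℕ) < j + 1 := by
          intro i hi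
          by_cases him : i = m
          · subst him; simp [hm]
          · rw [hs'] at hi
            rw [Function.update_of_ne him] at hi
            exact Nat.lt_succ_of_lt (hsupp i hi)
        have hsm : s m = false := by
          cases hsm : s m
          · rfl
          · exact absurd (hsupp m hsm) (by simp [hm])
        have hfilter : Finset.univ.filter (fun m' => s' m' = true)
            = insert m (Finset.univ.filter (fun m' => s m' = true)) := by
          ext i
          simp only [Finset.mem_filter, Finset.mem_insert, Finset.mem_univ, true_and]
          by_cases him : i = m
          · subst him; simp [hs', hsm]
          · simp [hs', Function.update_of_ne him, him]
        have hmnotmem : m ∉ Finset.univ.filter (fun m' => s m' = true) := by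
          simp [hsm]
        have hz' := hs s' hsupp'
        rw [hfilter] at hz'
        have hz'' : ∑ h, μ h * (ε m h * ∏ m' ∈ Finset.univ.filter (fun m' => s m' = true), ε m' h) = 0 := by
          rw [← hz']
          refine Finset.sum_congr rfl (fun h _ => ?_)
          rw [Finset.prod_insert hmnotmem]
        have h2 := pairing a (fun h => μ h * (ε m h * ∏ m' ∈ Finset.univ.filter (fun m' => s m' = true), ε m' h))
        rw [hz'', mul_zero] at h2
        -- the paired sum equals sum of (μ0 ε0 + μ1 ε1) * F
        have hpaired : ∑ h, (μ0 h * ε m (Function.update h a false) + μ1 h * ε m (Function.update h a true))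
            * ∏ m' ∈ Finset.univ.filter (fun m' => s m' = true), ε m' h = 0 := by
          rw [← h2]
          refine Finset.sum_congr rfl (fun h _ => ?_)
          simp only [hμ0, hμ1]
          rw [Finv s hsupp h false, Finv s hsupp h true]
          ring
        -- μ0 = -μ1 from hν0
        have hμ01 : ∀ h, μ0 h = -μ1 h := by
          intro h
          have := congrFun hν0 h
          simp only [hν, Pi.zero_apply] at this
          linarith
        rw [← hpaired]
        refine Finset.sum_congr rfl (fun h _ => ?_)
        rw [hμ01 h]
        simp only [hν']
        ring
      have hν'0 : ν' = 0 := IH ν' hν'dep hν'sum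
      have hμ1z : ∀ h, μ1 h = 0 := by
        intro h
        have := congrFun hν'0 h
        simp only [hν', Pi.zero_apply] at this
        have hgap := hmono m h
        rw [← ha] at hgap
        rcases mul_eq_zero.mp this with h1 | h2
        · exact h1
        · exfalso; have := sub_ne_zero.mpr (ne_of_gt hgap); exact this h2
      have hμ0z : ∀ h, μ0 h = 0 := by
        intro h
        have := congrFun hν0 h
        simp only [hν, Pi.zero_apply] at this
        rw [hμ1z h] at this
        linarith
      funext h
      show μ h = 0
      cases hb : h a
      · have e : Function.update h a false = h := by rw [← hb, Function.update_eq_self]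
        have := hμ0z h
        simp only [hμ0] at this
        rwa [e] at this
      · have e : Function.update h a true = h := by rw [← hb, Function.update_eq_self]
        have := hμ1z h
        simp only [hμ1] at this
        rwa [e] at this
    · -- j ≥ K : reduce to IH directly
      refine IH μ ?_ ?_
      · intro h h' hag
        refine hdepμ h h' (fun i _ => hag i ?_)
        have := i.isLt
        omega
      · intro s hsupp
        refine hs s (fun i hi => ?_)
        have := i.isLt
        omega



lemma detUnit_of_mulVec_inj {n : Type*} [Fintype n] [DecidableEq n] (M : Matrix n n ℝ)
    (h : ∀ w : n → ℝ, M.mulVec w = 0 → w = 0) : IsUnit M.det := by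
  rw [isUnit_iff_ne_zero]
  intro hdet
  obtain ⟨v, hv, hmv⟩ := (Matrix.exists_mulVec_eq_zero_iff).mpr hdet
  exact hv (h v hmv)

lemma prodsplit {J K : ℕ} (f g : Fin K → Fin J)
    (hf : Function.Injective f) (hg : Function.Injective g)
    (hfg : ∀ m m', f m ≠ g m') (F : Fin J → ℝ) :
    ∏ j, F j = ((∏ m, F (f m)) * (∏ m, F (g m))) *
      ∏ j ∈ Finset.univ \ (Finset.univ.image f ∪ Finset.univ.image g), F j := by
  classical
  have hsub : (Finset.univ.image f ∪ Finset.univ.image g) ⊆ (Finset.univ : Finset (Fin J)) :=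
    Finset.subset_univ _
  have hdisj : Disjoint (Finset.univ.image f) (Finset.univ.image g) := by
    rw [Finset.disjoint_left]
    intro j hjf hjg
    obtain ⟨m, _, rfl⟩ := Finset.mem_image.mp hjf
    obtain ⟨m', _, he⟩ := Finset.mem_image.mp hjg
    exact hfg m m' he.symm
  rw [← Finset.prod_sdiff hsub, Finset.prod_union hdisj,
    Finset.prod_image (fun a _ b _ hab => hf hab),
    Finset.prod_image (fun a _ b _ hab => hg hab)]
  ring

/-- Core Jennrich-style step for one side. -/
lemma keyU {H : Type*} [Fintype H] [DecidableEq H] {V : Type*}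
    (A B A' B' : Matrix H H ℝ) (p p' : H → ℝ) (cv cv' : H → V → ℝ) (vone : V)
    (hA : IsUnit A.det) (hB : IsUnit B.det)
    (hp' : ∀ h, p' h ≠ 0)
    (hpne : ∀ h, p h ≠ 0)
    (hcone : ∀ h, cv h vone = 1) (hcone' : ∀ h, cv' h vone = 1)
    (hcore : ∀ v, A * Matrix.diagonal (fun h => p h * cv h v) * Bᵀ
      = A' * Matrix.diagonal (fun h => p' h * cv' h v) * B'ᵀ)
    (hcinj : ∀ a a', (∀ v, cv a v = cv a' v) → a = a') :
    ∃ (σ : H → H) (u : H → ℝ), Function.Bijective σ ∧ (∀ b, u b ≠ 0) ∧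
      (∀ b v, cv' b v = cv (σ b) v) ∧
      (∀ s b, A' s b * p' b = A s (σ b) * u b) := by
  classical
  have hX0 : A * Matrix.diagonal p * Bᵀ = A' * Matrix.diagonal p' * B'ᵀ := by
    have := hcore vone
    simpa [hcone, hcone'] using this
  have hdp : IsUnit (Matrix.diagonal p).det := by
    rw [Matrix.det_diagonal, isUnit_iff_ne_zero]
    exact Finset.prod_ne_zero_iff.mpr (fun h _ => hpne h)
  have hdp' : IsUnit (Matrix.diagonal p').det := by
    rw [Matrix.det_diagonal, isUnit_iff_ne_zero]
    exact Finset.prod_ne_zero_iff.mpr (fun h _ => hp' h)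
  have hX0det : IsUnit (A * Matrix.diagonal p * Bᵀ).det := by
    rw [Matrix.det_mul, Matrix.det_mul, Matrix.det_transpose]
    exact (hA.mul hdp).mul hB
  have hA'B' : IsUnit A'.det ∧ IsUnit B'.det := by
    rw [hX0] at hX0det
    rw [Matrix.det_mul, Matrix.det_mul, Matrix.det_transpose] at hX0det
    exact ⟨isUnit_of_mul_isUnit_left (isUnit_of_mul_isUnit_left hX0det),
      isUnit_of_mul_isUnit_right hX0det⟩
  obtain ⟨hA', hB'⟩ := hA'B'
  -- S := A⁻¹ * A' with two-sided inverse T := A'⁻¹ * A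
  set S : Matrix H H ℝ := A⁻¹ * A' with hS
  set T : Matrix H H ℝ := A'⁻¹ * A with hT
  have hST : S * T = 1 := by
    rw [hS, hT]
    calc A⁻¹ * A' * (A'⁻¹ * A) = A⁻¹ * (A' * A'⁻¹) * A := by
          noncomm_ring
      _ = A⁻¹ * A := by rw [Matrix.mul_nonsing_inv _ hA', Matrix.mul_one]
      _ = 1 := Matrix.nonsing_inv_mul _ hA
  have hTS : T * S = 1 := by
    rw [hS, hT]
    calc A'⁻¹ * A * (A⁻¹ * A') = A'⁻¹ * (A * A⁻¹) * A' := by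
          noncomm_ring
      _ = A'⁻¹ * A' := by rw [Matrix.mul_nonsing_inv _ hA, Matrix.mul_one]
      _ = 1 := Matrix.nonsing_inv_mul _ hA'
  -- conjugation identity : diag (cv v) * S = S * diag (cv' v)
  have hconj : ∀ v, Matrix.diagonal (fun h => cv h v) * S = S * Matrix.diagonal (fun h => cv' h v) := by
    intro v
    -- first: A * diag(cv v) * diag p * B^T = A' * diag p' * diag(cv' v) * B'^T
    have h1 : A * Matrix.diagonal (fun h => cv h v) * Matrix.diagonal p * Bᵀ
        = A' * Matrix.diagonal p' * Matrix.diagonal (fun h => cv' h v) * B'ᵀ := by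
      have e1 : Matrix.diagonal (fun h => cv h v) * Matrix.diagonal p
          = Matrix.diagonal (fun h => p h * cv h v) := by
        rw [Matrix.diagonal_mul_diagonal]
        exact congrArg Matrix.diagonal (funext fun h => mul_comm _ _)
      have e2 : Matrix.diagonal p' * Matrix.diagonal (fun h => cv' h v)
          = Matrix.diagonal (fun h => p' h * cv' h v) := by
        rw [Matrix.diagonal_mul_diagonal]
      calc A * Matrix.diagonal (fun h => cv h v) * Matrix.diagonal p * Bᵀ
          = A * (Matrix.diagonal (fun h => cv h v) * Matrix.diagonal p) * Bᵀ := by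
            noncomm_ring
        _ = A * Matrix.diagonal (fun h => p h * cv h v) * Bᵀ := by rw [e1]
        _ = A' * Matrix.diagonal (fun h => p' h * cv' h v) * B'ᵀ := hcore v
        _ = A' * (Matrix.diagonal p' * Matrix.diagonal (fun h => cv' h v)) * B'ᵀ := by rw [e2]
        _ = A' * Matrix.diagonal p' * Matrix.diagonal (fun h => cv' h v) * B'ᵀ := by
            noncomm_ring
    -- from X0 : A' * diag p' * B'^T = A * diag p * B^T, so B'^T = (A' diag p')⁻¹ A diag p B^T.
    -- Instead: multiply h1 on the right by B^T⁻¹-free approach: express both sides against X0.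
    -- We use invertibility of B^T:
    have hBt : IsUnit (Bᵀ).det := by rwa [Matrix.det_transpose]
    have hB't : IsUnit (B'ᵀ).det := by rwa [Matrix.det_transpose]
    -- W := B'^T * (B^T)⁻¹ satisfies  A' * diag p' * W = A * diag p   (from X0)
    set W : Matrix H H ℝ := B'ᵀ * (Bᵀ)⁻¹ with hW
    have hX0W : A' * Matrix.diagonal p' * W = A * Matrix.diagonal p := by
      rw [hW, ← Matrix.mul_assoc]
      rw [← hX0]
      calc A * Matrix.diagonal p * Bᵀ * (Bᵀ)⁻¹
          = A * Matrix.diagonal p * (Bᵀ * (Bᵀ)⁻¹) := by noncomm_ring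
        _ = A * Matrix.diagonal p := by rw [Matrix.mul_nonsing_inv _ hBt, Matrix.mul_one]
    have h1W : A * Matrix.diagonal (fun h => cv h v) * Matrix.diagonal p
        = A' * Matrix.diagonal p' * Matrix.diagonal (fun h => cv' h v) * W := by
      have := congrArg (fun M => M * (Bᵀ)⁻¹) h1
      calc A * Matrix.diagonal (fun h => cv h v) * Matrix.diagonal p
          = A * Matrix.diagonal (fun h => cv h v) * Matrix.diagonal p * (Bᵀ * (Bᵀ)⁻¹) := by
            rw [Matrix.mul_nonsing_inv _ hBt, Matrix.mul_one]
        _ = A * Matrix.diagonal (fun h => cv h v) * Matrix.diagonal p * Bᵀ * (Bᵀ)⁻¹ := by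
            noncomm_ring
        _ = A' * Matrix.diagonal p' * Matrix.diagonal (fun h => cv' h v) * B'ᵀ * (Bᵀ)⁻¹ := by
            rw [h1]
        _ = A' * Matrix.diagonal p' * Matrix.diagonal (fun h => cv' h v) * W := by
            rw [hW]; noncomm_ring
    -- diag(cv' v) commutes with diag p', so rewrite:
    have hcomm : Matrix.diagonal p' * Matrix.diagonal (fun h => cv' h v)
        = Matrix.diagonal (fun h => cv' h v) * Matrix.diagonal p' := by
      rw [Matrix.diagonal_mul_diagonal, Matrix.diagonal_mul_diagonal]
      exact congrArg Matrix.diagonal (funext fun h => mul_comm _ _)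
    -- substitution of W from hX0W : diag p' * W = A'⁻¹ * A * diag p
    have hpW : Matrix.diagonal p' * W = T * Matrix.diagonal p := by
      rw [hT]
      have := congrArg (fun M => A'⁻¹ * M) hX0W
      calc Matrix.diagonal p' * W = (A'⁻¹ * A') * (Matrix.diagonal p' * W) := by
            rw [Matrix.nonsing_inv_mul _ hA', Matrix.one_mul]
        _ = A'⁻¹ * (A' * Matrix.diagonal p' * W) := by noncomm_ring
        _ = A'⁻¹ * (A * Matrix.diagonal p) := by rw [hX0W]
        _ = A'⁻¹ * A * Matrix.diagonal p := by noncomm_ring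
    have h2 : A * Matrix.diagonal (fun h => cv h v) * Matrix.diagonal p
        = A' * Matrix.diagonal (fun h => cv' h v) * T * Matrix.diagonal p := by
      calc A * Matrix.diagonal (fun h => cv h v) * Matrix.diagonal p
          = A' * Matrix.diagonal p' * Matrix.diagonal (fun h => cv' h v) * W := h1W
        _ = A' * (Matrix.diagonal p' * Matrix.diagonal (fun h => cv' h v)) * W := by noncomm_ring
        _ = A' * (Matrix.diagonal (fun h => cv' h v) * Matrix.diagonal p') * W := by rw [hcomm]
        _ = A' * Matrix.diagonal (fun h => cv' h v) * (Matrix.diagonal p' * W) := by noncomm_ring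
        _ = A' * Matrix.diagonal (fun h => cv' h v) * (T * Matrix.diagonal p) := by rw [hpW]
        _ = A' * Matrix.diagonal (fun h => cv' h v) * T * Matrix.diagonal p := by noncomm_ring
    -- cancel diag p on the right
    have h3 : A * Matrix.diagonal (fun h => cv h v)
        = A' * Matrix.diagonal (fun h => cv' h v) * T := by
      have hca := congrArg (fun M => M * (Matrix.diagonal p)⁻¹) h2
      calc A * Matrix.diagonal (fun h => cv h v)
          = A * Matrix.diagonal (fun h => cv h v) * (Matrix.diagonal p * (Matrix.diagonal p)⁻¹) := by
            rw [Matrix.mul_nonsing_inv _ hdp, Matrix.mul_one]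
        _ = A * Matrix.diagonal (fun h => cv h v) * Matrix.diagonal p * (Matrix.diagonal p)⁻¹ := by
            noncomm_ring
        _ = A' * Matrix.diagonal (fun h => cv' h v) * T * Matrix.diagonal p * (Matrix.diagonal p)⁻¹ := by
            rw [h2]
        _ = A' * Matrix.diagonal (fun h => cv' h v) * T * (Matrix.diagonal p * (Matrix.diagonal p)⁻¹) := by
            noncomm_ring
        _ = A' * Matrix.diagonal (fun h => cv' h v) * T := by
            rw [Matrix.mul_nonsing_inv _ hdp, Matrix.mul_one]
    -- multiply by A⁻¹ on left and use S
    have h4 : Matrix.diagonal (fun h => cv h v) * (S * T)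
        = S * Matrix.diagonal (fun h => cv' h v) * T := by
      rw [hST, Matrix.mul_one]
      calc Matrix.diagonal (fun h => cv h v)
          = (A⁻¹ * A) * Matrix.diagonal (fun h => cv h v) := by
            rw [Matrix.nonsing_inv_mul _ hA, Matrix.one_mul]
        _ = A⁻¹ * (A * Matrix.diagonal (fun h => cv h v)) := by noncomm_ring
        _ = A⁻¹ * (A' * Matrix.diagonal (fun h => cv' h v) * T) := by rw [h3]
        _ = (A⁻¹ * A') * Matrix.diagonal (fun h => cv' h v) * T := by noncomm_ring
        _ = S * Matrix.diagonal (fun h => cv' h v) * T := by rw [hS]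
    -- multiply by S on the right
    have := congrArg (fun M => M * S) h4
    calc Matrix.diagonal (fun h => cv h v) * S
        = Matrix.diagonal (fun h => cv h v) * (S * T) * S := by
          rw [hST, Matrix.mul_one]
      _ = S * Matrix.diagonal (fun h => cv' h v) * T * S := by rw [h4]
      _ = S * Matrix.diagonal (fun h => cv' h v) * (T * S) := by noncomm_ring
      _ = S * Matrix.diagonal (fun h => cv' h v) := by rw [hTS, Matrix.mul_one]
  -- define U := S * diagonal p'
  set U : Matrix H H ℝ := S * Matrix.diagonal p' with hU
  have hUdet : IsUnit U.det := by
    rw [hU, Matrix.det_mul]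
    have hSdet : IsUnit S.det := by
      have := congrArg Matrix.det hST
      rw [Matrix.det_mul, Matrix.det_one] at this
      exact IsUnit.of_mul_eq_one _ this
    exact hSdet.mul hdp'
  have hUcomm : ∀ v a b, cv a v * U a b = U a b * cv' b v := by
    intro v a b
    have h := hconj v
    have hc1 : (Matrix.diagonal (fun h => cv h v) * S) a b = cv a v * S a b :=
      Matrix.diagonal_mul _ _ _ _
    have hc2 : (S * Matrix.diagonal (fun h => cv' h v)) a b = S a b * cv' b v :=
      Matrix.mul_diagonal _ _ _ _
    have hUab : U a b = S a b * p' b := Matrix.mul_diagonal _ _ _ _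
    have : cv a v * S a b = S a b * cv' b v := by rw [← hc1, ← hc2, h]
    rw [hUab]
    calc cv a v * (S a b * p' b) = (cv a v * S a b) * p' b := by ring
      _ = (S a b * cv' b v) * p' b := by rw [this]
      _ = S a b * p' b * cv' b v := by ring
  -- columns of U are nonzero
  have hcol : ∀ b, ∃ a, U a b ≠ 0 := by
    intro b
    by_contra hc
    push_neg at hc
    have : U.det = 0 := Matrix.det_eq_zero_of_column_eq_zero b hc
    rw [isUnit_iff_ne_zero] at hUdet
    exact hUdet this
  have hrow : ∀ a, ∃ b, U a b ≠ 0 := by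
    intro a
    by_contra hc
    push_neg at hc
    have : U.det = 0 := Matrix.det_eq_zero_of_row_eq_zero a hc
    rw [isUnit_iff_ne_zero] at hUdet
    exact hUdet this
  have hne_imp : ∀ a b, U a b ≠ 0 → ∀ v, cv' b v = cv a v := by
    intro a b hab v
    have := hUcomm v a b
    have h2 : U a b * cv a v = U a b * cv' b v := by
      calc U a b * cv a v = cv a v * U a b := by ring
        _ = U a b * cv' b v := this
    exact (mul_left_cancel₀ hab h2).symm
  set σ : H → H := fun b => (hcol b).choose with hσ
  have hσspec : ∀ b, U (σ b) b ≠ 0 := fun b => (hcol b).choose_spec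
  have hσc : ∀ b v, cv' b v = cv (σ b) v := fun b => hne_imp (σ b) b (hσspec b)
  have huniq : ∀ a b, U a b ≠ 0 → a = σ b := by
    intro a b hab
    refine hcinj a (σ b) (fun v => ?_)
    rw [← hne_imp a b hab v, hσc b v]
  have hσsurj : Function.Surjective σ := by
    intro a
    obtain ⟨b, hb⟩ := hrow a
    exact ⟨b, (huniq a b hb).symm⟩
  have hσbij : Function.Bijective σ := by
    rw [Fintype.bijective_iff_surjective_and_card]
    exact ⟨hσsurj, rfl⟩
  -- A relation: A * U = A' * diagonal p'
  have hAU : A * U = A' * Matrix.diagonal p' := by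
    rw [hU, hS]
    calc A * (A⁻¹ * A' * Matrix.diagonal p') = (A * A⁻¹) * (A' * Matrix.diagonal p') := by
          noncomm_ring
      _ = A' * Matrix.diagonal p' := by rw [Matrix.mul_nonsing_inv _ hA, Matrix.one_mul]
  refine ⟨σ, fun b => U (σ b) b, hσbij, hσspec, hσc, ?_⟩
  intro s b
  have h1 : (A * U) s b = ∑ a, A s a * U a b := Matrix.mul_apply
  have h2 : (A' * Matrix.diagonal p') s b = A' s b * p' b := Matrix.mul_diagonal _ _ _ _
  have h3 : ∑ a, A s a * U a b = A s (σ b) * U (σ b) b := by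
    refine Finset.sum_eq_single (σ b) ?_ ?_
    · intro a _ ha
      have : U a b = 0 := by
        by_contra hne
        exact ha (huniq a b hne)
      rw [this, mul_zero]
    · intro habs; exact absurd (Finset.mem_univ _) habs
  rw [← h2, ← hAU, h1, h3]



lemma masterlem {J K : ℕ} {X : Fin J → Type*} [∀ j, Fintype (X j)]
    (P Q : (j : Fin J) → (Fin K → Bool) → X j → ℝ)
    (π π' : (Fin K → Bool) → ℝ)
    (heq : ∀ x : (j : Fin J) → X j,
      ∑ h : Fin K → Bool, π h * ∏ j, P j h (x j)
        = ∑ h : Fin K → Bool, π' h * ∏ j, Q j h (x j))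
    (u : (j : Fin J) → X j → ℝ) :
    ∑ h : Fin K → Bool, π h * ∏ j, (∑ x, P j h x * u j x)
      = ∑ h : Fin K → Bool, π' h * ∏ j, (∑ x, Q j h x * u j x) := by
  classical
  have expand : ∀ (R : (j : Fin J) → (Fin K → Bool) → X j → ℝ) (w : (Fin K → Bool) → ℝ),
      ∑ h : Fin K → Bool, w h * ∏ j, (∑ x, R j h x * u j x)
        = ∑ x : (j : Fin J) → X j, (∏ j, u j (x j)) * (∑ h : Fin K → Bool, w h * ∏ j, R j h (x j)) := by
    intro R w
    have hpi : ∀ h, (∏ j, (∑ x, R j h x * u j x))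
        = ∑ x : (j : Fin J) → X j, ∏ j, (R j h (x j) * u j (x j)) := by
      intro h
      rw [Finset.prod_univ_sum]
      rw [Fintype.piFinset_univ]
    calc ∑ h : Fin K → Bool, w h * ∏ j, (∑ x, R j h x * u j x)
        = ∑ h : Fin K → Bool, ∑ x : (j : Fin J) → X j, w h * ∏ j, (R j h (x j) * u j (x j)) := by
          refine Finset.sum_congr rfl (fun h _ => ?_)
          rw [hpi h, Finset.mul_sum]
      _ = ∑ x : (j : Fin J) → X j, ∑ h : Fin K → Bool, w h * ∏ j, (R j h (x j) * u j (x j)) :=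
          Finset.sum_comm
      _ = ∑ x : (j : Fin J) → X j, (∏ j, u j (x j)) * (∑ h : Fin K → Bool, w h * ∏ j, R j h (x j)) := by
          refine Finset.sum_congr rfl (fun x _ => ?_)
          rw [Finset.mul_sum]
          refine Finset.sum_congr rfl (fun h _ => ?_)
          rw [Finset.prod_mul_distrib]
          ring
  rw [expand P π, expand Q π']
  refine Finset.sum_congr rfl (fun x _ => ?_)
  rw [heq x]


/-- Identifiability under monotonicity: if the true bipartite graph `Γ` is
(i) double triangular (witnessed by the disjoint ranges of `f` and `g`) and (ii) every latent
variable is measured by some row outside those sets, and both the true pmfs `P` and the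
alternative pmfs `Q` are compatible with their graphs and monotone with respect to the same
baseline sets `C j`, then equality of the observed pmfs forces the two models to agree up to a
latent label permutation `τ` only (via `φ(h)_{τ(k)} = h_k`): no sign-flipping ambiguity, and
no subset condition is needed. -/
theorem stmt11 (J K : ℕ) (X : Fin J → Type*) [∀ j, Fintype (X j)] [∀ j, Nonempty (X j)]
    (C : (j : Fin J) → Finset (X j))
    (Γ : Fin J → Fin K → Bool)
    (f g : Fin K → Fin J) (hf : Function.Injective f) (hg : Function.Injective g)
    (hfg : ∀ k k', f k ≠ g k')
    (htf : IsTriangular (fun k k' => Γ (f k) k'))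
    (htg : IsTriangular (fun k k' => Γ (g k) k'))
    (hcover : ∀ k, ∃ j, j ∉ Set.range f ∪ Set.range g ∧ Γ j k = true)
    (P : (j : Fin J) → (Fin K → Bool) → X j → ℝ)
    (hPnn : ∀ j h x, 0 ≤ P j h x) (hPsum : ∀ j h, ∑ x, P j h x = 1)
    (hPcomp : ∀ j h h', P j h = P j h' ↔ (∀ k, Γ j k = true → h k = h' k))
    (hPmono : IsMonotone Γ C P)
    (π : (Fin K → Bool) → ℝ) (hπpos : ∀ h, 0 < π h) (hπle : ∀ h, π h ≤ 1)
    (hπ1 : ∑ h, π h = 1)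
    (Γ' : Fin J → Fin K → Bool)
    (Q : (j : Fin J) → (Fin K → Bool) → X j → ℝ)
    (hQnn : ∀ j h x, 0 ≤ Q j h x) (hQsum : ∀ j h, ∑ x, Q j h x = 1)
    (hQcomp : ∀ j h h', Q j h = Q j h' ↔ (∀ k, Γ' j k = true → h k = h' k))
    (hQmono : IsMonotone Γ' C Q)
    (π' : (Fin K → Bool) → ℝ) (hπ'pos : ∀ h, 0 < π' h) (hπ'le : ∀ h, π' h ≤ 1)
    (hπ'1 : ∑ h, π' h = 1)
    (heq : ∀ x : (j : Fin J) → X j,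
      ∑ h : Fin K → Bool, π h * ∏ j, P j h (x j)
        = ∑ h : Fin K → Bool, π' h * ∏ j, Q j h (x j)) :
    ∃ (τ : Equiv.Perm (Fin K)) (φ : (Fin K → Bool) → (Fin K → Bool)),
      (∀ (h : Fin K → Bool) (k : Fin K), φ h (τ k) = h k) ∧
      (∀ j k, Γ' j (τ k) = Γ j k) ∧
      (∀ h, π' (φ h) = π h) ∧
      (∀ j h, Q j (φ h) = P j h) := by
  classical
  obtain ⟨ρ1, c1, htf1, htf2⟩ := htf
  obtain ⟨ρ2, c2, htg1, htg2⟩ := htg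
  set f' : Fin K → Fin J := fun m => f (ρ1 m) with hf'def
  set g' : Fin K → Fin J := fun m => g (ρ2 m) with hg'def
  have hf' : Function.Injective f' := fun a b hab => ρ1.injective (hf hab)
  have hg' : Function.Injective g' := fun a b hab => ρ2.injective (hg hab)
  have hfg' : ∀ m m', f' m ≠ g' m' := fun m m' => hfg (ρ1 m) (ρ2 m')
  set S3 : Finset (Fin J) :=
    Finset.univ \ (Finset.univ.image f' ∪ Finset.univ.image g') with hS3def
  have hS3mem : ∀ j, j ∈ S3 ↔ (∀ m, f' m ≠ j) ∧ (∀ m, g' m ≠ j) := by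
    intro j
    rw [hS3def]
    simp [not_or]
  have hS3f : ∀ m, f' m ∉ S3 := fun m hm => ((hS3mem (f' m)).mp hm).1 m rfl
  have hS3g : ∀ m, g' m ∉ S3 := fun m hm => ((hS3mem (g' m)).mp hm).2 m rfl
  have hS3cover : ∀ k, ∃ j ∈ S3, Γ j k = true := by
    intro k
    obtain ⟨j, hj, hΓ⟩ := hcover k
    refine ⟨j, ?_, hΓ⟩
    rw [hS3mem]
    rw [Set.mem_union] at hj
    push_neg at hj
    obtain ⟨hj1, hj2⟩ := hj
    constructor
    · intro m hm; exact hj1 ⟨ρ1 m, hm⟩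
    · intro m hm; exact hj2 ⟨ρ2 m, hm⟩
  -- epsilon functions
  set ε1 : Fin K → (Fin K → Bool) → ℝ := fun m h => ∑ x ∈ C (f' m), P (f' m) h x with hε1def
  set ε2 : Fin K → (Fin K → Bool) → ℝ := fun m h => ∑ x ∈ C (g' m), P (g' m) h x with hε2def
  set η1 : Fin K → (Fin K → Bool) → ℝ := fun m h => ∑ x ∈ C (f' m), Q (f' m) h x with hη1def
  set η2 : Fin K → (Fin K → Bool) → ℝ := fun m h => ∑ x ∈ C (g' m), Q (g' m) h x with hη2def
  -- parent structure of the triangular blocks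
  have hpar1 : ∀ (m : Fin K) k, Γ (f' m) k = true → ∃ i, i ≤ m ∧ c1 i = k := by
    intro m k hk
    refine ⟨c1.symm k, ?_, c1.apply_symm_apply k⟩
    by_contra hlt
    push_neg at hlt
    have h2 := htf2 m (c1.symm k) hlt
    rw [c1.apply_symm_apply] at h2
    simp only [hf'def] at hk h2
    rw [hk] at h2
    exact absurd h2 (by decide)
  have hpar2 : ∀ (m : Fin K) k, Γ (g' m) k = true → ∃ i, i ≤ m ∧ c2 i = k := by
    intro m k hk
    refine ⟨c2.symm k, ?_, c2.apply_symm_apply k⟩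
    by_contra hlt
    push_neg at hlt
    have h2 := htg2 m (c2.symm k) hlt
    rw [c2.apply_symm_apply] at h2
    simp only [hg'def] at hk h2
    rw [hk] at h2
    exact absurd h2 (by decide)
  have hdiag1 : ∀ m, Γ (f' m) (c1 m) = true := fun m => htf1 m
  have hdiag2 : ∀ m, Γ (g' m) (c2 m) = true := fun m => htg1 m
  -- dependence of eps on parents
  have hPdep1 : ∀ (m : Fin K) h h', (∀ i, i ≤ m → h (c1 i) = h' (c1 i)) →
      P (f' m) h = P (f' m) h' := by
    intro m h h' hag
    refine (hPcomp _ h h').mpr (fun k hk => ?_)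
    obtain ⟨i, hi, rfl⟩ := hpar1 m k hk
    exact hag i hi
  have hPdep2 : ∀ (m : Fin K) h h', (∀ i, i ≤ m → h (c2 i) = h' (c2 i)) →
      P (g' m) h = P (g' m) h' := by
    intro m h h' hag
    refine (hPcomp _ h h').mpr (fun k hk => ?_)
    obtain ⟨i, hi, rfl⟩ := hpar2 m k hk
    exact hag i hi
  have hdep1 : ∀ (m : Fin K) h h', (∀ i, i ≤ m → h (c1 i) = h' (c1 i)) → ε1 m h = ε1 m h' := by
    intro m h h' hag
    rw [hε1def]
    simp only
    rw [hPdep1 m h h' hag]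
  have hdep2 : ∀ (m : Fin K) h h', (∀ i, i ≤ m → h (c2 i) = h' (c2 i)) → ε2 m h = ε2 m h' := by
    intro m h h' hag
    rw [hε2def]
    simp only
    rw [hPdep2 m h h' hag]
  -- strict monotonicity at the diagonal coordinate
  have hmono1 : ∀ (m : Fin K) h,
      ε1 m (Function.update h (c1 m) false) < ε1 m (Function.update h (c1 m) true) := by
    intro m h
    refine hPmono (f' m) _ _ ⟨fun k _ => ?_, ⟨c1 m, hdiag1 m, ?_⟩⟩
    · by_cases hk : k = c1 m
      · subst hk; simp
      · rw [Function.update_of_ne hk, Function.update_of_ne hk]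
    · simp
  have hmono2 : ∀ (m : Fin K) h,
      ε2 m (Function.update h (c2 m) false) < ε2 m (Function.update h (c2 m) true) := by
    intro m h
    refine hPmono (g' m) _ _ ⟨fun k _ => ?_, ⟨c2 m, hdiag2 m, ?_⟩⟩
    · by_cases hk : k = c2 m
      · subst hk; simp
      · rw [Function.update_of_ne hk, Function.update_of_ne hk]
    · simp
  -- matrices
  set Mat1 : Matrix (Fin K → Bool) (Fin K → Bool) ℝ :=
    Matrix.of (fun s h => ∏ m ∈ Finset.univ.filter (fun m => s m = true), ε1 m h) with hMat1
  set Mat2 : Matrix (Fin K → Bool) (Fin K → Bool) ℝ :=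
    Matrix.of (fun s h => ∏ m ∈ Finset.univ.filter (fun m => s m = true), ε2 m h) with hMat2
  set Mat1' : Matrix (Fin K → Bool) (Fin K → Bool) ℝ :=
    Matrix.of (fun s h => ∏ m ∈ Finset.univ.filter (fun m => s m = true), η1 m h) with hMat1'
  set Mat2' : Matrix (Fin K → Bool) (Fin K → Bool) ℝ :=
    Matrix.of (fun s h => ∏ m ∈ Finset.univ.filter (fun m => s m = true), η2 m h) with hMat2'
  have colindep1 : ∀ w : (Fin K → Bool) → ℝ,
      (∀ s, ∑ h, w h * Mat1 s h = 0) → w = 0 := by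
    intro w hw
    exact lemA c1 ε1 hdep1 hmono1 w (fun s => hw s)
  have colindep2 : ∀ w : (Fin K → Bool) → ℝ,
      (∀ s, ∑ h, w h * Mat2 s h = 0) → w = 0 := by
    intro w hw
    exact lemA c2 ε2 hdep2 hmono2 w (fun s => hw s)
  have hdet1 : IsUnit Mat1.det := by
    refine detUnit_of_mulVec_inj _ (fun w hw => colindep1 w (fun s => ?_))
    have h0 : ∑ h, Mat1 s h * w h = 0 := by
      simpa [Matrix.mulVec, dotProduct] using congrFun hw s
    rw [← h0]
    exact Finset.sum_congr rfl (fun h _ => mul_comm _ _)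
  have hdet2 : IsUnit Mat2.det := by
    refine detUnit_of_mulVec_inj _ (fun w hw => colindep2 w (fun s => ?_))
    have h0 : ∑ h, Mat2 s h * w h = 0 := by
      simpa [Matrix.mulVec, dotProduct] using congrFun hw s
    rw [← h0]
    exact Finset.sum_congr rfl (fun h _ => mul_comm _ _)
  -- test function machinery
  set ind : (j : Fin J) → X j → ℝ := fun j x => if x ∈ C j then 1 else 0 with hind
  have hpairind : ∀ (j : Fin J) (R : X j → ℝ), ∑ x, R x * ind j x = ∑ x ∈ C j, R x := by
    intro j R
    rw [hind]
    simp only [mul_ite, mul_one, mul_zero]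
    rw [Finset.sum_ite_mem, Finset.univ_inter]
  have hpairPone : ∀ (j : Fin J) h, ∑ x, P j h x * (1:ℝ) = 1 := by
    intro j h; simp only [mul_one]; exact hPsum j h
  have hpairQone : ∀ (j : Fin J) h, ∑ x, Q j h x * (1:ℝ) = 1 := by
    intro j h; simp only [mul_one]; exact hQsum j h
  -- split of full products
  have hsplit : ∀ F : Fin J → ℝ,
      ∏ j, F j = ((∏ m, F (f' m)) * (∏ m, F (g' m))) * ∏ j ∈ S3, F j := by
    intro F
    rw [hS3def]
    exact prodsplit f' g' hf' hg' hfg' F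
  have hgen : ∀ u : (j : Fin J) → X j → ℝ,
      ∑ h : Fin K → Bool, π h * (((∏ m, ∑ x, P (f' m) h x * u (f' m) x) *
          (∏ m, ∑ x, P (g' m) h x * u (g' m) x)) * ∏ j ∈ S3, ∑ x, P j h x * u j x)
        = ∑ h : Fin K → Bool, π' h * (((∏ m, ∑ x, Q (f' m) h x * u (f' m) x) *
          (∏ m, ∑ x, Q (g' m) h x * u (g' m) x)) * ∏ j ∈ S3, ∑ x, Q j h x * u j x) := by
    intro u
    have hm := masterlem P Q π π' heq u
    calc ∑ h : Fin K → Bool, π h * (((∏ m, ∑ x, P (f' m) h x * u (f' m) x) *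
          (∏ m, ∑ x, P (g' m) h x * u (g' m) x)) * ∏ j ∈ S3, ∑ x, P j h x * u j x)
        = ∑ h : Fin K → Bool, π h * ∏ j, (∑ x, P j h x * u j x) := by
          refine Finset.sum_congr rfl (fun h _ => ?_)
          rw [hsplit (fun j => ∑ x, P j h x * u j x)]
      _ = ∑ h : Fin K → Bool, π' h * ∏ j, (∑ x, Q j h x * u j x) := hm
      _ = _ := by
          refine Finset.sum_congr rfl (fun h _ => ?_)
          rw [hsplit (fun j => ∑ x, Q j h x * u j x)]
  -- the third-block functionals
  set cfun : (Fin K → Bool) → ((j : Fin J) → X j → ℝ) → ℝ :=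
    fun h v => ∏ j ∈ S3, ∑ x, P j h x * v j x with hcfun
  set cfun' : (Fin K → Bool) → ((j : Fin J) → X j → ℝ) → ℝ :=
    fun h v => ∏ j ∈ S3, ∑ x, Q j h x * v j x with hcfun'
  have hcone : ∀ h, cfun h (fun _ _ => (1:ℝ)) = 1 := by
    intro h; rw [hcfun]
    exact Finset.prod_eq_one (fun j _ => hpairPone j h)
  have hcone' : ∀ h, cfun' h (fun _ _ => (1:ℝ)) = 1 := by
    intro h; rw [hcfun']
    exact Finset.prod_eq_one (fun j _ => hpairQone j h)
  -- delta tests recover pointwise values on third-block rows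
  set vdel : (j0 : Fin J) → X j0 → ((j : Fin J) → X j → ℝ) := fun j0 x0 j x =>
    if j = j0 then (if (⟨j, x⟩ : Σ jj, X jj) = ⟨j0, x0⟩ then (1:ℝ) else 0) else 1 with hvdel
  have hdelta : ∀ (j0 : Fin J) (x0 : X j0), j0 ∈ S3 →
      ∀ (R : (j : Fin J) → (Fin K → Bool) → X j → ℝ) (h : Fin K → Bool),
      (∀ j hh, ∑ x, R j hh x * (1:ℝ) = 1) →
      (∏ j ∈ S3, ∑ x, R j h x * vdel j0 x0 j x) = R j0 h x0 := by
    intro j0 x0 hj0 R h hRone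
    refine (Finset.prod_eq_single_of_mem j0 hj0 (fun j' _ hne => ?_)).trans ?_
    · have hv1 : ∀ x : X j', vdel j0 x0 j' x = 1 := by
        intro x; simp only [hvdel]; rw [if_neg hne]
      calc ∑ x, R j' h x * vdel j0 x0 j' x = ∑ x, R j' h x * 1 :=
            Finset.sum_congr rfl (fun x _ => by rw [hv1 x])
        _ = 1 := hRone j' h
    · have hsig : ∀ x : X j0, ((⟨j0, x⟩ : Σ jj, X jj) = ⟨j0, x0⟩) ↔ x = x0 := by
        intro x
        constructor
        · intro hx
          exact eq_of_heq (Sigma.mk.inj_iff.mp hx).2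
        · intro hx; rw [hx]
      have hv2 : ∀ x : X j0, vdel j0 x0 j0 x = if x = x0 then (1:ℝ) else 0 := by
        intro x; simp only [hvdel, eq_self_iff_true, if_true]
        by_cases hx : x = x0
        · rw [if_pos ((hsig x).mpr hx), if_pos hx]
        · rw [if_neg (fun hc => hx ((hsig x).mp hc)), if_neg hx]
      calc ∑ x, R j0 h x * vdel j0 x0 j0 x
          = ∑ x, (if x = x0 then R j0 h x else 0) := by
            refine Finset.sum_congr rfl (fun x _ => ?_)
            rw [hv2 x]
            by_cases hx : x = x0
            · rw [if_pos hx, if_pos hx, mul_one]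
            · rw [if_neg hx, if_neg hx, mul_zero]
        _ = R j0 h x0 := by rw [Finset.sum_ite_eq' Finset.univ x0 (R j0 h)]; simp
  -- injectivity of the third-block functionals
  have hcinj : ∀ a a', (∀ v, cfun a v = cfun a' v) → a = a' := by
    intro a a' hv
    have hP3 : ∀ j ∈ S3, P j a = P j a' := by
      intro j hj
      funext x0
      have h1 := hdelta j x0 hj P a hpairPone
      have h2 := hdelta j x0 hj P a' hpairPone
      have h3 := hv (vdel j x0)
      rw [hcfun] at h3
      simp only at h3
      rw [← h1, ← h2]
      exact h3
    funext k
    obtain ⟨j, hj, hΓ⟩ := hS3cover k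
    exact (hPcomp j a a').mp (hP3 j hj) k hΓ
  -- core identity
  have I1 : ∀ (s s' : Fin K → Bool) (v : (j : Fin J) → X j → ℝ),
      ∑ h : Fin K → Bool, π h * ((Mat1 s h * Mat2 s' h) * cfun h v)
        = ∑ h : Fin K → Bool, π' h * ((Mat1' s h * Mat2' s' h) * cfun' h v) := by
    intro s s' v
    set u : (j : Fin J) → X j → ℝ := fun j x =>
      if ∃ m, f' m = j ∧ s m = true then ind j x
      else if ∃ m, g' m = j ∧ s' m = true then ind j x
      else if j ∈ S3 then v j x else 1 with hu
    have hu1 : ∀ m x, u (f' m) x = if s m = true then ind (f' m) x else 1 := by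
      intro m x
      simp only [hu]
      by_cases hsm : s m = true
      · rw [if_pos (show ∃ m', f' m' = f' m ∧ s m' = true from ⟨m, rfl, hsm⟩), if_pos hsm]
      · rw [if_neg (show ¬ ∃ m', f' m' = f' m ∧ s m' = true from ?_),
          if_neg (show ¬ ∃ m', g' m' = f' m ∧ s' m' = true from ?_),
          if_neg (hS3f m), if_neg hsm]
        · rintro ⟨m', he, _⟩
          exact absurd he.symm (hfg' m m')
        · rintro ⟨m', he, hsm'⟩
          exact hsm (hf' he ▸ hsm')
    have hu2 : ∀ m x, u (g' m) x = if s' m = true then ind (g' m) x else 1 := by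
      intro m x
      simp only [hu]
      rw [if_neg (show ¬ ∃ m', f' m' = g' m ∧ s m' = true from ?_)]
      · by_cases hsm : s' m = true
        · rw [if_pos (show ∃ m', g' m' = g' m ∧ s' m' = true from ⟨m, rfl, hsm⟩), if_pos hsm]
        · rw [if_neg (show ¬ ∃ m', g' m' = g' m ∧ s' m' = true from ?_),
            if_neg (hS3g m), if_neg hsm]
          rintro ⟨m', he, hsm'⟩
          exact hsm (hg' he ▸ hsm')
      · rintro ⟨m', he, _⟩
        exact absurd he (hfg' m' m)
    have hu3 : ∀ j, j ∈ S3 → ∀ x, u j x = v j x := by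
      intro j hj x
      simp only [hu]
      rw [if_neg (show ¬ ∃ m', f' m' = j ∧ s m' = true from ?_),
        if_neg (show ¬ ∃ m', g' m' = j ∧ s' m' = true from ?_), if_pos hj]
      · rintro ⟨m', he, _⟩
        exact ((hS3mem j).mp hj).2 m' he
      · rintro ⟨m', he, _⟩
        exact ((hS3mem j).mp hj).1 m' he
    have block1P : ∀ h, (∏ m, ∑ x, P (f' m) h x * u (f' m) x) = Mat1 s h := by
      intro h
      rw [hMat1]
      rw [Matrix.of_apply, Finset.prod_filter]
      refine Finset.prod_congr rfl (fun m _ => ?_)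
      by_cases hsm : s m = true
      · rw [if_pos hsm]
        calc ∑ x, P (f' m) h x * u (f' m) x = ∑ x, P (f' m) h x * ind (f' m) x := by
              refine Finset.sum_congr rfl (fun x _ => ?_)
              rw [hu1 m x, if_pos hsm]
          _ = ε1 m h := hpairind _ _
      · rw [if_neg hsm]
        calc ∑ x, P (f' m) h x * u (f' m) x = ∑ x, P (f' m) h x * 1 := by
              refine Finset.sum_congr rfl (fun x _ => ?_)
              rw [hu1 m x, if_neg hsm]
          _ = 1 := hpairPone _ _
    have block2P : ∀ h, (∏ m, ∑ x, P (g' m) h x * u (g' m) x) = Mat2 s' h := by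
      intro h
      rw [hMat2]
      rw [Matrix.of_apply, Finset.prod_filter]
      refine Finset.prod_congr rfl (fun m _ => ?_)
      by_cases hsm : s' m = true
      · rw [if_pos hsm]
        calc ∑ x, P (g' m) h x * u (g' m) x = ∑ x, P (g' m) h x * ind (g' m) x := by
              refine Finset.sum_congr rfl (fun x _ => ?_)
              rw [hu2 m x, if_pos hsm]
          _ = ε2 m h := hpairind _ _
      · rw [if_neg hsm]
        calc ∑ x, P (g' m) h x * u (g' m) x = ∑ x, P (g' m) h x * 1 := by
              refine Finset.sum_congr rfl (fun x _ => ?_)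
              rw [hu2 m x, if_neg hsm]
          _ = 1 := hpairPone _ _
    have block3P : ∀ h, (∏ j ∈ S3, ∑ x, P j h x * u j x) = cfun h v := by
      intro h
      rw [hcfun]
      refine Finset.prod_congr rfl (fun j hj => ?_)
      refine Finset.sum_congr rfl (fun x _ => ?_)
      rw [hu3 j hj x]
    have block1Q : ∀ h, (∏ m, ∑ x, Q (f' m) h x * u (f' m) x) = Mat1' s h := by
      intro h
      rw [hMat1']
      rw [Matrix.of_apply, Finset.prod_filter]
      refine Finset.prod_congr rfl (fun m _ => ?_)
      by_cases hsm : s m = true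
      · rw [if_pos hsm]
        calc ∑ x, Q (f' m) h x * u (f' m) x = ∑ x, Q (f' m) h x * ind (f' m) x := by
              refine Finset.sum_congr rfl (fun x _ => ?_)
              rw [hu1 m x, if_pos hsm]
          _ = η1 m h := hpairind _ _
      · rw [if_neg hsm]
        calc ∑ x, Q (f' m) h x * u (f' m) x = ∑ x, Q (f' m) h x * 1 := by
              refine Finset.sum_congr rfl (fun x _ => ?_)
              rw [hu1 m x, if_neg hsm]
          _ = 1 := hpairQone _ _
    have block2Q : ∀ h, (∏ m, ∑ x, Q (g' m) h x * u (g' m) x) = Mat2' s' h := by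
      intro h
      rw [hMat2']
      rw [Matrix.of_apply, Finset.prod_filter]
      refine Finset.prod_congr rfl (fun m _ => ?_)
      by_cases hsm : s' m = true
      · rw [if_pos hsm]
        calc ∑ x, Q (g' m) h x * u (g' m) x = ∑ x, Q (g' m) h x * ind (g' m) x := by
              refine Finset.sum_congr rfl (fun x _ => ?_)
              rw [hu2 m x, if_pos hsm]
          _ = η2 m h := hpairind _ _
      · rw [if_neg hsm]
        calc ∑ x, Q (g' m) h x * u (g' m) x = ∑ x, Q (g' m) h x * 1 := by
              refine Finset.sum_congr rfl (fun x _ => ?_)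
              rw [hu2 m x, if_neg hsm]
          _ = 1 := hpairQone _ _
    have block3Q : ∀ h, (∏ j ∈ S3, ∑ x, Q j h x * u j x) = cfun' h v := by
      intro h
      rw [hcfun']
      refine Finset.prod_congr rfl (fun j hj => ?_)
      refine Finset.sum_congr rfl (fun x _ => ?_)
      rw [hu3 j hj x]
    have hg0 := hgen u
    calc ∑ h : Fin K → Bool, π h * ((Mat1 s h * Mat2 s' h) * cfun h v)
        = ∑ h : Fin K → Bool, π h * (((∏ m, ∑ x, P (f' m) h x * u (f' m) x) *
            (∏ m, ∑ x, P (g' m) h x * u (g' m) x)) * ∏ j ∈ S3, ∑ x, P j h x * u j x) := by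
          refine Finset.sum_congr rfl (fun h _ => ?_)
          rw [block1P h, block2P h, block3P h]
      _ = ∑ h : Fin K → Bool, π' h * (((∏ m, ∑ x, Q (f' m) h x * u (f' m) x) *
            (∏ m, ∑ x, Q (g' m) h x * u (g' m) x)) * ∏ j ∈ S3, ∑ x, Q j h x * u j x) := hg0
      _ = _ := by
          refine Finset.sum_congr rfl (fun h _ => ?_)
          rw [block1Q h, block2Q h, block3Q h]
  -- matrix form of the core identity
  have I1M : ∀ v : (j : Fin J) → X j → ℝ,
      Mat1 * Matrix.diagonal (fun h => π h * cfun h v) * Mat2ᵀ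
        = Mat1' * Matrix.diagonal (fun h => π' h * cfun' h v) * Mat2'ᵀ := by
    intro v
    ext s s'
    have e1 : (Mat1 * Matrix.diagonal (fun h => π h * cfun h v) * Mat2ᵀ) s s'
        = ∑ h, Mat1 s h * (π h * cfun h v) * Mat2 s' h := by
      rw [Matrix.mul_apply]
      refine Finset.sum_congr rfl (fun h _ => ?_)
      rw [Matrix.mul_diagonal, Matrix.transpose_apply]
    have e2 : (Mat1' * Matrix.diagonal (fun h => π' h * cfun' h v) * Mat2'ᵀ) s s'
        = ∑ h, Mat1' s h * (π' h * cfun' h v) * Mat2' s' h := by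
      rw [Matrix.mul_apply]
      refine Finset.sum_congr rfl (fun h _ => ?_)
      rw [Matrix.mul_diagonal, Matrix.transpose_apply]
    rw [e1, e2]
    have := I1 s s' v
    calc ∑ h, Mat1 s h * (π h * cfun h v) * Mat2 s' h
        = ∑ h : Fin K → Bool, π h * ((Mat1 s h * Mat2 s' h) * cfun h v) := by
          refine Finset.sum_congr rfl (fun h _ => ?_); ring
      _ = ∑ h : Fin K → Bool, π' h * ((Mat1' s h * Mat2' s' h) * cfun' h v) := this
      _ = ∑ h, Mat1' s h * (π' h * cfun' h v) * Mat2' s' h := by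
          refine Finset.sum_congr rfl (fun h _ => ?_); ring
  have I1M2 : ∀ v : (j : Fin J) → X j → ℝ,
      Mat2 * Matrix.diagonal (fun h => π h * cfun h v) * Mat1ᵀ
        = Mat2' * Matrix.diagonal (fun h => π' h * cfun' h v) * Mat1'ᵀ := by
    intro v
    have := congrArg Matrix.transpose (I1M v)
    rw [Matrix.transpose_mul, Matrix.transpose_mul, Matrix.transpose_mul, Matrix.transpose_mul,
      Matrix.transpose_transpose, Matrix.transpose_transpose,
      Matrix.diagonal_transpose, Matrix.diagonal_transpose] at this
    rw [← Matrix.mul_assoc, ← Matrix.mul_assoc] at this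
    exact this
  have hπne : ∀ h, π h ≠ 0 := fun h => ne_of_gt (hπpos h)
  have hπ'ne : ∀ h, π' h ≠ 0 := fun h => ne_of_gt (hπ'pos h)
  -- first keyU application
  obtain ⟨σ, uu, hσbij, huu0, hσc, hArel⟩ :=
    keyU Mat1 Mat2 Mat1' Mat2' π π' cfun cfun' (fun _ _ => (1:ℝ)) hdet1 hdet2
      hπ'ne hπne hcone hcone' I1M hcinj
  -- second keyU application (swapped blocks)
  obtain ⟨σ₂, uu₂, hσ₂bij, huu₂0, hσ₂c, hBrel⟩ :=
    keyU Mat2 Mat1 Mat2' Mat1' π π' cfun cfun' (fun _ _ => (1:ℝ)) hdet2 hdet1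
      hπ'ne hπne hcone hcone' I1M2 hcinj
  have hσeq : σ₂ = σ := by
    funext b
    refine hcinj (σ₂ b) (σ b) (fun v => ?_)
    rw [← hσ₂c b v, hσc b v]
  -- bottom rows are all ones
  have hbotfilter : Finset.univ.filter (fun m : Fin K => (fun _ : Fin K => false) m = true)
      = (∅ : Finset (Fin K)) := by
    ext m; simp
  have hbot1 : ∀ h, Mat1 (fun _ => false) h = 1 := by
    intro h; rw [hMat1]; rw [Matrix.of_apply, hbotfilter, Finset.prod_empty]
  have hbot2 : ∀ h, Mat2 (fun _ => false) h = 1 := by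
    intro h; rw [hMat2]; rw [Matrix.of_apply, hbotfilter, Finset.prod_empty]
  have hbot1' : ∀ h, Mat1' (fun _ => false) h = 1 := by
    intro h; rw [hMat1']; rw [Matrix.of_apply, hbotfilter, Finset.prod_empty]
  have hbot2' : ∀ h, Mat2' (fun _ => false) h = 1 := by
    intro h; rw [hMat2']; rw [Matrix.of_apply, hbotfilter, Finset.prod_empty]
  have huu : ∀ b, uu b = π' b := by
    intro b
    have := hArel (fun _ => false) b
    rw [hbot1' b, hbot1 (σ b), one_mul, one_mul] at this
    exact this.symm
  have huu₂ : ∀ b, uu₂ b = π' b := by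
    intro b
    have := hBrel (fun _ => false) b
    rw [hbot2' b, hbot2 (σ₂ b), one_mul, one_mul] at this
    exact this.symm
  have hM1rel : ∀ s b, Mat1' s b = Mat1 s (σ b) := by
    intro s b
    have := hArel s b
    rw [huu b] at this
    exact mul_right_cancel₀ (hπ'ne b) this
  have hM2rel : ∀ s b, Mat2' s b = Mat2 s (σ b) := by
    intro s b
    have := hBrel s b
    rw [huu₂ b, hσeq] at this
    exact mul_right_cancel₀ (hπ'ne b) this
  -- the equivalence induced by σ
  set σe : (Fin K → Bool) ≃ (Fin K → Bool) := Equiv.ofBijective σ hσbij with hσe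
  have hσe_app : ∀ h, σe h = σ h := fun h => rfl
  have hσe_symm : ∀ h, σe.symm (σ h) = h := by
    intro h
    rw [← hσe_app h]
    exact Equiv.symm_apply_apply σe h
  have hσe_symm' : ∀ h, σ (σe.symm h) = h := by
    intro h
    have h1 := Equiv.apply_symm_apply σe h
    rw [hσe_app (σe.symm h)] at h1
    exact h1
  -- identification of the weights
  have hπσ : ∀ b, π' b = π (σ b) := by
    intro b
    have key : ∀ s' : Fin K → Bool,
        ∑ h, (π h - π' (σe.symm h)) * Mat2 s' h = 0 := by
      intro s'
      have h1 := I1 (fun _ => false) s' (fun _ _ => (1:ℝ))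
      have h2 : ∑ h : Fin K → Bool, π h * Mat2 s' h
          = ∑ h : Fin K → Bool, π' h * Mat2 s' (σ h) := by
        calc ∑ h : Fin K → Bool, π h * Mat2 s' h
            = ∑ h : Fin K → Bool, π h * ((Mat1 (fun _ => false) h * Mat2 s' h)
              * cfun h (fun _ _ => (1:ℝ))) := by
              refine Finset.sum_congr rfl (fun h _ => ?_)
              rw [hbot1 h, hcone h, one_mul, mul_one]
          _ = ∑ h : Fin K → Bool, π' h * ((Mat1' (fun _ => false) h * Mat2' s' h)
              * cfun' h (fun _ _ => (1:ℝ))) := h1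
          _ = ∑ h : Fin K → Bool, π' h * Mat2 s' (σ h) := by
              refine Finset.sum_congr rfl (fun h _ => ?_)
              rw [hbot1' h, hcone' h, hM2rel s' h, one_mul, mul_one]
      have h3 : ∑ h : Fin K → Bool, π' h * Mat2 s' (σ h)
          = ∑ h : Fin K → Bool, π' (σe.symm h) * Mat2 s' h := by
        have := Equiv.sum_comp σe (fun h => π' (σe.symm h) * Mat2 s' h)
        rw [← this]
        refine Finset.sum_congr rfl (fun h _ => ?_)
        rw [hσe_app h, hσe_symm h]
      rw [h3] at h2
      have : ∑ h, ((π h - π' (σe.symm h)) * Mat2 s' h)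
          = (∑ h : Fin K → Bool, π h * Mat2 s' h) - ∑ h : Fin K → Bool, π' (σe.symm h) * Mat2 s' h := by
        rw [← Finset.sum_sub_distrib]
        refine Finset.sum_congr rfl (fun h _ => ?_)
        ring
      rw [this, h2, sub_self]
    have hw := colindep2 _ key
    have hb := congrFun hw (σ b)
    simp only [Pi.zero_apply] at hb
    have : π (σ b) - π' (σe.symm (σ b)) = 0 := hb
    rw [hσe_symm b] at this
    linarith
  -- pointwise delta pairing
  have hpairdel : ∀ (j0 : Fin J) (x0 : X j0) (R : X j0 → ℝ),
      ∑ x, R x * (if (⟨j0, x⟩ : Σ jj, X jj) = ⟨j0, x0⟩ then (1:ℝ) else 0) = R x0 := by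
    intro j0 x0 R
    have hsig : ∀ x : X j0, ((⟨j0, x⟩ : Σ jj, X jj) = ⟨j0, x0⟩) ↔ x = x0 := by
      intro x
      constructor
      · intro hx
        exact eq_of_heq (Sigma.mk.inj_iff.mp hx).2
      · intro hx; rw [hx]
    calc ∑ x, R x * (if (⟨j0, x⟩ : Σ jj, X jj) = ⟨j0, x0⟩ then (1:ℝ) else 0)
        = ∑ x, (if x = x0 then R x else 0) := by
          refine Finset.sum_congr rfl (fun x _ => ?_)
          by_cases hx : x = x0
          · rw [if_pos ((hsig x).mpr hx), if_pos hx, mul_one]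
          · rw [if_neg (fun hc => hx ((hsig x).mp hc)), if_neg hx, mul_zero]
      _ = R x0 := by rw [Finset.sum_ite_eq' Finset.univ x0 R]; simp
  have killer1 : ∀ d : (Fin K → Bool) → ℝ,
      (∀ s, ∑ h, d h * Mat1 s h = 0) → ∀ h, d h = 0 := by
    intro d hd h
    have := congrFun (colindep1 d hd) h
    simpa using this
  have killer2 : ∀ d : (Fin K → Bool) → ℝ,
      (∀ s', ∑ h, d h * Mat2 s' h = 0) → ∀ h, d h = 0 := by
    intro d hd h
    have := congrFun (colindep2 d hd) h
    simpa using this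
  -- recovery of all conditional laws : Q j b = P j (σ b)
  have QP : ∀ (j : Fin J) (b : Fin K → Bool), Q j b = P j (σ b) := by
    have hcase : ∀ j : Fin J, (∃ m, f' m = j) ∨ (∃ m, g' m = j) ∨ j ∈ S3 := by
      intro j
      by_cases h1 : ∃ m, f' m = j
      · exact Or.inl h1
      by_cases h2 : ∃ m, g' m = j
      · exact Or.inr (Or.inl h2)
      push_neg at h1 h2
      exact Or.inr (Or.inr ((hS3mem j).mpr ⟨h1, h2⟩))
    have caseA : ∀ (m0 : Fin K) (b : Fin K → Bool), Q (f' m0) b = P (f' m0) (σ b) := by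
      intro m0 b
      funext x0
      have keyA : ∀ s' : Fin K → Bool,
          ∑ h, (π h * (P (f' m0) h x0 - Q (f' m0) (σe.symm h) x0)) * Mat2 s' h = 0 := by
        intro s'
        set u : (j : Fin J) → X j → ℝ := fun j' x =>
          if ∃ m, g' m = j' ∧ s' m = true then ind j' x else vdel (f' m0) x0 j' x with huA
        have hu1 : ∀ m x, u (f' m) x
            = if m = m0 then (if (⟨f' m, x⟩ : Σ jj, X jj) = ⟨f' m0, x0⟩ then (1:ℝ) else 0)
              else 1 := by
          intro m x
          simp only [huA]
          rw [if_neg (show ¬ ∃ m', g' m' = f' m ∧ s' m' = true from ?_)]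
          · simp only [hvdel]
            by_cases hm : m = m0
            · subst hm
              rw [if_pos rfl, if_pos rfl]
            · rw [if_neg (fun hc => hm (hf' hc)), if_neg hm]
          · rintro ⟨m', he, _⟩
            exact absurd he.symm (hfg' m m')
        have hu2 : ∀ m x, u (g' m) x = if s' m = true then ind (g' m) x else 1 := by
          intro m x
          simp only [huA]
          by_cases hsm : s' m = true
          · rw [if_pos (show ∃ m', g' m' = g' m ∧ s' m' = true from ⟨m, rfl, hsm⟩), if_pos hsm]
          · rw [if_neg (show ¬ ∃ m', g' m' = g' m ∧ s' m' = true from ?_), if_neg hsm]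
            · simp only [hvdel]
              rw [if_neg (fun hc => absurd hc (hfg' m0 m).symm)]
            · rintro ⟨m', he, hsm'⟩
              exact hsm (hg' he ▸ hsm')
        have hu3 : ∀ j, j ∈ S3 → ∀ x, u j x = 1 := by
          intro j hj x
          simp only [huA]
          rw [if_neg (show ¬ ∃ m', g' m' = j ∧ s' m' = true from ?_)]
          · simp only [hvdel]
            rw [if_neg (fun hc : j = f' m0 => (hS3f m0) (hc ▸ hj))]
          · rintro ⟨m', he, _⟩
            exact ((hS3mem j).mp hj).2 m' he
        have block1 : ∀ (R : (j : Fin J) → (Fin K → Bool) → X j → ℝ)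
            (hRone : ∀ j hh, ∑ x, R j hh x * (1:ℝ) = 1) (h : Fin K → Bool),
            (∏ m, ∑ x, R (f' m) h x * u (f' m) x) = R (f' m0) h x0 := by
          intro R hRone h
          refine (Finset.prod_eq_single m0 (fun m _ hne => ?_) (fun habs =>
            absurd (Finset.mem_univ m0) habs)).trans ?_
          · calc ∑ x, R (f' m) h x * u (f' m) x = ∑ x, R (f' m) h x * 1 := by
                  refine Finset.sum_congr rfl (fun x _ => ?_)
                  rw [hu1 m x, if_neg hne]
              _ = 1 := hRone _ _
          · calc ∑ x, R (f' m0) h x * u (f' m0) x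
                = ∑ x, R (f' m0) h x *
                  (if (⟨f' m0, x⟩ : Σ jj, X jj) = ⟨f' m0, x0⟩ then (1:ℝ) else 0) := by
                  refine Finset.sum_congr rfl (fun x _ => ?_)
                  rw [hu1 m0 x, if_pos rfl]
              _ = R (f' m0) h x0 := hpairdel _ _ _
        have block2P : ∀ h, (∏ m, ∑ x, P (g' m) h x * u (g' m) x) = Mat2 s' h := by
          intro h
          rw [hMat2, Matrix.of_apply, Finset.prod_filter]
          refine Finset.prod_congr rfl (fun m _ => ?_)
          by_cases hsm : s' m = true
          · rw [if_pos hsm]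
            calc ∑ x, P (g' m) h x * u (g' m) x = ∑ x, P (g' m) h x * ind (g' m) x := by
                  refine Finset.sum_congr rfl (fun x _ => by rw [hu2 m x, if_pos hsm])
              _ = ε2 m h := hpairind _ _
          · rw [if_neg hsm]
            calc ∑ x, P (g' m) h x * u (g' m) x = ∑ x, P (g' m) h x * 1 := by
                  refine Finset.sum_congr rfl (fun x _ => by rw [hu2 m x, if_neg hsm])
              _ = 1 := hpairPone _ _
        have block2Q : ∀ h, (∏ m, ∑ x, Q (g' m) h x * u (g' m) x) = Mat2' s' h := by
          intro h
          rw [hMat2', Matrix.of_apply, Finset.prod_filter]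
          refine Finset.prod_congr rfl (fun m _ => ?_)
          by_cases hsm : s' m = true
          · rw [if_pos hsm]
            calc ∑ x, Q (g' m) h x * u (g' m) x = ∑ x, Q (g' m) h x * ind (g' m) x := by
                  refine Finset.sum_congr rfl (fun x _ => by rw [hu2 m x, if_pos hsm])
              _ = η2 m h := hpairind _ _
          · rw [if_neg hsm]
            calc ∑ x, Q (g' m) h x * u (g' m) x = ∑ x, Q (g' m) h x * 1 := by
                  refine Finset.sum_congr rfl (fun x _ => by rw [hu2 m x, if_neg hsm])
              _ = 1 := hpairQone _ _
        have block3 : ∀ (R : (j : Fin J) → (Fin K → Bool) → X j → ℝ)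
            (hRone : ∀ j hh, ∑ x, R j hh x * (1:ℝ) = 1) (h : Fin K → Bool),
            (∏ j ∈ S3, ∑ x, R j h x * u j x) = 1 := by
          intro R hRone h
          refine Finset.prod_eq_one (fun j hj => ?_)
          calc ∑ x, R j h x * u j x = ∑ x, R j h x * 1 := by
                refine Finset.sum_congr rfl (fun x _ => by rw [hu3 j hj x])
            _ = 1 := hRone _ _
        have hg0 := hgen u
        have hLHS : ∑ h : Fin K → Bool, π h * (((∏ m, ∑ x, P (f' m) h x * u (f' m) x) *
            (∏ m, ∑ x, P (g' m) h x * u (g' m) x)) * ∏ j ∈ S3, ∑ x, P j h x * u j x)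
            = ∑ h : Fin K → Bool, π h * (P (f' m0) h x0 * Mat2 s' h) := by
          refine Finset.sum_congr rfl (fun h _ => ?_)
          rw [block1 P hpairPone h, block2P h, block3 P hpairPone h, mul_one]
        have hRHS : ∑ h : Fin K → Bool, π' h * (((∏ m, ∑ x, Q (f' m) h x * u (f' m) x) *
            (∏ m, ∑ x, Q (g' m) h x * u (g' m) x)) * ∏ j ∈ S3, ∑ x, Q j h x * u j x)
            = ∑ h : Fin K → Bool, π h * (Q (f' m0) (σe.symm h) x0 * Mat2 s' h) := by
          calc ∑ h : Fin K → Bool, π' h * (((∏ m, ∑ x, Q (f' m) h x * u (f' m) x) *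
              (∏ m, ∑ x, Q (g' m) h x * u (g' m) x)) * ∏ j ∈ S3, ∑ x, Q j h x * u j x)
              = ∑ h : Fin K → Bool, π (σ h) * (Q (f' m0) h x0 * Mat2 s' (σ h)) := by
                refine Finset.sum_congr rfl (fun h _ => ?_)
                rw [block1 Q hpairQone h, block2Q h, block3 Q hpairQone h, mul_one,
                  hM2rel s' h, hπσ h]
            _ = ∑ h : Fin K → Bool, π h * (Q (f' m0) (σe.symm h) x0 * Mat2 s' h) := by
                have := Equiv.sum_comp σe
                  (fun h => π h * (Q (f' m0) (σe.symm h) x0 * Mat2 s' h))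
                rw [← this]
                refine Finset.sum_congr rfl (fun h _ => ?_)
                rw [hσe_app h, hσe_symm h]
        rw [hLHS, hRHS] at hg0
        have : ∑ h, (π h * (P (f' m0) h x0 - Q (f' m0) (σe.symm h) x0)) * Mat2 s' h
            = (∑ h : Fin K → Bool, π h * (P (f' m0) h x0 * Mat2 s' h))
              - ∑ h : Fin K → Bool, π h * (Q (f' m0) (σe.symm h) x0 * Mat2 s' h) := by
          rw [← Finset.sum_sub_distrib]
          refine Finset.sum_congr rfl (fun h _ => ?_)
          ring
        rw [this, hg0, sub_self]
      have hk := killer2 _ keyA (σ b)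
      have : P (f' m0) (σ b) x0 - Q (f' m0) (σe.symm (σ b)) x0 = 0 := by
        rcases mul_eq_zero.mp hk with h | h
        · exact absurd h (hπne (σ b))
        · exact h
      rw [hσe_symm b] at this
      linarith
    have caseB : ∀ (m0 : Fin K) (b : Fin K → Bool), Q (g' m0) b = P (g' m0) (σ b) := by
      intro m0 b
      funext x0
      have keyB : ∀ s : Fin K → Bool,
          ∑ h, (π h * (P (g' m0) h x0 - Q (g' m0) (σe.symm h) x0)) * Mat1 s h = 0 := by
        intro s
        set u : (j : Fin J) → X j → ℝ := fun j' x =>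
          if ∃ m, f' m = j' ∧ s m = true then ind j' x else vdel (g' m0) x0 j' x with huB
        have hu1 : ∀ m x, u (g' m) x
            = if m = m0 then (if (⟨g' m, x⟩ : Σ jj, X jj) = ⟨g' m0, x0⟩ then (1:ℝ) else 0)
              else 1 := by
          intro m x
          simp only [huB]
          rw [if_neg (show ¬ ∃ m', f' m' = g' m ∧ s m' = true from ?_)]
          · simp only [hvdel]
            by_cases hm : m = m0
            · subst hm
              rw [if_pos rfl, if_pos rfl]
            · rw [if_neg (fun hc => hm (hg' hc)), if_neg hm]
          · rintro ⟨m', he, _⟩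
            exact absurd he (hfg' m' m)
        have hu2 : ∀ m x, u (f' m) x = if s m = true then ind (f' m) x else 1 := by
          intro m x
          simp only [huB]
          by_cases hsm : s m = true
          · rw [if_pos (show ∃ m', f' m' = f' m ∧ s m' = true from ⟨m, rfl, hsm⟩), if_pos hsm]
          · rw [if_neg (show ¬ ∃ m', f' m' = f' m ∧ s m' = true from ?_), if_neg hsm]
            · simp only [hvdel]
              rw [if_neg (fun hc : f' m = g' m0 => absurd hc (hfg' m m0))]
            · rintro ⟨m', he, hsm'⟩
              exact hsm (hf' he ▸ hsm')
        have hu3 : ∀ j, j ∈ S3 → ∀ x, u j x = 1 := by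
          intro j hj x
          simp only [huB]
          rw [if_neg (show ¬ ∃ m', f' m' = j ∧ s m' = true from ?_)]
          · simp only [hvdel]
            rw [if_neg (fun hc : j = g' m0 => (hS3g m0) (hc ▸ hj))]
          · rintro ⟨m', he, _⟩
            exact ((hS3mem j).mp hj).1 m' he
        have block2 : ∀ (R : (j : Fin J) → (Fin K → Bool) → X j → ℝ)
            (hRone : ∀ j hh, ∑ x, R j hh x * (1:ℝ) = 1) (h : Fin K → Bool),
            (∏ m, ∑ x, R (g' m) h x * u (g' m) x) = R (g' m0) h x0 := by
          intro R hRone h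
          refine (Finset.prod_eq_single m0 (fun m _ hne => ?_) (fun habs =>
            absurd (Finset.mem_univ m0) habs)).trans ?_
          · calc ∑ x, R (g' m) h x * u (g' m) x = ∑ x, R (g' m) h x * 1 := by
                  refine Finset.sum_congr rfl (fun x _ => ?_)
                  rw [hu1 m x, if_neg hne]
              _ = 1 := hRone _ _
          · calc ∑ x, R (g' m0) h x * u (g' m0) x
                = ∑ x, R (g' m0) h x *
                  (if (⟨g' m0, x⟩ : Σ jj, X jj) = ⟨g' m0, x0⟩ then (1:ℝ) else 0) := by
                  refine Finset.sum_congr rfl (fun x _ => ?_)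
                  rw [hu1 m0 x, if_pos rfl]
              _ = R (g' m0) h x0 := hpairdel _ _ _
        have block1P : ∀ h, (∏ m, ∑ x, P (f' m) h x * u (f' m) x) = Mat1 s h := by
          intro h
          rw [hMat1, Matrix.of_apply, Finset.prod_filter]
          refine Finset.prod_congr rfl (fun m _ => ?_)
          by_cases hsm : s m = true
          · rw [if_pos hsm]
            calc ∑ x, P (f' m) h x * u (f' m) x = ∑ x, P (f' m) h x * ind (f' m) x := by
                  refine Finset.sum_congr rfl (fun x _ => by rw [hu2 m x, if_pos hsm])
              _ = ε1 m h := hpairind _ _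
          · rw [if_neg hsm]
            calc ∑ x, P (f' m) h x * u (f' m) x = ∑ x, P (f' m) h x * 1 := by
                  refine Finset.sum_congr rfl (fun x _ => by rw [hu2 m x, if_neg hsm])
              _ = 1 := hpairPone _ _
        have block1Q : ∀ h, (∏ m, ∑ x, Q (f' m) h x * u (f' m) x) = Mat1' s h := by
          intro h
          rw [hMat1', Matrix.of_apply, Finset.prod_filter]
          refine Finset.prod_congr rfl (fun m _ => ?_)
          by_cases hsm : s m = true
          · rw [if_pos hsm]
            calc ∑ x, Q (f' m) h x * u (f' m) x = ∑ x, Q (f' m) h x * ind (f' m) x := by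
                  refine Finset.sum_congr rfl (fun x _ => by rw [hu2 m x, if_pos hsm])
              _ = η1 m h := hpairind _ _
          · rw [if_neg hsm]
            calc ∑ x, Q (f' m) h x * u (f' m) x = ∑ x, Q (f' m) h x * 1 := by
                  refine Finset.sum_congr rfl (fun x _ => by rw [hu2 m x, if_neg hsm])
              _ = 1 := hpairQone _ _
        have block3 : ∀ (R : (j : Fin J) → (Fin K → Bool) → X j → ℝ)
            (hRone : ∀ j hh, ∑ x, R j hh x * (1:ℝ) = 1) (h : Fin K → Bool),
            (∏ j ∈ S3, ∑ x, R j h x * u j x) = 1 := by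
          intro R hRone h
          refine Finset.prod_eq_one (fun j hj => ?_)
          calc ∑ x, R j h x * u j x = ∑ x, R j h x * 1 := by
                refine Finset.sum_congr rfl (fun x _ => by rw [hu3 j hj x])
            _ = 1 := hRone _ _
        have hg0 := hgen u
        have hLHS : ∑ h : Fin K → Bool, π h * (((∏ m, ∑ x, P (f' m) h x * u (f' m) x) *
            (∏ m, ∑ x, P (g' m) h x * u (g' m) x)) * ∏ j ∈ S3, ∑ x, P j h x * u j x)
            = ∑ h : Fin K → Bool, π h * (P (g' m0) h x0 * Mat1 s h) := by
          refine Finset.sum_congr rfl (fun h _ => ?_)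
          rw [block2 P hpairPone h, block1P h, block3 P hpairPone h, mul_one]
          ring
        have hRHS : ∑ h : Fin K → Bool, π' h * (((∏ m, ∑ x, Q (f' m) h x * u (f' m) x) *
            (∏ m, ∑ x, Q (g' m) h x * u (g' m) x)) * ∏ j ∈ S3, ∑ x, Q j h x * u j x)
            = ∑ h : Fin K → Bool, π h * (Q (g' m0) (σe.symm h) x0 * Mat1 s h) := by
          calc ∑ h : Fin K → Bool, π' h * (((∏ m, ∑ x, Q (f' m) h x * u (f' m) x) *
              (∏ m, ∑ x, Q (g' m) h x * u (g' m) x)) * ∏ j ∈ S3, ∑ x, Q j h x * u j x)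
              = ∑ h : Fin K → Bool, π (σ h) * (Q (g' m0) h x0 * Mat1 s (σ h)) := by
                refine Finset.sum_congr rfl (fun h _ => ?_)
                rw [block2 Q hpairQone h, block1Q h, block3 Q hpairQone h, mul_one,
                  hM1rel s h, hπσ h]
                ring
            _ = ∑ h : Fin K → Bool, π h * (Q (g' m0) (σe.symm h) x0 * Mat1 s h) := by
                have := Equiv.sum_comp σe
                  (fun h => π h * (Q (g' m0) (σe.symm h) x0 * Mat1 s h))
                rw [← this]
                refine Finset.sum_congr rfl (fun h _ => ?_)
                rw [hσe_app h, hσe_symm h]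
        rw [hLHS, hRHS] at hg0
        have : ∑ h, (π h * (P (g' m0) h x0 - Q (g' m0) (σe.symm h) x0)) * Mat1 s h
            = (∑ h : Fin K → Bool, π h * (P (g' m0) h x0 * Mat1 s h))
              - ∑ h : Fin K → Bool, π h * (Q (g' m0) (σe.symm h) x0 * Mat1 s h) := by
          rw [← Finset.sum_sub_distrib]
          refine Finset.sum_congr rfl (fun h _ => ?_)
          ring
        rw [this, hg0, sub_self]
      have hk := killer1 _ keyB (σ b)
      have : P (g' m0) (σ b) x0 - Q (g' m0) (σe.symm (σ b)) x0 = 0 := by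
        rcases mul_eq_zero.mp hk with h | h
        · exact absurd h (hπne (σ b))
        · exact h
      rw [hσe_symm b] at this
      linarith
    have caseC : ∀ (j0 : Fin J), j0 ∈ S3 → ∀ (b : Fin K → Bool), Q j0 b = P j0 (σ b) := by
      intro j0 hj0 b
      funext x0
      have keyC : ∀ s : Fin K → Bool,
          ∑ h, (π h * (P j0 h x0 - Q j0 (σe.symm h) x0)) * Mat1 s h = 0 := by
        intro s
        set u : (j : Fin J) → X j → ℝ := fun j' x =>
          if ∃ m, f' m = j' ∧ s m = true then ind j' x else vdel j0 x0 j' x with huC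
        have hu2 : ∀ m x, u (f' m) x = if s m = true then ind (f' m) x else 1 := by
          intro m x
          simp only [huC]
          by_cases hsm : s m = true
          · rw [if_pos (show ∃ m', f' m' = f' m ∧ s m' = true from ⟨m, rfl, hsm⟩), if_pos hsm]
          · rw [if_neg (show ¬ ∃ m', f' m' = f' m ∧ s m' = true from ?_), if_neg hsm]
            · simp only [hvdel]
              rw [if_neg (fun hc : f' m = j0 => (hS3f m) (hc ▸ hj0))]
            · rintro ⟨m', he, hsm'⟩
              exact hsm (hf' he ▸ hsm')
        have hu1 : ∀ m x, u (g' m) x = 1 := by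
          intro m x
          simp only [huC]
          rw [if_neg (show ¬ ∃ m', f' m' = g' m ∧ s m' = true from ?_)]
          · simp only [hvdel]
            rw [if_neg (fun hc : g' m = j0 => (hS3g m) (hc ▸ hj0))]
          · rintro ⟨m', he, _⟩
            exact absurd he (hfg' m' m)
        have hu3 : ∀ j, j ∈ S3 → ∀ x, u j x = vdel j0 x0 j x := by
          intro j hj x
          simp only [huC]
          rw [if_neg (show ¬ ∃ m', f' m' = j ∧ s m' = true from ?_)]
          · rintro ⟨m', he, _⟩
            exact ((hS3mem j).mp hj).1 m' he
        have block1P : ∀ h, (∏ m, ∑ x, P (f' m) h x * u (f' m) x) = Mat1 s h := by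
          intro h
          rw [hMat1, Matrix.of_apply, Finset.prod_filter]
          refine Finset.prod_congr rfl (fun m _ => ?_)
          by_cases hsm : s m = true
          · rw [if_pos hsm]
            calc ∑ x, P (f' m) h x * u (f' m) x = ∑ x, P (f' m) h x * ind (f' m) x := by
                  refine Finset.sum_congr rfl (fun x _ => by rw [hu2 m x, if_pos hsm])
              _ = ε1 m h := hpairind _ _
          · rw [if_neg hsm]
            calc ∑ x, P (f' m) h x * u (f' m) x = ∑ x, P (f' m) h x * 1 := by
                  refine Finset.sum_congr rfl (fun x _ => by rw [hu2 m x, if_neg hsm])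
              _ = 1 := hpairPone _ _
        have block1Q : ∀ h, (∏ m, ∑ x, Q (f' m) h x * u (f' m) x) = Mat1' s h := by
          intro h
          rw [hMat1', Matrix.of_apply, Finset.prod_filter]
          refine Finset.prod_congr rfl (fun m _ => ?_)
          by_cases hsm : s m = true
          · rw [if_pos hsm]
            calc ∑ x, Q (f' m) h x * u (f' m) x = ∑ x, Q (f' m) h x * ind (f' m) x := by
                  refine Finset.sum_congr rfl (fun x _ => by rw [hu2 m x, if_pos hsm])
              _ = η1 m h := hpairind _ _
          · rw [if_neg hsm]
            calc ∑ x, Q (f' m) h x * u (f' m) x = ∑ x, Q (f' m) h x * 1 := by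
                  refine Finset.sum_congr rfl (fun x _ => by rw [hu2 m x, if_neg hsm])
              _ = 1 := hpairQone _ _
        have block2 : ∀ (R : (j : Fin J) → (Fin K → Bool) → X j → ℝ)
            (hRone : ∀ j hh, ∑ x, R j hh x * (1:ℝ) = 1) (h : Fin K → Bool),
            (∏ m, ∑ x, R (g' m) h x * u (g' m) x) = 1 := by
          intro R hRone h
          refine Finset.prod_eq_one (fun m _ => ?_)
          calc ∑ x, R (g' m) h x * u (g' m) x = ∑ x, R (g' m) h x * 1 := by
                refine Finset.sum_congr rfl (fun x _ => by rw [hu1 m x])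
            _ = 1 := hRone _ _
        have block3 : ∀ (R : (j : Fin J) → (Fin K → Bool) → X j → ℝ)
            (hRone : ∀ j hh, ∑ x, R j hh x * (1:ℝ) = 1) (h : Fin K → Bool),
            (∏ j ∈ S3, ∑ x, R j h x * u j x) = R j0 h x0 := by
          intro R hRone h
          calc ∏ j ∈ S3, ∑ x, R j h x * u j x
              = ∏ j ∈ S3, ∑ x, R j h x * vdel j0 x0 j x := by
                refine Finset.prod_congr rfl (fun j hj => ?_)
                refine Finset.sum_congr rfl (fun x _ => by rw [hu3 j hj x])
            _ = R j0 h x0 := hdelta j0 x0 hj0 R h hRone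
        have hg0 := hgen u
        have hLHS : ∑ h : Fin K → Bool, π h * (((∏ m, ∑ x, P (f' m) h x * u (f' m) x) *
            (∏ m, ∑ x, P (g' m) h x * u (g' m) x)) * ∏ j ∈ S3, ∑ x, P j h x * u j x)
            = ∑ h : Fin K → Bool, π h * (P j0 h x0 * Mat1 s h) := by
          refine Finset.sum_congr rfl (fun h _ => ?_)
          rw [block1P h, block2 P hpairPone h, block3 P hpairPone h, mul_one]
          ring
        have hRHS : ∑ h : Fin K → Bool, π' h * (((∏ m, ∑ x, Q (f' m) h x * u (f' m) x) *
            (∏ m, ∑ x, Q (g' m) h x * u (g' m) x)) * ∏ j ∈ S3, ∑ x, Q j h x * u j x)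
            = ∑ h : Fin K → Bool, π h * (Q j0 (σe.symm h) x0 * Mat1 s h) := by
          calc ∑ h : Fin K → Bool, π' h * (((∏ m, ∑ x, Q (f' m) h x * u (f' m) x) *
              (∏ m, ∑ x, Q (g' m) h x * u (g' m) x)) * ∏ j ∈ S3, ∑ x, Q j h x * u j x)
              = ∑ h : Fin K → Bool, π (σ h) * (Q j0 h x0 * Mat1 s (σ h)) := by
                refine Finset.sum_congr rfl (fun h _ => ?_)
                rw [block1Q h, block2 Q hpairQone h, block3 Q hpairQone h, mul_one,
                  hM1rel s h, hπσ h]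
                ring
            _ = ∑ h : Fin K → Bool, π h * (Q j0 (σe.symm h) x0 * Mat1 s h) := by
                have := Equiv.sum_comp σe
                  (fun h => π h * (Q j0 (σe.symm h) x0 * Mat1 s h))
                rw [← this]
                refine Finset.sum_congr rfl (fun h _ => ?_)
                rw [hσe_app h, hσe_symm h]
        rw [hLHS, hRHS] at hg0
        have : ∑ h, (π h * (P j0 h x0 - Q j0 (σe.symm h) x0)) * Mat1 s h
            = (∑ h : Fin K → Bool, π h * (P j0 h x0 * Mat1 s h))
              - ∑ h : Fin K → Bool, π h * (Q j0 (σe.symm h) x0 * Mat1 s h) := by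
          rw [← Finset.sum_sub_distrib]
          refine Finset.sum_congr rfl (fun h _ => ?_)
          ring
        rw [this, hg0, sub_self]
      have hk := killer1 _ keyC (σ b)
      have : P j0 (σ b) x0 - Q j0 (σe.symm (σ b)) x0 = 0 := by
        rcases mul_eq_zero.mp hk with h | h
        · exact absurd h (hπne (σ b))
        · exact h
      rw [hσe_symm b] at this
      linarith
    intro j b
    rcases hcase j with ⟨m0, rfl⟩ | ⟨m0, rfl⟩ | hj
    · exact caseA m0 b
    · exact caseB m0 b
    · exact caseC j hj b
  -- monotone comparison helper on block-1 rows
  have monoP : ∀ (m : Fin K) (a a' : Fin K → Bool),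
      (∀ i, i < m → a (c1 i) = a' (c1 i)) → a (c1 m) = false → a' (c1 m) = true →
      ε1 m a < ε1 m a' := by
    intro m a a' hag ha ha'
    refine hPmono (f' m) a' a ⟨fun k hk => ?_, ⟨c1 m, hdiag1 m, ?_⟩⟩
    · obtain ⟨i, hi, rfl⟩ := hpar1 m k hk
      rcases lt_or_eq_of_le hi with hlt | heq
      · exact le_of_eq (hag i hlt)
      · subst heq
        rw [ha]
        exact Bool.false_le _
    · rw [ha, ha']
      exact Bool.false_lt_true
  have trich : ∀ (m : Fin K) (a a' : Fin K → Bool),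
      (∀ i, i < m → a (c1 i) = a' (c1 i)) → ε1 m a < ε1 m a' →
      a (c1 m) = false ∧ a' (c1 m) = true := by
    intro m a a' hag hlt
    cases ha : a (c1 m) <;> cases ha' : a' (c1 m)
    · exfalso
      have : ε1 m a = ε1 m a' := by
        refine hdep1 m a a' (fun i hi => ?_)
        rcases lt_or_eq_of_le hi with h1 | h1
        · exact hag i h1
        · subst h1; rw [ha, ha']
      rw [this] at hlt
      exact lt_irrefl _ hlt
    · exact ⟨rfl, rfl⟩
    · exfalso
      have := monoP m a' a (fun i hi => (hag i hi).symm) ha' ha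
      exact lt_asymm hlt this
    · exfalso
      have : ε1 m a = ε1 m a' := by
        refine hdep1 m a a' (fun i hi => ?_)
        rcases lt_or_eq_of_le hi with h1 | h1
        · exact hag i h1
        · subst h1; rw [ha, ha']
      rw [this] at hlt
      exact lt_irrefl _ hlt
  -- epsilon of Q on block-1 rows
  have hεQ : ∀ (m : Fin K) (h : Fin K → Bool),
      (∑ x ∈ C (f' m), Q (f' m) h x) = ε1 m (σ h) := by
    intro m h
    rw [hε1def]
    simp only
    rw [QP (f' m) h]
  -- the latent coordinate matching, by strong induction along the triangular order
  have key : ∀ (n : ℕ) (m : Fin K), (m : ℕ) = n → ∃ k, ∀ h, σ h (c1 m) = h k := by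
    intro n
    induction n using Nat.strong_induction_on with
    | _ n IH =>
    intro m hmn
    have hKs : ∀ i : Fin K, i < m → ∃ k, ∀ h, σ h (c1 i) = h k := by
      intro i hi
      refine IH (i : ℕ) ?_ i rfl
      rw [← hmn]
      exact Fin.lt_def.mp hi
    set Ks : Fin K → Prop := fun k => ∃ i : Fin K, i < m ∧ ∀ h, σ h (c1 i) = h k with hKsdef
    -- step (2): a fresh monotone parent pins the coordinate
    have step2 : ∀ k, Γ' (f' m) k = true → ¬ Ks k → ∀ h, σ h (c1 m) = h k := by
      intro k hΓ' hks
      have sub : ∀ h : Fin K → Bool, h k = false →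
          σ h (c1 m) = false ∧ σ (Function.update h k true) (c1 m) = true := by
        intro h hk
        have hlt : ε1 m (σ h) < ε1 m (σ (Function.update h k true)) := by
          rw [← hεQ, ← hεQ]
          refine hQmono (f' m) (Function.update h k true) h ⟨fun k' _ => ?_, ⟨k, hΓ', ?_⟩⟩
          · by_cases hk' : k' = k
            · subst hk'; rw [hk]; simp
            · rw [Function.update_of_ne hk']
          · rw [hk]; simp
        have hag : ∀ i, i < m → σ h (c1 i) = σ (Function.update h k true) (c1 i) := by
          intro i hi
          obtain ⟨ki, hki⟩ := hKs i hi
          have hkine : ki ≠ k := by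
            intro hcontra
            exact hks ⟨i, hi, hcontra ▸ hki⟩
          rw [hki h, hki (Function.update h k true), Function.update_of_ne hkine]
        exact trich m (σ h) (σ (Function.update h k true)) hag hlt
      intro h
      cases hk : h k
      · exact (sub h hk).1
      · have h2 : Function.update h k false k = false := by simp
        have h3 := (sub (Function.update h k false) h2).2
        have h4 : Function.update (Function.update h k false) k true = h := by
          rw [Function.update_idem]
          rw [← hk]
          exact Function.update_eq_self k h
        rw [h4] at h3
        exact h3
    -- step (3): such a fresh parent exists
    have step3 : ∃ k, Γ' (f' m) k = true ∧ ¬ Ks k := by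
      by_contra hno
      push_neg at hno
      have hno' : ∀ k, Γ' (f' m) k = true → Ks k := hno
      have Gdet : ∀ h h', (∀ k, Ks k → h k = h' k) → σ h (c1 m) = σ h' (c1 m) := by
        intro h h' hagr
        have hQeq : Q (f' m) h = Q (f' m) h' :=
          (hQcomp (f' m) h h').mpr (fun k hk => hagr k (hno' k hk))
        have hεeq : ε1 m (σ h) = ε1 m (σ h') := by
          rw [← hεQ, ← hεQ, hQeq]
        have hagσ : ∀ i, i < m → σ h (c1 i) = σ h' (c1 i) := by
          intro i hi
          obtain ⟨ki, hki⟩ := hKs i hi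
          rw [hki h, hki h']
          exact hagr ki ⟨i, hi, hki⟩
        cases hv : σ h (c1 m) <;> cases hv' : σ h' (c1 m)
        · rfl
        · exfalso
          have := monoP m (σ h) (σ h') hagσ hv hv'
          rw [hεeq] at this
          exact lt_irrefl _ this
        · exfalso
          have := monoP m (σ h') (σ h) (fun i hi => (hagσ i hi).symm) hv' hv
          rw [hεeq] at this
          exact lt_irrefl _ this
        · rfl
      -- construct a violating pair via surjectivity
      set a : Fin K → Bool := fun _ => false with hadef
      set a' : Fin K → Bool := Function.update a (c1 m) true with ha'def
      set h1 : Fin K → Bool := σe.symm a with hh1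
      set h2 : Fin K → Bool := σe.symm a' with hh2
      have hpat : ∀ k, Ks k → h1 k = h2 k := by
        intro k ⟨i, hi, hspec⟩
        have e1 : h1 k = a (c1 i) := by
          rw [← hspec h1, hh1, hσe_symm' a]
        have e2 : h2 k = a' (c1 i) := by
          rw [← hspec h2, hh2, hσe_symm' a']
        rw [e1, e2, ha'def]
        rw [Function.update_of_ne (fun hc => (ne_of_lt hi) (c1.injective hc))]
      have := Gdet h1 h2 hpat
      rw [hh1, hh2, hσe_symm' a, hσe_symm' a'] at this
      rw [ha'def] at this
      simp only [Function.update_self, hadef] at this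
      exact absurd this (by decide)
    obtain ⟨k, hk1, hk2⟩ := step3
    exact ⟨k, step2 k hk1 hk2⟩
  have key' : ∀ m : Fin K, ∃ k, ∀ h, σ h (c1 m) = h k := fun m => key (m : ℕ) m rfl
  set kst : Fin K → Fin K := fun m => (key' m).choose with hkstdef
  have hkst : ∀ m h, σ h (c1 m) = h (kst m) := fun m => (key' m).choose_spec
  have hkinj : Function.Injective kst := by
    intro m m' hmm
    have hall : ∀ a : Fin K → Bool, a (c1 m) = a (c1 m') := by
      intro a
      have e1 : σ (σe.symm a) (c1 m) = (σe.symm a) (kst m) := hkst m (σe.symm a)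
      have e2 : σ (σe.symm a) (c1 m') = (σe.symm a) (kst m') := hkst m' (σe.symm a)
      rw [hσe_symm' a] at e1 e2
      rw [e1, e2, hmm]
    have : c1 m = c1 m' := by
      by_contra hne
      have h5 := hall (fun k => if k = c1 m then true else false)
      rw [if_pos rfl, if_neg (fun hc : c1 m' = c1 m => hne hc.symm)] at h5
      exact absurd h5 (by decide)
    exact c1.injective this
  have hkbij : Function.Bijective kst := Finite.injective_iff_bijective.mp hkinj
  set τ : Equiv.Perm (Fin K) := c1.symm.trans (Equiv.ofBijective kst hkbij) with hτdef
  have hτ : ∀ k, τ k = kst (c1.symm k) := fun k => rfl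
  have hστ : ∀ (h : Fin K → Bool) (k : Fin K), σ h k = h (τ k) := by
    intro h k
    have e1 : σ h (c1 (c1.symm k)) = h (kst (c1.symm k)) := hkst (c1.symm k) h
    rw [c1.apply_symm_apply] at e1
    rw [e1, hτ]
  set φ : (Fin K → Bool) → (Fin K → Bool) := fun h k => h (τ.symm k) with hφdef
  have hφτ : ∀ (h : Fin K → Bool) (k : Fin K), φ h (τ k) = h k := by
    intro h k
    simp only [hφdef]
    rw [Equiv.symm_apply_apply]
  have hσφ : ∀ h, σ (φ h) = h := by
    intro h
    funext k
    rw [hστ (φ h) k, hφτ h k]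
  refine ⟨τ, φ, hφτ, ?_, ?_, ?_⟩
  · -- graphs agree
    intro j k
    have impl1 : Γ j k = true → Γ' j (τ k) = true := by
      intro hγ
      rcases Bool.dichotomy (Γ' j (τ k)) with hγ' | hγ'
      · exfalso
        set b1 : Fin K → Bool := fun _ => true with hb1
        set b2 : Fin K → Bool := Function.update b1 (τ k) false with hb2
        have hQeq : Q j b1 = Q j b2 := by
          refine (hQcomp j b1 b2).mpr (fun k' hk' => ?_)
          by_cases hkk : k' = τ k
          · rw [hkk] at hk'
            rw [hk'] at hγ'
            exact absurd hγ' (by decide)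
          · rw [hb2, Function.update_of_ne hkk]
        have hPeq : P j (σ b1) = P j (σ b2) := by
          rw [← QP j b1, ← QP j b2, hQeq]
        have := (hPcomp j (σ b1) (σ b2)).mp hPeq k hγ
        rw [hστ b1 k, hστ b2 k] at this
        rw [hb2, Function.update_self] at this
        simp only [hb1] at this
        exact absurd this (by decide)
      · exact hγ'
    have impl2 : Γ j k = false → Γ' j (τ k) = false := by
      intro hγ
      rcases Bool.dichotomy (Γ' j (τ k)) with hγ' | hγ'
      · exact hγ'
      · exfalso
        set b1 : Fin K → Bool := fun _ => true with hb1
        set b2 : Fin K → Bool := Function.update b1 (τ k) false with hb2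
        have hPeq : P j (σ b1) = P j (σ b2) := by
          refine (hPcomp j (σ b1) (σ b2)).mpr (fun k' hk' => ?_)
          rw [hστ b1 k', hστ b2 k']
          have hne : τ k' ≠ τ k := by
            intro hc
            have : k' = k := τ.injective hc
            rw [this, hγ] at hk'
            exact absurd hk' (by decide)
          rw [hb2, Function.update_of_ne hne]
        have hQeq : Q j b1 = Q j b2 := by
          rw [QP j b1, QP j b2, hPeq]
        have := (hQcomp j b1 b2).mp hQeq (τ k) hγ'
        rw [hb2, Function.update_self] at this
        simp only [hb1] at this
        exact absurd this (by decide)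
    cases hγ : Γ j k
    · exact impl2 hγ
    · exact impl1 hγ
  · -- weights agree
    intro h
    rw [hπσ (φ h), hσφ h]
  · -- conditionals agree
    intro j h
    rw [QP j (φ h), hσφ h]
end

section
/- (Kruskal's theorem.) Let r ≥ 1 and for a = 1, 2, 3 let T_a be an n_a × r real matrix. Suppose there are natural numbers k_1, k_2, k_3 with k_1 + k_2 + k_3 ≥ 2r + 2 such that, for each a, every set of k_a columns of T_a is linearly independent. Define the three-way tensor 𝒯 : {1,…,n_1} × {1,…,n_2} × {1,…,n_3} → ℝ by 𝒯(i,j,k) = Σ_{l=1}^r T_1(i,l) T_2(j,l) T_3(k,l). If T̃_1, T̃_2, T̃_3 are matrices of the same respective sizes with 𝒯(i,j,k) = Σ_{l=1}^r T̃_1(i,l) T̃_2(j,l) T̃_3(k,l) for all i, j, k, then there exist an r×r permutation matrix Π and invertible diagonal r×r matrices D_1, D_2, D_3 with D_1 D_2 D_3 = I_r such that T̃_a = T_a D_a Π for a = 1, 2, 3. -/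
namespace Kruskal12

open Finset Submodule Module Matrix

/-- number of nonzero entries -/
noncomputable def wt {r : ℕ} (v : Fin r → ℝ) : ℕ := (Finset.univ.filter (fun l => v l ≠ 0)).card

lemma wt_le {r : ℕ} (v : Fin r → ℝ) : wt v ≤ r := by
  classical
  calc wt v ≤ (Finset.univ : Finset (Fin r)).card := Finset.card_filter_le _ _
  _ = r := by simp

lemma le_wt {r : ℕ} (v : Fin r → ℝ) (L : Finset (Fin r)) (h : ∀ l ∈ L, v l ≠ 0) :
    L.card ≤ wt v := by
  classical
  exact Finset.card_le_card (fun l hl => Finset.mem_filter.mpr ⟨Finset.mem_univ l, h l hl⟩)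

lemma wt_add_le {r : ℕ} (v : Fin r → ℝ) (N : Finset (Fin r)) (h : ∀ m ∈ N, v m = 0) :
    wt v + N.card ≤ r := by
  classical
  have hdisj : Disjoint (Finset.univ.filter (fun l => v l ≠ 0)) N := by
    rw [Finset.disjoint_right]
    intro m hm hmem
    exact (Finset.mem_filter.mp hmem).2 (h m hm)
  calc wt v + N.card = (Finset.univ.filter (fun l => v l ≠ 0) ∪ N).card :=
        (Finset.card_union_of_disjoint hdisj).symm
    _ ≤ (Finset.univ : Finset (Fin r)).card := Finset.card_le_card (Finset.subset_univ _)
    _ = r := by simp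

/-- separation: a vector not in the span of a finite set can be kept nonzero while
    killing the set, under the dot product pairing. -/
lemma exists_sep {n : ℕ} (s : Finset (Fin n → ℝ)) (v : Fin n → ℝ)
    (hv : v ∉ span ℝ (s : Set (Fin n → ℝ))) :
    ∃ x : Fin n → ℝ, (∀ w ∈ span ℝ (s : Set (Fin n → ℝ)), w ⬝ᵥ x = 0) ∧ v ⬝ᵥ x ≠ 0 := by
  classical
  set W : Submodule ℝ (Fin n → ℝ) := span ℝ (s : Set (Fin n → ℝ)) with hW
  have hv' : W.mkQ v ≠ 0 := by
    simpa [Submodule.Quotient.mk_eq_zero] using hv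
  have : ¬ (∀ φ : Module.Dual ℝ ((Fin n → ℝ) ⧸ W), φ (W.mkQ v) = 0) := by
    rw [Module.forall_dual_apply_eq_zero_iff]
    exact hv'
  push_neg at this
  obtain ⟨ψ, hψ⟩ := this
  set φ : Module.Dual ℝ (Fin n → ℝ) := ψ.comp W.mkQ with hφ
  have hker : ∀ w ∈ W, φ w = 0 := by
    intro w hw
    have : W.mkQ w = 0 := by simpa [Submodule.Quotient.mk_eq_zero] using hw
    simp [hφ, this]
  refine ⟨fun k => φ (Pi.single k 1), ?_, ?_⟩
  · intro w hw
    have hdecomp : ∀ u : Fin n → ℝ, u ⬝ᵥ (fun k => φ (Pi.single k 1)) = φ u := by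
      intro u
      have hu : u = ∑ k, u k • (Pi.single k 1 : Fin n → ℝ) := by
        funext j
        simp [Pi.single_apply, Finset.sum_ite_eq', mul_comm]
      calc u ⬝ᵥ (fun k => φ (Pi.single k 1)) = ∑ k, u k * φ (Pi.single k 1) := rfl
        _ = φ (∑ k, u k • (Pi.single k 1 : Fin n → ℝ)) := by
            rw [map_sum]
            exact Finset.sum_congr rfl (fun k _ => by simp [smul_eq_mul])
        _ = φ u := by rw [← hu]
    rw [hdecomp]
    exact hker w hw
  · have hdecomp : v ⬝ᵥ (fun k => φ (Pi.single k 1)) = φ v := by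
      have hu : v = ∑ k, v k • (Pi.single k 1 : Fin n → ℝ) := by
        funext j
        simp [Pi.single_apply, Finset.sum_ite_eq', mul_comm]
      calc v ⬝ᵥ (fun k => φ (Pi.single k 1)) = ∑ k, v k * φ (Pi.single k 1) := rfl
        _ = φ (∑ k, v k • (Pi.single k 1 : Fin n → ℝ)) := by
            rw [map_sum]
            exact Finset.sum_congr rfl (fun k _ => by simp [smul_eq_mul])
        _ = φ v := by rw [← hu]
    rw [hdecomp]
    simpa [hφ] using hψ

/-- generic vector: kill a finite set, keep finitely many vectors (each outside the span)
    simultaneously nonzero. -/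
lemma exists_avoid {n : ℕ} (s keep : Finset (Fin n → ℝ))
    (h : ∀ v ∈ keep, v ∉ span ℝ (s : Set (Fin n → ℝ))) :
    ∃ x : Fin n → ℝ, (∀ w ∈ s, w ⬝ᵥ x = 0) ∧ (∀ v ∈ keep, v ⬝ᵥ x ≠ 0) := by
  classical
  induction keep using Finset.induction with
  | empty => exact ⟨0, fun w _ => by simp, fun v hv => absurd hv (by simp)⟩
  | @insert v keep hvk ih =>
    obtain ⟨x, hx1, hx2⟩ := ih (fun u hu => h u (Finset.mem_insert_of_mem hu))
    obtain ⟨x', hx'1, hx'2⟩ := exists_sep s v (h v (Finset.mem_insert_self v keep))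
    set bad : Finset ℝ :=
      insert 0 ((insert v keep).image (fun u => -(u ⬝ᵥ x) / (u ⬝ᵥ x'))) with hbad
    obtain ⟨t, ht⟩ := Infinite.exists_notMem_finset bad
    have ht0 : t ≠ 0 := fun h0 => ht (by simp [hbad, h0])
    refine ⟨x + t • x', ?_, ?_⟩
    · intro w hw
      have hws : w ∈ span ℝ (s : Set (Fin n → ℝ)) := Submodule.subset_span hw
      simp [dotProduct_add, dotProduct_smul, hx1 w hw, hx'1 w hws]
    · intro u hu
      have hkey : u ⬝ᵥ (x + t • x') = u ⬝ᵥ x + t * (u ⬝ᵥ x') := by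
        simp [dotProduct_add, dotProduct_smul, smul_eq_mul]
      rw [hkey]
      rcases Finset.mem_insert.mp hu with rfl | hu'
      · -- u = v : v ⬝ x' ≠ 0
        intro hcon
        have : t = -(u ⬝ᵥ x) / (u ⬝ᵥ x') := by
          field_simp at hcon ⊢
          linarith
        exact ht (by
          rw [hbad]
          exact Finset.mem_insert_of_mem (Finset.mem_image.mpr ⟨u, hu, this.symm⟩))
      · by_cases hux' : u ⬝ᵥ x' = 0
        · simp [hux']
          exact hx2 u hu'
        · intro hcon
          have : t = -(u ⬝ᵥ x) / (u ⬝ᵥ x') := by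
            field_simp at hcon ⊢
            linarith
          exact ht (by
            rw [hbad]
            exact Finset.mem_insert_of_mem
              (Finset.mem_image.mpr ⟨u, Finset.mem_insert_of_mem hu', this.symm⟩))


/-- every subfamily of at most `k` columns is independent -/
def kind {r n : ℕ} (k : ℕ) (c : Fin r → (Fin n → ℝ)) : Prop :=
  ∀ s : Finset (Fin r), s.card ≤ k → LinearIndependent ℝ (fun l : s => c l)

lemma kind_of_exact {r n k : ℕ} (c : Fin r → (Fin n → ℝ)) (hk : k ≤ r)
    (h : ∀ s : Finset (Fin r), s.card = k → LinearIndependent ℝ (fun l : s => c l)) :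
    kind k c := by
  intro s hs
  obtain ⟨t, hst, htcard⟩ := Finset.exists_superset_card_eq hs (by simpa using hk)
  have ht := h t htcard
  have : (fun l : s => c l) = (fun l : t => c l) ∘ (fun l : s => (⟨l.1, hst l.2⟩ : t)) := rfl
  rw [this]
  refine ht.comp _ (fun a b hab => ?_)
  have h2 : a.1 = b.1 := by simpa using congrArg Subtype.val hab
  exact Subtype.ext h2

lemma kind_zero_coeffs {r n : ℕ} {c : Fin r → (Fin n → ℝ)} {s : Finset (Fin r)}
    (hind : LinearIndependent ℝ (fun l : s => c l)) (g : Fin r → ℝ)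
    (hsum : ∑ l ∈ s, g l • c l = 0) : ∀ l ∈ s, g l = 0 := by
  classical
  rw [Fintype.linearIndependent_iff] at hind
  intro l hl
  refine hind (fun l => g l.1) ?_ ⟨l, hl⟩
  rw [← hsum]
  exact Finset.sum_coe_sort s (fun l => g l • c l)

lemma notmem_span {r n k : ℕ} {c : Fin r → (Fin n → ℝ)} (hc : kind k c)
    (S : Finset (Fin r)) (t : Fin r) (hcard : S.card + 1 ≤ k) (ht : t ∉ S) :
    c t ∉ span ℝ (c '' (S : Set (Fin r))) := by
  classical
  have hins : (insert t S).card ≤ k := by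
    rw [Finset.card_insert_of_notMem ht]; omega
  have hind := hc (insert t S) hins
  have hx : (⟨t, Finset.mem_insert_self t S⟩ : (insert t S : Finset (Fin r))) ∉
      {l : (insert t S : Finset (Fin r)) | l.1 ∈ S} := by
    simp only [Set.mem_setOf_eq]
    exact ht
  have hns := hind.notMem_span_image hx
  have himg : (fun l : (insert t S : Finset (Fin r)) => c l.1) ''
      {l : (insert t S : Finset (Fin r)) | l.1 ∈ S} = c '' (S : Set (Fin r)) := by
    ext z
    constructor
    · rintro ⟨l, hl, rfl⟩
      exact ⟨l.1, hl, rfl⟩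
    · rintro ⟨l, hl, rfl⟩
      exact ⟨⟨l, Finset.mem_insert_of_mem hl⟩, hl, rfl⟩
  rw [himg] at hns
  exact hns

lemma kind_ne_zero {r n k : ℕ} {c : Fin r → (Fin n → ℝ)} (hc : kind k c) (hk : 1 ≤ k)
    (l : Fin r) : c l ≠ 0 := by
  intro h0
  have := notmem_span hc ∅ l (by simpa using hk) (Finset.notMem_empty l)
  apply this
  simp [h0]

section rankstuff

variable {α β γ : Type*} [Fintype α] [Fintype β] [Fintype γ]

lemma sylvester (P : Matrix α β ℝ) (Q : Matrix β γ ℝ) :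
    P.rank + Q.rank ≤ (P * Q).rank + Fintype.card β := by
  classical
  set f := P.mulVecLin with hf
  set g := Q.mulVecLin with hgdef
  set R := LinearMap.range g with hR
  set h := f.domRestrict R with hh
  have h1 : finrank ℝ (LinearMap.range h) + finrank ℝ (LinearMap.ker h) = finrank ℝ R :=
    LinearMap.finrank_range_add_finrank_ker h
  have h2 : LinearMap.range h = LinearMap.range ((P*Q).mulVecLin) := by
    rw [Matrix.mulVecLin_mul, LinearMap.range_comp, hh, LinearMap.range_domRestrict]
  have h3 : finrank ℝ (LinearMap.ker h) ≤ finrank ℝ (LinearMap.ker f) := by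
    have hker : LinearMap.ker h = (LinearMap.ker f).comap R.subtype :=
      LinearMap.ker_domRestrict R f
    rw [hker]
    set e : ((LinearMap.ker f).comap R.subtype) →ₗ[ℝ] (LinearMap.ker f) :=
      LinearMap.codRestrict (LinearMap.ker f)
        (R.subtype.comp (Submodule.subtype _)) (fun x => x.2) with he
    have hinj : Function.Injective e := by
      intro x y hxy
      have : (x : R) = (y : R) := by
        apply Subtype.ext
        have := congrArg Subtype.val hxy
        exact this
      exact Subtype.ext this
    exact LinearMap.finrank_le_finrank_of_injective hinj
  have h4 : finrank ℝ (LinearMap.range f) + finrank ℝ (LinearMap.ker f)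
      = Fintype.card β := by
    rw [LinearMap.finrank_range_add_finrank_ker f, Module.finrank_fintype_fun_eq_card]
  have hrP : P.rank = finrank ℝ (LinearMap.range f) := rfl
  have hrQ : Q.rank = finrank ℝ R := rfl
  have hrPQ : (P*Q).rank = finrank ℝ (LinearMap.range ((P*Q).mulVecLin)) := rfl
  rw [hrP, hrQ, hrPQ, ← h2]
  omega

end rankstuff

section slices

variable {r n1 n2 : ℕ}

/-- the matrix `∑ l, d l • (a l) (b l)ᵀ` -/
noncomputable def slice (d : Fin r → ℝ) (a : Fin r → Fin n1 → ℝ) (b : Fin r → Fin n2 → ℝ) :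
    Matrix (Fin n1) (Fin n2) ℝ :=
  Matrix.of fun i j => ∑ l, d l * a l i * b l j

noncomputable def suppF (d : Fin r → ℝ) : Finset (Fin r) :=
  Finset.univ.filter (fun l => d l ≠ 0)

lemma card_suppF (d : Fin r → ℝ) : (suppF d).card = wt d := rfl

noncomputable def Pmat (d : Fin r → ℝ) (a : Fin r → Fin n1 → ℝ) :
    Matrix (Fin n1) (suppF d) ℝ := Matrix.of fun i l => a l.1 i

noncomputable def Qmat (d : Fin r → ℝ) (b : Fin r → Fin n2 → ℝ) :
    Matrix (suppF d) (Fin n2) ℝ := Matrix.of fun l j => d l.1 * b l.1 j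

lemma slice_factor (d : Fin r → ℝ) (a : Fin r → Fin n1 → ℝ) (b : Fin r → Fin n2 → ℝ) :
    slice d a b = Pmat d a * Qmat d b := by
  classical
  ext i j
  rw [Matrix.mul_apply]
  show ∑ l, d l * a l i * b l j = ∑ l : suppF d, a l.1 i * (d l.1 * b l.1 j)
  rw [Finset.sum_coe_sort (suppF d) (fun l => a l i * (d l * b l j))]
  rw [← Finset.sum_subset (Finset.subset_univ (suppF d))]
  · exact Finset.sum_congr rfl (fun l _ => by ring)
  · intro l _ hl
    have : d l = 0 := by
      by_contra hne
      exact hl (Finset.mem_filter.mpr ⟨Finset.mem_univ l, hne⟩)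
    simp [this]

lemma finrank_span_image_ge {n k : ℕ} (c : Fin r → Fin n → ℝ) (hc : kind k c)
    (S : Finset (Fin r)) :
    min k S.card ≤ finrank ℝ (span ℝ (c '' (S : Set (Fin r)))) := by
  classical
  obtain ⟨t, hts, htc⟩ := Finset.exists_subset_card_eq
    (s := S) (n := min k S.card) (min_le_right _ _)
  have hind := hc t (htc ▸ min_le_left _ _)
  have h1 := finrank_span_eq_card hind
  have h2 : Set.range (fun l : t => c l.1) = c '' (t : Set (Fin r)) :=
    (Set.image_eq_range c (t : Set (Fin r))).symm
  rw [h2] at h1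
  have hmono : span ℝ (c '' (t : Set (Fin r))) ≤ span ℝ (c '' (S : Set (Fin r))) :=
    Submodule.span_mono (Set.image_mono (f := c) (by exact_mod_cast hts))
  have := Submodule.finrank_mono hmono
  rw [h1, Fintype.card_coe] at this
  omega

lemma rank_P_ge {kA : ℕ} (d : Fin r → ℝ) (a : Fin r → Fin n1 → ℝ) (ha : kind kA a) :
    min kA (wt d) ≤ (Pmat d a).rank := by
  classical
  rw [Matrix.rank_eq_finrank_span_cols]
  have hr : Set.range (Pmat d a).transpose = a '' ((suppF d : Finset (Fin r)) : Set (Fin r)) := by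
    ext v
    constructor
    · rintro ⟨l, rfl⟩
      exact ⟨l.1, l.2, rfl⟩
    · rintro ⟨l, hl, rfl⟩
      exact ⟨⟨l, hl⟩, rfl⟩
  rw [show Set.range (Pmat d a).col = Set.range (Pmat d a).transpose from rfl, hr]
  have := finrank_span_image_ge a ha (suppF d)
  rw [card_suppF] at this
  exact this

lemma rank_Q_ge {kB : ℕ} (d : Fin r → ℝ) (b : Fin r → Fin n2 → ℝ) (hb : kind kB b) :
    min kB (wt d) ≤ (Qmat d b).rank := by
  classical
  rw [← Matrix.rank_transpose, Matrix.rank_eq_finrank_span_cols]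
  have hr : Set.range ((Qmat d b).transpose).transpose
      = (fun l => d l • b l) '' ((suppF d : Finset (Fin r)) : Set (Fin r)) := by
    ext v
    constructor
    · rintro ⟨l, rfl⟩
      refine ⟨l.1, l.2, ?_⟩
      funext j
      show d l.1 * b l.1 j = ((Qmat d b).transpose).transpose l j
      rfl
    · rintro ⟨l, hl, rfl⟩
      refine ⟨⟨l, hl⟩, ?_⟩
      funext j
      show ((Qmat d b).transpose).transpose ⟨l, hl⟩ j = d l * b l j
      rfl
  rw [show Set.range ((Qmat d b).transpose).col
    = Set.range ((Qmat d b).transpose).transpose from rfl, hr]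
  have hspan : span ℝ ((fun l => d l • b l) '' ((suppF d : Finset (Fin r)) : Set (Fin r)))
      = span ℝ (b '' ((suppF d : Finset (Fin r)) : Set (Fin r))) := by
    apply le_antisymm
    · rw [Submodule.span_le]
      rintro v ⟨l, hl, rfl⟩
      exact Submodule.smul_mem _ _ (Submodule.subset_span ⟨l, hl, rfl⟩)
    · rw [Submodule.span_le]
      rintro v ⟨l, hl, rfl⟩
      have hdl : d l ≠ 0 := by
        have := (Finset.mem_filter.mp (by exact_mod_cast hl : l ∈ suppF d)).2
        exact this
      have : b l = (d l)⁻¹ • (d l • b l) := by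
        rw [smul_smul, inv_mul_cancel₀ hdl, one_smul]
      rw [this]
      exact Submodule.smul_mem _ _ (Submodule.subset_span ⟨l, hl, rfl⟩)
  rw [hspan]
  have := finrank_span_image_ge b hb (suppF d)
  rw [card_suppF] at this
  exact this

lemma rank_slice_le (d : Fin r → ℝ) (a : Fin r → Fin n1 → ℝ) (b : Fin r → Fin n2 → ℝ) :
    (slice d a b).rank ≤ wt d := by
  rw [slice_factor]
  calc (Pmat d a * Qmat d b).rank ≤ (Pmat d a).rank := Matrix.rank_mul_le_left _ _
    _ ≤ Fintype.card (suppF d) := Matrix.rank_le_card_width _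
    _ = wt d := by rw [Fintype.card_coe]; rfl

/-- main slice inequality -/
lemma slice_wt {kA kB : ℕ} (d d' : Fin r → ℝ)
    (a a' : Fin r → Fin n1 → ℝ) (b b' : Fin r → Fin n2 → ℝ)
    (ha : kind kA a) (hb : kind kB b) (hkA : kA ≤ r) (hkB : kB ≤ r)
    (hsl : slice d a b = slice d' a' b') :
    wt d ≤ wt d' ∨ kA + kB ≤ r + wt d' := by
  have h1 : min kA (wt d) + min kB (wt d) ≤ (slice d a b).rank + wt d := by
    rw [slice_factor]
    calc min kA (wt d) + min kB (wt d) ≤ (Pmat d a).rank + (Qmat d b).rank :=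
          Nat.add_le_add (rank_P_ge d a ha) (rank_Q_ge d b hb)
      _ ≤ (Pmat d a * Qmat d b).rank + Fintype.card (suppF d) := sylvester _ _
      _ = (Pmat d a * Qmat d b).rank + wt d := by rw [Fintype.card_coe]; rfl
  have h2 : (slice d a b).rank ≤ wt d' := by
    rw [hsl]; exact rank_slice_le d' a' b'
  have h3 : wt d ≤ r := wt_le d
  omega

end slices

section matching

variable {r n : ℕ}

lemma matching (kC ψ : ℕ) (c c' : Fin r → Fin n → ℝ)
    (hkC2 : 2 ≤ kC) (hkCr : kC ≤ r)
    (hψ : 2*r + 2 ≤ ψ + kC)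
    (hc : kind kC c)
    (hF1 : ∀ x : Fin n → ℝ,
      wt (fun l => c l ⬝ᵥ x) ≤ wt (fun m => c' m ⬝ᵥ x) ∨ ψ ≤ r + wt (fun m => c' m ⬝ᵥ x)) :
    ∃ σ : Equiv.Perm (Fin r), ∀ m, ∃ t : ℝ, t ≠ 0 ∧ c' m = t • c (σ m) := by
  classical
  set G : Finset (Fin r) → Submodule ℝ (Fin n → ℝ) :=
    fun N => span ℝ (c' '' (N : Set (Fin r))) with hG
  set Φ : Finset (Fin r) → Finset (Fin r) :=
    fun N => Finset.univ.filter (fun l => c l ∈ G N) with hΦ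
  have hmemΦ : ∀ N l, l ∈ Φ N ↔ c l ∈ G N := by
    intro N l
    rw [hΦ]
    simp
  have hGmono : ∀ N N' : Finset (Fin r), N ⊆ N' → G N ≤ G N' := by
    intro N N' hNN
    exact Submodule.span_mono (Set.image_mono (f := c') (by exact_mod_cast hNN))
  have hΦmono : ∀ N N' : Finset (Fin r), N ⊆ N' → Φ N ⊆ Φ N' := by
    intro N N' hNN l hl
    rw [hmemΦ] at hl ⊢
    exact hGmono N N' hNN hl
  -- (♠)
  have spade : ∀ N : Finset (Fin r), kC ≤ N.card + 1 → N.card ≤ (Φ N).card := by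
    intro N hN
    set L := Finset.univ.filter (fun l => c l ∉ G N) with hL
    have hkeep : ∀ v ∈ L.image c, v ∉ span ℝ ((N.image c' : Finset _) : Set (Fin n → ℝ)) := by
      intro v hv
      obtain ⟨l, hl, rfl⟩ := Finset.mem_image.mp hv
      have h2 := (Finset.mem_filter.mp (hL ▸ hl)).2
      have himg : ((N.image c' : Finset _) : Set (Fin n → ℝ)) = c' '' (N : Set (Fin r)) := by
        simp
      rw [himg]
      exact h2
    obtain ⟨x, hx1, hx2⟩ := exists_avoid (N.image c') (L.image c) hkeep
    have h1 : L.card ≤ wt (fun l => c l ⬝ᵥ x) := by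
      apply le_wt
      intro l hl
      exact hx2 (c l) (Finset.mem_image_of_mem c hl)
    have h2 : wt (fun m => c' m ⬝ᵥ x) + N.card ≤ r := by
      apply wt_add_le
      intro m hm
      exact hx1 (c' m) (Finset.mem_image_of_mem c' hm)
    have h3 : (Φ N).card + L.card = r := by
      rw [hΦ, hL]
      have := Finset.card_filter_add_card_filter_not
        (s := (Finset.univ : Finset (Fin r))) (p := fun l => c l ∈ G N)
      simpa using this
    rcases hF1 x with h | h
    · omega
    · omega
  -- count ≤ dim
  have cdim : ∀ U : Submodule ℝ (Fin n → ℝ), finrank ℝ U + 1 ≤ kC →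
      (Finset.univ.filter (fun l => c l ∈ U)).card ≤ finrank ℝ U := by
    intro U hU
    by_contra hcon
    push_neg at hcon
    obtain ⟨t, hts, htc⟩ := Finset.exists_subset_card_eq
      (s := Finset.univ.filter (fun l => c l ∈ U)) (n := finrank ℝ U + 1) (by omega)
    have hind := hc t (by omega)
    have hmem : ∀ l : t, c l.1 ∈ U := fun l => (Finset.mem_filter.mp (hts l.2)).2
    have hfam : LinearIndependent ℝ (fun l : t => (⟨c l.1, hmem l⟩ : U)) := by
      apply LinearIndependent.of_comp U.subtype
      exact hind
    have hcard := hfam.fintype_card_le_finrank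
    rw [Fintype.card_coe] at hcard
    omega
  have hΦeq : ∀ N, Φ N = Finset.univ.filter (fun l => c l ∈ G N) := fun N => rfl
  have hGle : ∀ N : Finset (Fin r), finrank ℝ (G N) ≤ N.card := by
    intro N
    have h2 := finrank_span_finset_le_card (R := ℝ) (N.image c')
    unfold Set.finrank at h2
    have h1 : G N = span ℝ ((N.image c' : Finset _) : Set (Fin n → ℝ)) := by
      show span ℝ (c' '' (N : Set (Fin r))) = _
      congr 1
      simp
    rw [h1]
    exact le_trans h2 Finset.card_image_le
  -- dim at level kC-1 and kC
  have hdim1 : ∀ N : Finset (Fin r), N.card + 1 = kC → finrank ℝ (G N) = N.card := by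
    intro N hN
    have hs := spade N (by omega)
    have hcd := cdim (G N) (by have := hGle N; omega)
    rw [← hΦeq] at hcd
    have := hGle N
    omega
  have hdimk : ∀ N : Finset (Fin r), N.card = kC → finrank ℝ (G N) = kC := by
    intro N hN
    have hs := spade N (by omega)
    have hle := hGle N
    by_contra hne
    have hcd := cdim (G N) (by omega)
    rw [← hΦeq] at hcd
    omega
  -- independence of subfamilies of c' of size ≤ kC
  have hindepk : ∀ N : Finset (Fin r), N.card = kC →
      LinearIndependent ℝ (fun m : N => c' m.1) := by
    intro N hN
    rw [linearIndependent_iff_card_eq_finrank_span]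
    rw [Fintype.card_coe]
    unfold Set.finrank
    have hr : Set.range (fun m : N => c' m.1) = c' '' (N : Set (Fin r)) :=
      (Set.image_eq_range c' (N : Set (Fin r))).symm
    rw [hr]
    rw [show span ℝ (c' '' (N : Set (Fin r))) = G N from rfl, hdimk N hN, hN]
  have hindep : ∀ N : Finset (Fin r), N.card ≤ kC →
      LinearIndependent ℝ (fun m : N => c' m.1) := by
    intro N hN
    obtain ⟨M, hNM, hMc⟩ := Finset.exists_superset_card_eq hN (by simpa using hkCr)
    have hind := hindepk M hMc
    have hcomp : (fun m : N => c' m.1)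
        = (fun m : M => c' m.1) ∘ (fun m : N => (⟨m.1, hNM m.2⟩ : M)) := rfl
    rw [hcomp]
    refine hind.comp _ (fun x y hxy => ?_)
    have h2 : x.1 = y.1 := by simpa using congrArg Subtype.val hxy
    exact Subtype.ext h2
  have hdim : ∀ N : Finset (Fin r), N.card ≤ kC → finrank ℝ (G N) = N.card := by
    intro N hN
    have h1 := finrank_span_eq_card (hindep N hN)
    have hr : Set.range (fun m : N => c' m.1) = c' '' (N : Set (Fin r)) :=
      (Set.image_eq_range c' (N : Set (Fin r))).symm
    rw [hr] at h1
    rw [show G N = span ℝ (c' '' (N : Set (Fin r))) from rfl, h1]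
    exact Fintype.card_coe N
  -- intersections
  have hinter : ∀ N1 N2 : Finset (Fin r), (N1 ∪ N2).card ≤ kC →
      G N1 ⊓ G N2 = G (N1 ∩ N2) := by
    intro N1 N2 hU
    have hle : G (N1 ∩ N2) ≤ G N1 ⊓ G N2 :=
      le_inf (hGmono _ _ Finset.inter_subset_left) (hGmono _ _ Finset.inter_subset_right)
    have hsup : G N1 ⊔ G N2 = G (N1 ∪ N2) := by
      have h1 : G N1 ⊔ G N2 = span ℝ ((c' '' (N1 : Set (Fin r))) ∪ (c' '' (N2 : Set (Fin r)))) :=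
        (Submodule.span_union _ _).symm
      rw [h1, ← Set.image_union]
      show _ = span ℝ (c' '' ((N1 ∪ N2 : Finset (Fin r)) : Set (Fin r)))
      rw [Finset.coe_union]
    have h1 : finrank ℝ ↥(G N1 ⊔ G N2) + finrank ℝ ↥(G N1 ⊓ G N2)
        = finrank ℝ ↥(G N1) + finrank ℝ ↥(G N2) := finrank_sup_add_finrank_inf_eq _ _
    have hc1 : N1.card ≤ kC := le_trans (Finset.card_le_card Finset.subset_union_left) hU
    have hc2 : N2.card ≤ kC := le_trans (Finset.card_le_card Finset.subset_union_right) hU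
    have hc12 : (N1 ∩ N2).card ≤ kC :=
      le_trans (Finset.card_le_card
        (Finset.Subset.trans Finset.inter_subset_left Finset.subset_union_left)) hU
    rw [hsup, hdim _ hU, hdim _ hc1, hdim _ hc2] at h1
    have hcards := Finset.card_union_add_card_inter N1 N2
    have hfr : finrank ℝ ↥(G N1 ⊓ G N2) = (N1 ∩ N2).card := by omega
    symm
    apply Submodule.eq_of_le_of_finrank_le hle
    rw [hfr, hdim _ hc12]
  -- the cascade
  have claim : ∀ i : ℕ, ∀ N : Finset (Fin r), N.card + i + 1 = kC → N.card ≤ (Φ N).card := by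
    intro i
    induction i with
    | zero =>
      intro N hN
      exact spade N (by omega)
    | succ i ih =>
      intro N hN
      have hNr : N.card ≤ r := by simpa using Finset.card_le_univ N
      have hcompl : Nᶜ.card + N.card = r := by
        rw [Finset.card_compl]
        have : N.card ≤ Fintype.card (Fin r) := Finset.card_le_univ N
        simp only [Fintype.card_fin] at this ⊢
        omega
      -- card of Φ(insert m N) for fresh m
      have hBcard : ∀ m ∈ Nᶜ, (Φ (insert m N)).card = N.card + 1 := by
        intro m hm
        have hmN : m ∉ N := Finset.mem_compl.mp hm
        have hcard : (insert m N).card = N.card + 1 := Finset.card_insert_of_notMem hmN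
        have hge : N.card + 1 ≤ (Φ (insert m N)).card := by
          have := ih (insert m N) (by omega)
          omega
        have hle2 : (Φ (insert m N)).card ≤ N.card + 1 := by
          have hd := hdim (insert m N) (by omega)
          have hcd := cdim (G (insert m N)) (by rw [hd]; omega)
          rw [← hΦeq] at hcd
          rw [hd] at hcd
          omega
        omega
      have hpair : ∀ m ∈ Nᶜ, ∀ m' ∈ Nᶜ, m ≠ m' →
          Φ (insert m N) ∩ Φ (insert m' N) = Φ N := by
        intro m hm m' hm' hmm
        have hmN : m ∉ N := Finset.mem_compl.mp hm
        have hm'N : m' ∉ N := Finset.mem_compl.mp hm'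
        have hUcard : (insert m N ∪ insert m' N).card ≤ kC := by
          have : insert m N ∪ insert m' N = insert m (insert m' N) := by
            ext z
            simp only [Finset.mem_union, Finset.mem_insert]
            tauto
          rw [this, Finset.card_insert_of_notMem (by
              simp only [Finset.mem_insert]
              push_neg
              exact ⟨hmm, hmN⟩), Finset.card_insert_of_notMem hm'N]
          omega
        have hII : insert m N ∩ insert m' N = N := by
          ext z
          simp only [Finset.mem_inter, Finset.mem_insert]
          constructor
          · rintro ⟨h1 | h1, h2 | h2⟩
            · exact absurd (h1.symm.trans h2) hmm
            · exact h2
            · exact h1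
            · exact h1
          · intro hz; exact ⟨Or.inr hz, Or.inr hz⟩
        ext l
        rw [Finset.mem_inter, hmemΦ, hmemΦ, hmemΦ]
        constructor
        · intro hab
          have h9 : c l ∈ G (insert m N) ⊓ G (insert m' N) :=
            Submodule.mem_inf.mpr ⟨hab.1, hab.2⟩
          rw [hinter _ _ hUcard, hII] at h9
          exact h9
        · intro hl
          have h9 : c l ∈ G (insert m N ∩ insert m' N) := by rw [hII]; exact hl
          rw [← hinter _ _ hUcard] at h9
          exact Submodule.mem_inf.mp h9
      rcases Nat.eq_zero_or_pos i with rfl | hipos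
      · -- boundary case: N.card + 2 = kC
        by_contra hcon
        push_neg at hcon
        set lam := (Φ N).card with hlam
        have hlam1 : lam + 1 ≤ N.card := hcon
        -- each fresh m contributes a disjoint block of size q
        obtain ⟨q, hq⟩ : ∃ q, q + lam = N.card + 1 := ⟨N.card + 1 - lam, by omega⟩
        have hblock : ∀ m ∈ Nᶜ, ((Φ (insert m N)) \ (Φ N)).card = q := by
          intro m hm
          have hsub : Φ N ⊆ Φ (insert m N) :=
            hΦmono _ _ (Finset.subset_insert m N)
          have := Finset.card_sdiff_add_card_eq_card hsub
          have hB := hBcard m hm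
          omega
        have hdisj : ∀ m ∈ Nᶜ, ∀ m' ∈ Nᶜ, m ≠ m' →
            Disjoint ((Φ (insert m N)) \ (Φ N)) ((Φ (insert m' N)) \ (Φ N)) := by
          intro m hm m' hm' hmm
          rw [Finset.disjoint_left]
          intro l hl hl'
          have h1 := (Finset.mem_sdiff.mp hl).1
          have h2 := (Finset.mem_sdiff.mp hl').1
          have h3 := (Finset.mem_sdiff.mp hl).2
          apply h3
          rw [← hpair m hm m' hm' hmm]
          exact Finset.mem_inter.mpr ⟨h1, h2⟩
        have hcardU : (Nᶜ.biUnion (fun m => (Φ (insert m N)) \ (Φ N))).card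
            = Nᶜ.card * q := by
          rw [Finset.card_biUnion hdisj]
          exact Finset.sum_const_nat (fun m hm => hblock m hm)
        have hUdisj : Disjoint (Nᶜ.biUnion (fun m => (Φ (insert m N)) \ (Φ N))) (Φ N) := by
          rw [Finset.disjoint_left]
          intro l hl hl'
          obtain ⟨m, hm, hlm⟩ := Finset.mem_biUnion.mp hl
          exact (Finset.mem_sdiff.mp hlm).2 hl'
        have htotal : Nᶜ.card * q + lam ≤ r := by
          have := Finset.card_union_of_disjoint hUdisj
          have hle3 := Finset.card_le_univ
            ((Nᶜ.biUnion (fun m => (Φ (insert m N)) \ (Φ N))) ∪ Φ N)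
          rw [this, hcardU] at hle3
          simpa using hle3
        -- numeric contradiction
        have haF : 2 ≤ Nᶜ.card := by omega
        have hq2 : 2 ≤ q := by omega
        have hNk : N.card + 2 = kC := by omega
        exfalso
        have hz : (0:ℤ) ≤ ((Nᶜ.card : ℤ) - 2) * ((q:ℤ) - 2) := by
          apply mul_nonneg <;> [skip; skip] <;>
            · push_cast
              omega
        have htz : ((Nᶜ.card : ℤ)) * q + lam ≤ r := by exact_mod_cast htotal
        have h1z : ((Nᶜ.card : ℤ)) + N.card = r := by exact_mod_cast hcompl
        have h2z : ((q:ℤ)) + lam = N.card + 1 := by exact_mod_cast hq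
        have h3z : ((lam:ℤ)) + 1 ≤ N.card := by exact_mod_cast hlam1
        have h4z : ((N.card:ℤ)) + 2 = kC := by exact_mod_cast hNk
        have h5z : ((kC:ℤ)) ≤ r := by exact_mod_cast hkCr
        nlinarith [hz, htz, h1z, h2z, h3z, h4z, h5z]
      · -- general case: i ≥ 1, so N.card + i + 2 = kC with i ≥ 1
        have hfresh : 1 < Nᶜ.card := by omega
        obtain ⟨m1, hm1, m2, hm2, hm12⟩ := Finset.one_lt_card.mp hfresh
        have hB1 := hBcard m1 hm1
        have hB2 := hBcard m2 hm2
        have hint := hpair m1 hm1 m2 hm2 hm12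
        have hm1N : m1 ∉ N := Finset.mem_compl.mp hm1
        have hm2N : m2 ∉ N := Finset.mem_compl.mp hm2
        set N12 := insert m1 (insert m2 N) with hN12
        have hN12card : N12.card = N.card + 2 := by
          rw [hN12, Finset.card_insert_of_notMem (by
              simp only [Finset.mem_insert]
              push_neg
              exact ⟨hm12, hm1N⟩), Finset.card_insert_of_notMem hm2N]
        have hΦ12 : (Φ N12).card ≤ N.card + 2 := by
          have hd := hdim N12 (by omega)
          have hcd := cdim (G N12) (by rw [hd]; omega)
          rw [← hΦeq] at hcd
          rw [hd] at hcd
          omega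
        have hsub12 : Φ (insert m1 N) ∪ Φ (insert m2 N) ⊆ Φ N12 := by
          apply Finset.union_subset
          · apply hΦmono
            intro z hz
            rw [hN12]
            rcases Finset.mem_insert.mp hz with rfl | hz
            · exact Finset.mem_insert_self _ _
            · exact Finset.mem_insert_of_mem (Finset.mem_insert_of_mem hz)
          · apply hΦmono
            intro z hz
            rw [hN12]
            rcases Finset.mem_insert.mp hz with rfl | hz
            · exact Finset.mem_insert_of_mem (Finset.mem_insert_self _ _)
            · exact Finset.mem_insert_of_mem (Finset.mem_insert_of_mem hz)
        have hUcard : (Φ (insert m1 N) ∪ Φ (insert m2 N)).card ≤ N.card + 2 :=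
          le_trans (Finset.card_le_card hsub12) hΦ12
        have hUI := Finset.card_union_add_card_inter (Φ (insert m1 N)) (Φ (insert m2 N))
        rw [hint] at hUI
        omega
  -- singletons
  have hsing : ∀ m : Fin r, ∃ l : Fin r, c l ∈ G {m} := by
    intro m
    obtain ⟨i, hi⟩ : ∃ i, i + 2 = kC := ⟨kC - 2, by omega⟩
    have := claim i {m} (by rw [Finset.card_singleton]; omega)
    rw [Finset.card_singleton] at this
    have hpos : 0 < (Φ {m}).card := by omega
    obtain ⟨l, hl⟩ := Finset.card_pos.mp hpos
    exact ⟨l, (hmemΦ _ _).mp hl⟩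
  choose f hf using hsing
  have hcne : ∀ l, c l ≠ 0 := kind_ne_zero hc (by omega)
  have hinj : Function.Injective f := by
    intro m1 m2 h12
    by_contra hne
    have h1 : c (f m1) ∈ G {m1} := hf m1
    have h2 : c (f m1) ∈ G {m2} := h12 ▸ hf m2
    have hU : ({m1} ∪ {m2} : Finset (Fin r)).card ≤ kC := by
      have : ({m1} ∪ {m2} : Finset (Fin r)).card ≤ 2 := by
        apply le_trans (Finset.card_union_le _ _)
        simp
      omega
    have hmem2 : c (f m1) ∈ G ({m1} ∩ {m2}) := by
      rw [← hinter _ _ hU]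
      exact ⟨h1, h2⟩
    have hint : ({m1} : Finset (Fin r)) ∩ {m2} = ∅ := by
      ext z
      simp only [Finset.mem_inter, Finset.mem_singleton, Finset.notMem_empty, iff_false]
      rintro ⟨rfl, rfl⟩
      exact hne rfl
    rw [hint] at hmem2
    have : G (∅ : Finset (Fin r)) = ⊥ := by
      show span ℝ (c' '' ((∅ : Finset (Fin r)) : Set (Fin r))) = ⊥
      simp
    rw [this] at hmem2
    exact hcne (f m1) (Submodule.mem_bot ℝ |>.mp hmem2)
  have hbij : Function.Bijective f := (Finite.injective_iff_bijective).mp hinj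
  refine ⟨Equiv.ofBijective f hbij, ?_⟩
  intro m
  have hfm : c (f m) ∈ G {m} := hf m
  have hspan : G {m} = span ℝ {c' m} := by
    show span ℝ (c' '' (({m} : Finset (Fin r)) : Set (Fin r))) = span ℝ {c' m}
    congr 1
    simp
  rw [hspan, Submodule.mem_span_singleton] at hfm
  obtain ⟨t, ht⟩ := hfm
  have htne : t ≠ 0 := by
    intro h0
    rw [h0, zero_smul] at ht
    exact hcne (f m) ht.symm
  refine ⟨t⁻¹, inv_ne_zero htne, ?_⟩
  have : Equiv.ofBijective f hbij m = f m := rfl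
  rw [this, ← ht, smul_smul, inv_mul_cancel₀ htne, one_smul]

end matching

section heqslice

variable {r n1 n2 n3 : ℕ}

lemma sum_swap_dot (a : Fin r → Fin n1 → ℝ) (b : Fin r → Fin n2 → ℝ) (c : Fin r → Fin n3 → ℝ)
    (x : Fin n3 → ℝ) (i : Fin n1) (j : Fin n2) :
    ∑ l, (c l ⬝ᵥ x) * a l i * b l j
      = ∑ k, x k * (∑ l, a l i * b l j * c l k) := by
  have h1 : ∀ l : Fin r, (c l ⬝ᵥ x) * a l i * b l j
      = ∑ k, x k * (a l i * b l j * c l k) := by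
    intro l
    have hd : (c l ⬝ᵥ x) = ∑ k, c l k * x k := rfl
    rw [hd, Finset.sum_mul, Finset.sum_mul]
    exact Finset.sum_congr rfl (fun k _ => by ring)
  rw [Finset.sum_congr rfl (fun l _ => h1 l), Finset.sum_comm]
  refine Finset.sum_congr rfl (fun k _ => ?_)
  rw [Finset.mul_sum]

lemma slice_of_heq (a a' : Fin r → Fin n1 → ℝ) (b b' : Fin r → Fin n2 → ℝ)
    (c c' : Fin r → Fin n3 → ℝ)
    (h : ∀ i j k, ∑ l, a l i * b l j * c l k = ∑ l, a' l i * b' l j * c' l k) :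
    ∀ x : Fin n3 → ℝ,
      slice (fun l => c l ⬝ᵥ x) a b = slice (fun l => c' l ⬝ᵥ x) a' b' := by
  intro x
  ext i j
  show ∑ l, (c l ⬝ᵥ x) * a l i * b l j = ∑ l, (c' l ⬝ᵥ x) * a' l i * b' l j
  rw [sum_swap_dot, sum_swap_dot]
  exact Finset.sum_congr rfl (fun k _ => by rw [h i j k])

lemma pair_identity (a a' : Fin r → Fin n1 → ℝ) (b b' : Fin r → Fin n2 → ℝ)
    (c c' : Fin r → Fin n3 → ℝ)
    (h : ∀ i j k, ∑ l, a l i * b l j * c l k = ∑ l, a' l i * b' l j * c' l k) :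
    ∀ (x : Fin n3 → ℝ) (y : Fin n2 → ℝ) (i : Fin n1),
      ∑ l, (c l ⬝ᵥ x) * ((b l ⬝ᵥ y) * a l i)
        = ∑ l, (c' l ⬝ᵥ x) * ((b' l ⬝ᵥ y) * a' l i) := by
  intro x y i
  have expand : ∀ (a0 : Fin r → Fin n1 → ℝ) (b0 : Fin r → Fin n2 → ℝ) (d0 : Fin r → ℝ),
      ∑ l, d0 l * ((b0 l ⬝ᵥ y) * a0 l i)
        = ∑ j, y j * (∑ l, d0 l * a0 l i * b0 l j) := by
    intro a0 b0 d0
    have hterm : ∀ l : Fin r, d0 l * ((b0 l ⬝ᵥ y) * a0 l i)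
        = ∑ j, y j * (d0 l * a0 l i * b0 l j) := by
      intro l
      have hd : (b0 l ⬝ᵥ y) = ∑ j, b0 l j * y j := rfl
      rw [hd, Finset.sum_mul, Finset.mul_sum]
      exact Finset.sum_congr rfl (fun j _ => by ring)
    rw [Finset.sum_congr rfl (fun l _ => hterm l), Finset.sum_comm]
    refine Finset.sum_congr rfl (fun j _ => ?_)
    rw [Finset.mul_sum]
  rw [expand a b (fun l => c l ⬝ᵥ x), expand a' b' (fun l => c' l ⬝ᵥ x)]
  refine Finset.sum_congr rfl (fun j _ => ?_)
  have hsl := slice_of_heq a a' b b' c c' h x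
  have h2 : ∑ l, (c l ⬝ᵥ x) * a l i * b l j = ∑ l, (c' l ⬝ᵥ x) * a' l i * b' l j :=
    congrFun (congrFun hsl i) j
  rw [h2]

end heqslice

section endgame

variable {r n1 n2 n3 : ℕ}

lemma endgame (kA kB kC : ℕ)
    (a : Fin r → Fin n1 → ℝ) (b : Fin r → Fin n2 → ℝ) (c : Fin r → Fin n3 → ℝ)
    (ha : kind kA a) (hb : kind kB b) (hc : kind kC c)
    (hkA2 : 2 ≤ kA) (hkB2 : 2 ≤ kB) (hkC2 : 2 ≤ kC) (hkCr : kC ≤ r)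
    (hAC : r + 2 ≤ kA + kC) (hBC : r + 2 ≤ kB + kC)
    (ρ1 ρ2 : Equiv.Perm (Fin r)) (κ : Fin r → ℝ) (hκ : ∀ l, κ l ≠ 0)
    (key : ∀ (x : Fin n3 → ℝ) (y : Fin n2 → ℝ) (i : Fin n1),
      ∑ l, (c l ⬝ᵥ x) * ((b l ⬝ᵥ y) * a l i)
        = ∑ l, (c l ⬝ᵥ x) * (κ l * ((b (ρ2 l) ⬝ᵥ y) * a (ρ1 l) i))) :
    (∀ l, ρ1 l = l) ∧ (∀ l, ρ2 l = l) ∧ (∀ l, κ l = 1) := by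
  classical
  obtain ⟨u, hu⟩ : ∃ u, u + kC = r + 1 := ⟨r + 1 - kC, by omega⟩
  have hu1 : 1 ≤ u := by omega
  have hur : u ≤ r - 1 := by omega
  have hukB : u ≤ kB := by omega
  have hukA : u + 1 ≤ kA := by omega
  -- a "generic" x adapted to T : kills all c-columns outside T, keeps those inside nonzero
  have getx : ∀ T : Finset (Fin r), T.card = u →
      ∃ x : Fin n3 → ℝ, (∀ l ∉ T, c l ⬝ᵥ x = 0) ∧ (∀ t ∈ T, c t ⬝ᵥ x ≠ 0) := by
    intro T hT
    have hkeep : ∀ v ∈ T.image c,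
        v ∉ span ℝ ((Tᶜ.image c : Finset _) : Set (Fin n3 → ℝ)) := by
      intro v hv
      obtain ⟨t, ht, rfl⟩ := Finset.mem_image.mp hv
      have hcompl : Tᶜ.card = r - u := by
        rw [Finset.card_compl, hT]; simp
      have := notmem_span hc Tᶜ t (by omega) (by simpa using ht)
      rw [Finset.coe_image]
      exact this
    obtain ⟨x, hx1, hx2⟩ := exists_avoid (Tᶜ.image c) (T.image c) hkeep
    refine ⟨x, ?_, ?_⟩
    · intro l hl
      exact hx1 (c l) (Finset.mem_image_of_mem c (Finset.mem_compl.mpr hl))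
    · intro t ht
      exact hx2 (c t) (Finset.mem_image_of_mem c ht)
  -- collapse of the key identity for such x
  have collapse : ∀ (T : Finset (Fin r)) (l0 : Fin r), l0 ∈ T →
      ∀ (x : Fin n3 → ℝ), (∀ l ∉ T, c l ⬝ᵥ x = 0) →
      ∀ (y : Fin n2 → ℝ), (∀ t ∈ T.erase l0, b t ⬝ᵥ y = 0) →
      ∀ i, (c l0 ⬝ᵥ x) * ((b l0 ⬝ᵥ y) * a l0 i)
        = ∑ t ∈ T, (c t ⬝ᵥ x) * (κ t * ((b (ρ2 t) ⬝ᵥ y) * a (ρ1 t) i)) := by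
    intro T l0 hl0 x hx y hy i
    have hkey := key x y i
    have hL : ∑ l, (c l ⬝ᵥ x) * ((b l ⬝ᵥ y) * a l i)
        = ∑ l ∈ T, (c l ⬝ᵥ x) * ((b l ⬝ᵥ y) * a l i) := by
      symm
      apply Finset.sum_subset (Finset.subset_univ T)
      intro l _ hl
      rw [hx l hl, zero_mul]
    have hL2 : ∑ l ∈ T, (c l ⬝ᵥ x) * ((b l ⬝ᵥ y) * a l i)
        = (c l0 ⬝ᵥ x) * ((b l0 ⬝ᵥ y) * a l0 i) := by
      apply Finset.sum_eq_single_of_mem l0 hl0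
      intro t htT htne
      rw [hy t (Finset.mem_erase.mpr ⟨htne, htT⟩), zero_mul, mul_zero]
    have hR : ∑ l, (c l ⬝ᵥ x) * (κ l * ((b (ρ2 l) ⬝ᵥ y) * a (ρ1 l) i))
        = ∑ l ∈ T, (c l ⬝ᵥ x) * (κ l * ((b (ρ2 l) ⬝ᵥ y) * a (ρ1 l) i)) := by
      symm
      apply Finset.sum_subset (Finset.subset_univ T)
      intro l _ hl
      rw [hx l hl, zero_mul]
    rw [hL, hL2, hR] at hkey
    exact hkey
  -- per-T main technical step
  have perT : ∀ (l0 : Fin r) (T : Finset (Fin r)), l0 ∈ T → T.card = u →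
      (∃ ts ∈ T, ρ1 ts = l0) ∧ (∀ t ∈ T, ρ1 t ≠ l0 → ρ2 t ∈ T.erase l0) := by
    intro l0 T hl0 hT
    obtain ⟨x, hx1, hx2⟩ := getx T hT
    have herase_card : (T.erase l0).card + 1 = u := by
      rw [Finset.card_erase_of_mem hl0]
      omega
    -- y : kill b on T.erase l0, keep b l0 and the "outside" ρ2-columns
    set kills := (T.erase l0).image b with hkills
    set keeps := insert (b l0)
      ((T.filter (fun t => b (ρ2 t) ∉ span ℝ ((kills : Finset _) : Set (Fin n2 → ℝ)))).image
        (fun t => b (ρ2 t))) with hkeeps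
    have hkeep : ∀ v ∈ keeps, v ∉ span ℝ ((kills : Finset _) : Set (Fin n2 → ℝ)) := by
      intro v hv
      rcases Finset.mem_insert.mp hv with rfl | hv'
      · have := notmem_span hb (T.erase l0) l0 (by omega) (Finset.notMem_erase l0 T)
        rw [hkills, Finset.coe_image]
        exact this
      · obtain ⟨t, ht, rfl⟩ := Finset.mem_image.mp hv'
        exact (Finset.mem_filter.mp ht).2
    obtain ⟨y, hy1, hy2⟩ := exists_avoid kills keeps hkeep
    have hyl0 : b l0 ⬝ᵥ y ≠ 0 := hy2 (b l0) (Finset.mem_insert_self _ _)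
    have hyT : ∀ t ∈ T.erase l0, b t ⬝ᵥ y = 0 := by
      intro t ht
      exact hy1 (b t) (Finset.mem_image_of_mem b ht)
    have hcol := collapse T l0 hl0 x hx1 y hyT
    -- vector form
    have hVEQ : ((c l0 ⬝ᵥ x) * (b l0 ⬝ᵥ y)) • a l0
        = ∑ t ∈ T, ((c t ⬝ᵥ x) * κ t * (b (ρ2 t) ⬝ᵥ y)) • a (ρ1 t) := by
      funext i
      rw [Finset.sum_apply]
      simp only [Pi.smul_apply, smul_eq_mul]
      have h9 : ∑ t ∈ T, ((c t ⬝ᵥ x) * κ t * (b (ρ2 t) ⬝ᵥ y)) * a (ρ1 t) i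
          = ∑ t ∈ T, (c t ⬝ᵥ x) * (κ t * ((b (ρ2 t) ⬝ᵥ y) * a (ρ1 t) i)) :=
        Finset.sum_congr rfl (fun t _ => by ring)
      rw [h9, ← hcol i]
      ring
    -- part (i)
    have part1 : ∃ ts ∈ T, ρ1 ts = l0 := by
      by_contra hno
      push_neg at hno
      have hl0img : l0 ∉ T.image ρ1 := by
        intro hmem
        obtain ⟨t, ht, hρ⟩ := Finset.mem_image.mp hmem
        exact hno t ht hρ
      set R := insert l0 (T.image ρ1) with hR
      have hRcard : R.card = u + 1 := by
        rw [hR, Finset.card_insert_of_notMem hl0img,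
          Finset.card_image_of_injective _ ρ1.injective, hT]
      have hind := ha R (by omega)
      set g : Fin r → ℝ := fun v =>
        if v = l0 then (c l0 ⬝ᵥ x) * (b l0 ⬝ᵥ y)
        else -((c (ρ1.symm v) ⬝ᵥ x) * κ (ρ1.symm v) * (b (ρ2 (ρ1.symm v)) ⬝ᵥ y)) with hg
      have hgsum : ∑ v ∈ R, g v • a v = 0 := by
        rw [hR, Finset.sum_insert hl0img]
        have h1 : g l0 = (c l0 ⬝ᵥ x) * (b l0 ⬝ᵥ y) := by rw [hg]; simp
        have h2 : ∑ v ∈ T.image ρ1, g v • a v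
            = ∑ t ∈ T, -(((c t ⬝ᵥ x) * κ t * (b (ρ2 t) ⬝ᵥ y)) • a (ρ1 t)) := by
          rw [Finset.sum_image (fun t _ t' _ h => ρ1.injective h)]
          refine Finset.sum_congr rfl (fun t ht => ?_)
          have hne : ρ1 t ≠ l0 := hno t ht
          rw [hg]
          simp only [hne, if_false, Equiv.symm_apply_apply, neg_smul]
        rw [h1, h2, Finset.sum_neg_distrib, hVEQ]
        simp
      have hzero := kind_zero_coeffs hind g hgsum l0 (by rw [hR]; exact Finset.mem_insert_self _ _)
      have : g l0 = (c l0 ⬝ᵥ x) * (b l0 ⬝ᵥ y) := by rw [hg]; simp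
      rw [this] at hzero
      exact (mul_ne_zero (hx2 l0 hl0) hyl0) hzero
    refine ⟨part1, ?_⟩
    -- part (ii)
    obtain ⟨ts, htsT, hts⟩ := part1
    intro t htT htne
    set R' := T.image ρ1 with hR'
    have hR'card : R'.card = u := by
      rw [hR', Finset.card_image_of_injective _ ρ1.injective, hT]
    have hl0R' : l0 ∈ R' := by
      rw [hR']
      exact Finset.mem_image.mpr ⟨ts, htsT, hts⟩
    have hind := ha R' (by omega)
    set g' : Fin r → ℝ := fun v =>
      (if v = l0 then (c l0 ⬝ᵥ x) * (b l0 ⬝ᵥ y) else 0)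
        - ((c (ρ1.symm v) ⬝ᵥ x) * κ (ρ1.symm v) * (b (ρ2 (ρ1.symm v)) ⬝ᵥ y)) with hg'
    have hg'sum : ∑ v ∈ R', g' v • a v = 0 := by
      have hsplit : ∀ v, g' v • a v
          = (if v = l0 then (c l0 ⬝ᵥ x) * (b l0 ⬝ᵥ y) else 0) • a v
            - ((c (ρ1.symm v) ⬝ᵥ x) * κ (ρ1.symm v) * (b (ρ2 (ρ1.symm v)) ⬝ᵥ y)) • a v := by
        intro v
        rw [hg', sub_smul]
      rw [Finset.sum_congr rfl (fun v _ => hsplit v), Finset.sum_sub_distrib]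
      have h1 : ∑ v ∈ R', (if v = l0 then (c l0 ⬝ᵥ x) * (b l0 ⬝ᵥ y) else 0) • a v
          = ((c l0 ⬝ᵥ x) * (b l0 ⬝ᵥ y)) • a l0 := by
        rw [Finset.sum_eq_single_of_mem l0 hl0R'
          (fun v _ hvne => by rw [if_neg hvne, zero_smul])]
        rw [if_pos rfl]
      have h2 : ∑ v ∈ R', ((c (ρ1.symm v) ⬝ᵥ x) * κ (ρ1.symm v) * (b (ρ2 (ρ1.symm v)) ⬝ᵥ y)) • a v
          = ∑ t ∈ T, ((c t ⬝ᵥ x) * κ t * (b (ρ2 t) ⬝ᵥ y)) • a (ρ1 t) := by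
        rw [hR', Finset.sum_image (fun t _ t' _ h => ρ1.injective h)]
        refine Finset.sum_congr rfl (fun t _ => ?_)
        rw [Equiv.symm_apply_apply]
      rw [h1, h2, hVEQ, sub_self]
    have hzero := kind_zero_coeffs hind g' hg'sum (ρ1 t) (by
      rw [hR']; exact Finset.mem_image_of_mem ρ1 htT)
    have hg't : g' (ρ1 t) = -((c t ⬝ᵥ x) * κ t * (b (ρ2 t) ⬝ᵥ y)) := by
      have h8 : g' (ρ1 t) = (if ρ1 t = l0 then (c l0 ⬝ᵥ x) * (b l0 ⬝ᵥ y) else 0)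
          - ((c (ρ1.symm (ρ1 t)) ⬝ᵥ x) * κ (ρ1.symm (ρ1 t))
            * (b (ρ2 (ρ1.symm (ρ1 t))) ⬝ᵥ y)) := rfl
      rw [h8, if_neg htne, Equiv.symm_apply_apply, zero_sub]
    rw [hg't] at hzero
    have hbzero : b (ρ2 t) ⬝ᵥ y = 0 := by
      have h9 : (c t ⬝ᵥ x) * κ t * (b (ρ2 t) ⬝ᵥ y) = 0 := by linarith [hzero]
      rcases mul_eq_zero.mp h9 with h | h
      · rcases mul_eq_zero.mp h with h' | h'
        · exact absurd h' (hx2 t htT)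
        · exact absurd h' (hκ t)
      · exact h
    by_contra hcon
    by_cases hsp : b (ρ2 t) ∈ span ℝ ((kills : Finset _) : Set (Fin n2 → ℝ))
    · have := notmem_span hb (T.erase l0) (ρ2 t) (by omega) hcon
      rw [hkills, Finset.coe_image] at hsp
      exact this hsp
    · have hkeepmem : b (ρ2 t) ∈ keeps := by
        rw [hkeeps]
        exact Finset.mem_insert_of_mem
          (Finset.mem_image_of_mem _ (Finset.mem_filter.mpr ⟨htT, hsp⟩))
      exact (hy2 _ hkeepmem) hbzero
  -- step 1 : ρ1 = id
  have step1 : ∀ l, ρ1 l = l := by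
    intro l0
    have hsymm : ρ1.symm l0 = l0 := by
      by_contra hne
      have hl0mem : l0 ∈ Finset.univ.erase (ρ1.symm l0) :=
        Finset.mem_erase.mpr ⟨fun h => hne h.symm, Finset.mem_univ _⟩
      have hsub : ({l0} : Finset (Fin r)) ⊆ Finset.univ.erase (ρ1.symm l0) := by
        intro z hz
        rw [Finset.mem_singleton] at hz
        subst hz
        exact hl0mem
      obtain ⟨T, hT1, hT2, hT3⟩ := Finset.exists_subsuperset_card_eq (n := u) hsub
        (by rw [Finset.card_singleton]; omega)
        (by
          rw [Finset.card_erase_of_mem (Finset.mem_univ _)]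
          simp only [Finset.card_univ, Fintype.card_fin]
          omega)
      obtain ⟨⟨ts, htsT, hts⟩, -⟩ := perT l0 T (hT1 (Finset.mem_singleton_self l0)) hT3
      have hts' : ts = ρ1.symm l0 := by
        rw [← hts]
        simp
      rw [hts'] at htsT
      exact (Finset.mem_erase.mp (hT2 htsT)).1 rfl
    have := congrArg ρ1 hsymm
    rw [Equiv.apply_symm_apply] at this
    exact this.symm
  -- helper : find a second index
  have hr2 : 2 ≤ r := by omega
  -- step 2 : ρ2 = id
  have step2 : ∀ l, ρ2 l = l := by
    rcases Nat.eq_or_lt_of_le hu1 with hueq | hugt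
    · -- u = 1, i.e. kC = r : direct argument with T = {l0}
      intro l0
      obtain ⟨x, hx1, hx2⟩ := getx {l0} (by rw [Finset.card_singleton]; omega)
      have hbl0 : ∀ y : Fin n2 → ℝ, (b l0 ⬝ᵥ y) = κ l0 * (b (ρ2 l0) ⬝ᵥ y) := by
        intro y
        have hcol := collapse {l0} l0 (Finset.mem_singleton_self l0) x hx1 y
          (by intro t ht; simp at ht)
        obtain ⟨i0, hi0⟩ : ∃ i0, a l0 i0 ≠ 0 := by
          have := kind_ne_zero ha (by omega) l0
          by_contra hno
          push_neg at hno
          exact this (funext hno)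
        have h9 := hcol i0
        rw [Finset.sum_singleton, step1 l0] at h9
        have hxne := hx2 l0 (Finset.mem_singleton_self l0)
        have h10 : (b l0 ⬝ᵥ y) * a l0 i0 = κ l0 * ((b (ρ2 l0) ⬝ᵥ y) * a l0 i0) :=
          mul_left_cancel₀ hxne h9
        have h11 : ((b l0 ⬝ᵥ y) - κ l0 * (b (ρ2 l0) ⬝ᵥ y)) * a l0 i0 = 0 := by ring_nf; linarith [h10]
        rcases mul_eq_zero.mp h11 with h | h
        · linarith [h]
        · exact absurd h hi0
      have hvec : b l0 = κ l0 • b (ρ2 l0) := by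
        funext j
        have := hbl0 (Pi.single j 1)
        rw [dotProduct_single, dotProduct_single] at this
        simpa using this
      by_contra hne
      have hcard : ({l0, ρ2 l0} : Finset (Fin r)).card ≤ kB := by
        apply le_trans (Finset.card_insert_le _ _)
        rw [Finset.card_singleton]
        omega
      have hind := hb {l0, ρ2 l0} hcard
      set g : Fin r → ℝ := fun v => if v = l0 then 1 else -(κ l0) with hg
      have hgsum : ∑ v ∈ ({l0, ρ2 l0} : Finset (Fin r)), g v • b v = 0 := by
        rw [Finset.sum_insert (by rw [Finset.mem_singleton]; exact fun h => hne h.symm)]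
        rw [Finset.sum_singleton]
        have h1 : g l0 = 1 := if_pos rfl
        have h2 : g (ρ2 l0) = -(κ l0) := if_neg hne
        rw [h1, h2, hvec]
        simp [neg_smul]
      have := kind_zero_coeffs hind g hgsum l0 (Finset.mem_insert_self _ _)
      rw [hg] at this
      simp at this
    · -- u ≥ 2
      intro l
      by_contra hne2
      obtain ⟨l0, hl0⟩ := Finset.card_pos.mp (show 0 < (Finset.univ.erase l).card by
        rw [Finset.card_erase_of_mem (Finset.mem_univ _)]
        simp only [Finset.card_univ, Fintype.card_fin]
        omega)
      have hl0ne : l0 ≠ l := (Finset.mem_erase.mp hl0).1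
      -- first : ρ2 l ≠ l0 via an arbitrary T containing both
      have hsub0 : ({l0, l} : Finset (Fin r)) ⊆ Finset.univ := Finset.subset_univ _
      have hc2 : ({l0, l} : Finset (Fin r)).card = 2 := by
        rw [Finset.card_insert_of_notMem (by rw [Finset.mem_singleton]; exact fun h => hl0ne h),
          Finset.card_singleton]
      obtain ⟨T0, hT01, hT02, hT03⟩ := Finset.exists_subsuperset_card_eq (n := u) hsub0
        (by omega)
        (by simp only [Finset.card_univ, Fintype.card_fin]; omega)
      have hmemL : l ∈ T0 := hT01 (by simp)
      have hmemL0 : l0 ∈ T0 := hT01 (by simp)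
      have hρ1l : ρ1 l ≠ l0 := by rw [step1 l]; exact fun h => hl0ne h.symm
      have h9 := (perT l0 T0 hmemL0 hT03).2 l hmemL hρ1l
      have hρ2ne : ρ2 l ≠ l0 := (Finset.mem_erase.mp h9).1
      -- now choose T1 avoiding ρ2 l
      have hsub1 : ({l0, l} : Finset (Fin r)) ⊆ Finset.univ.erase (ρ2 l) := by
        intro z hz
        rcases Finset.mem_insert.mp hz with rfl | hz
        · exact Finset.mem_erase.mpr ⟨fun h => hρ2ne h.symm, Finset.mem_univ _⟩
        · rw [Finset.mem_singleton] at hz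
          subst hz
          exact Finset.mem_erase.mpr ⟨fun h => hne2 h.symm, Finset.mem_univ _⟩
      obtain ⟨T1, hT11, hT12, hT13⟩ := Finset.exists_subsuperset_card_eq (n := u) hsub1
        (by omega)
        (by
          rw [Finset.card_erase_of_mem (Finset.mem_univ _)]
          simp only [Finset.card_univ, Fintype.card_fin]
          omega)
      have hmemL' : l ∈ T1 := hT11 (by simp)
      have hmemL0' : l0 ∈ T1 := hT11 (by simp)
      have h10 := (perT l0 T1 hmemL0' hT13).2 l hmemL' hρ1l
      have : ρ2 l ∈ T1 := Finset.mem_of_mem_erase h10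
      exact (Finset.mem_erase.mp (hT12 this)).1 rfl
  -- step 3 : κ = 1
  have step3 : ∀ l, κ l = 1 := by
    intro l0
    obtain ⟨T, hT1, hT2⟩ := Finset.exists_superset_card_eq
      (show ({l0} : Finset (Fin r)).card ≤ u by rw [Finset.card_singleton]; omega)
      (by simp only [Fintype.card_fin]; omega)
    have hl0T : l0 ∈ T := hT1 (Finset.mem_singleton_self l0)
    obtain ⟨x, hx1, hx2⟩ := getx T hT2
    -- y : kill T.erase l0, keep b l0
    have herase_card : (T.erase l0).card + 1 = u := by
      rw [Finset.card_erase_of_mem hl0T]; omega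
    have hkeep : ∀ v ∈ ({b l0} : Finset (Fin n2 → ℝ)),
        v ∉ span ℝ (((T.erase l0).image b : Finset _) : Set (Fin n2 → ℝ)) := by
      intro v hv
      rw [Finset.mem_singleton] at hv
      subst hv
      have := notmem_span hb (T.erase l0) l0 (by omega) (Finset.notMem_erase l0 T)
      rw [Finset.coe_image]
      exact this
    obtain ⟨y, hy1, hy2⟩ := exists_avoid ((T.erase l0).image b) {b l0} hkeep
    have hyl0 : b l0 ⬝ᵥ y ≠ 0 := hy2 (b l0) (Finset.mem_singleton_self _)
    have hyT : ∀ t ∈ T.erase l0, b t ⬝ᵥ y = 0 := by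
      intro t ht
      exact hy1 (b t) (Finset.mem_image_of_mem b ht)
    obtain ⟨i0, hi0⟩ : ∃ i0, a l0 i0 ≠ 0 := by
      have := kind_ne_zero ha (by omega) l0
      by_contra hno
      push_neg at hno
      exact this (funext hno)
    have hcol := collapse T l0 hl0T x hx1 y hyT i0
    have hRkill : ∑ t ∈ T, (c t ⬝ᵥ x) * (κ t * ((b (ρ2 t) ⬝ᵥ y) * a (ρ1 t) i0))
        = (c l0 ⬝ᵥ x) * (κ l0 * ((b l0 ⬝ᵥ y) * a l0 i0)) := by
      have h1 : ∀ t ∈ T, t ≠ l0 → (c t ⬝ᵥ x) * (κ t * ((b (ρ2 t) ⬝ᵥ y) * a (ρ1 t) i0)) = 0 := by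
        intro t htT htne
        rw [step2 t, hyT t (Finset.mem_erase.mpr ⟨htne, htT⟩)]
        ring
      rw [Finset.sum_eq_single_of_mem l0 hl0T (fun t ht htne => h1 t ht htne)]
      rw [step1 l0, step2 l0]
    rw [hRkill] at hcol
    -- hcol : (c l0 ⬝ᵥ x) * ((b l0 ⬝ᵥ y) * a l0 i0) = (c l0 ⬝ᵥ x) * (κ l0 * ((b l0 ⬝ᵥ y) * a l0 i0))
    have hxne := hx2 l0 hl0T
    have h10 := mul_left_cancel₀ hxne hcol
    have h11 : (b l0 ⬝ᵥ y) * a l0 i0 * (1 - κ l0) = 0 := by ring_nf; linarith [h10]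
    rcases mul_eq_zero.mp h11 with h | h
    · rcases mul_eq_zero.mp h with h' | h'
      · exact absurd h' hyl0
      · exact absurd h' hi0
    · linarith [h]
  exact ⟨step1, step2, step3⟩

end endgame

end Kruskal12

open Kruskal12 Finset Submodule Module Matrix in
/-- **Kruskal's theorem.** -/
theorem stmt12 (r : ℕ) (hr : 1 ≤ r) (n1 n2 n3 : ℕ)
    (T1 : Matrix (Fin n1) (Fin r) ℝ) (T2 : Matrix (Fin n2) (Fin r) ℝ)
    (T3 : Matrix (Fin n3) (Fin r) ℝ)
    (k1 k2 k3 : ℕ) (hk1r : k1 ≤ r) (hk2r : k2 ≤ r) (hk3r : k3 ≤ r)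
    (hsum : 2 * r + 2 ≤ k1 + k2 + k3)
    (hT1 : ∀ s : Finset (Fin r), s.card = k1 →
      LinearIndependent ℝ (fun l : s => fun i => T1 i l))
    (hT2 : ∀ s : Finset (Fin r), s.card = k2 →
      LinearIndependent ℝ (fun l : s => fun i => T2 i l))
    (hT3 : ∀ s : Finset (Fin r), s.card = k3 →
      LinearIndependent ℝ (fun l : s => fun i => T3 i l))
    (T1' : Matrix (Fin n1) (Fin r) ℝ) (T2' : Matrix (Fin n2) (Fin r) ℝ)
    (T3' : Matrix (Fin n3) (Fin r) ℝ)
    (heq : ∀ i j k, ∑ l, T1 i l * T2 j l * T3 k l = ∑ l, T1' i l * T2' j l * T3' k l) :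
    ∃ (σ : Equiv.Perm (Fin r)) (d1 d2 d3 : Fin r → ℝ),
      (∀ l, d1 l ≠ 0) ∧ (∀ l, d2 l ≠ 0) ∧ (∀ l, d3 l ≠ 0) ∧
      Matrix.diagonal d1 * Matrix.diagonal d2 * Matrix.diagonal d3 = 1 ∧
      T1' = T1 * Matrix.diagonal d1 * σ.permMatrix ℝ ∧
      T2' = T2 * Matrix.diagonal d2 * σ.permMatrix ℝ ∧
      T3' = T3 * Matrix.diagonal d3 * σ.permMatrix ℝ := by
  classical
  have hk12 : 2 ≤ k1 := by omega
  have hk22 : 2 ≤ k2 := by omega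
  have hk32 : 2 ≤ k3 := by omega
  set a : Fin r → Fin n1 → ℝ := fun l i => T1 i l with hadef
  set b : Fin r → Fin n2 → ℝ := fun l j => T2 j l with hbdef
  set c : Fin r → Fin n3 → ℝ := fun l k => T3 k l with hcdef
  set a' : Fin r → Fin n1 → ℝ := fun l i => T1' i l with ha'def
  set b' : Fin r → Fin n2 → ℝ := fun l j => T2' j l with hb'def
  set c' : Fin r → Fin n3 → ℝ := fun l k => T3' k l with hc'def
  have hkA : kind k1 a := kind_of_exact a hk1r (fun s hs => hT1 s hs)
  have hkB : kind k2 b := kind_of_exact b hk2r (fun s hs => hT2 s hs)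
  have hkC : kind k3 c := kind_of_exact c hk3r (fun s hs => hT3 s hs)
  have heqC : ∀ i j k, ∑ l, a l i * b l j * c l k = ∑ l, a' l i * b' l j * c' l k :=
    fun i j k => heq i j k
  have heqA : ∀ (j : Fin n2) (k : Fin n3) (i : Fin n1),
      ∑ l, b l j * c l k * a l i = ∑ l, b' l j * c' l k * a' l i := by
    intro j k i
    calc ∑ l, b l j * c l k * a l i = ∑ l, a l i * b l j * c l k :=
          Finset.sum_congr rfl (fun l _ => by ring)
      _ = ∑ l, a' l i * b' l j * c' l k := heqC i j k
      _ = ∑ l, b' l j * c' l k * a' l i := Finset.sum_congr rfl (fun l _ => by ring)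
  have heqB : ∀ (k : Fin n3) (i : Fin n1) (j : Fin n2),
      ∑ l, c l k * a l i * b l j = ∑ l, c' l k * a' l i * b' l j := by
    intro k i j
    calc ∑ l, c l k * a l i * b l j = ∑ l, a l i * b l j * c l k :=
          Finset.sum_congr rfl (fun l _ => by ring)
      _ = ∑ l, a' l i * b' l j * c' l k := heqC i j k
      _ = ∑ l, c' l k * a' l i * b' l j := Finset.sum_congr rfl (fun l _ => by ring)
  -- F1 inequalities
  have hF1C : ∀ x : Fin n3 → ℝ,
      wt (fun l => c l ⬝ᵥ x) ≤ wt (fun m => c' m ⬝ᵥ x)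
        ∨ k1 + k2 ≤ r + wt (fun m => c' m ⬝ᵥ x) :=
    fun x => slice_wt _ _ a a' b b' hkA hkB hk1r hk2r (slice_of_heq a a' b b' c c' heqC x)
  have hF1A : ∀ x : Fin n1 → ℝ,
      wt (fun l => a l ⬝ᵥ x) ≤ wt (fun m => a' m ⬝ᵥ x)
        ∨ k2 + k3 ≤ r + wt (fun m => a' m ⬝ᵥ x) :=
    fun x => slice_wt _ _ b b' c c' hkB hkC hk2r hk3r (slice_of_heq b b' c c' a a' heqA x)
  have hF1B : ∀ x : Fin n2 → ℝ,
      wt (fun l => b l ⬝ᵥ x) ≤ wt (fun m => b' m ⬝ᵥ x)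
        ∨ k3 + k1 ≤ r + wt (fun m => b' m ⬝ᵥ x) :=
    fun x => slice_wt _ _ c c' a a' hkC hkA hk3r hk1r (slice_of_heq c c' a a' b b' heqB x)
  -- the three matchings
  obtain ⟨σ3, hσ3⟩ := matching k3 (k1 + k2) c c' hk32 hk3r (by omega) hkC hF1C
  obtain ⟨σ1, hσ1⟩ := matching k1 (k2 + k3) a a' hk12 hk1r (by omega) hkA hF1A
  obtain ⟨σ2, hσ2⟩ := matching k2 (k3 + k1) b b' hk22 hk2r (by omega) hkB hF1B
  choose α hα using hσ1
  choose β hβ using hσ2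
  choose γ hγ using hσ3
  set ρ1 : Equiv.Perm (Fin r) := σ3.symm.trans σ1 with hρ1def
  set ρ2 : Equiv.Perm (Fin r) := σ3.symm.trans σ2 with hρ2def
  set κ : Fin r → ℝ :=
    fun l => α (σ3.symm l) * β (σ3.symm l) * γ (σ3.symm l) with hκdef
  have hκne : ∀ l, κ l ≠ 0 := fun l =>
    mul_ne_zero (mul_ne_zero (hα (σ3.symm l)).1 (hβ (σ3.symm l)).1) (hγ (σ3.symm l)).1
  have hpair := pair_identity a a' b b' c c' heqC
  have key : ∀ (x : Fin n3 → ℝ) (y : Fin n2 → ℝ) (i : Fin n1),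
      ∑ l, (c l ⬝ᵥ x) * ((b l ⬝ᵥ y) * a l i)
        = ∑ l, (c l ⬝ᵥ x) * (κ l * ((b (ρ2 l) ⬝ᵥ y) * a (ρ1 l) i)) := by
    intro x y i
    rw [hpair x y i]
    have hterm : ∀ m, (c' m ⬝ᵥ x) * ((b' m ⬝ᵥ y) * a' m i)
        = (c (σ3 m) ⬝ᵥ x)
          * ((α m * β m * γ m) * ((b (σ2 m) ⬝ᵥ y) * a (σ1 m) i)) := by
      intro m
      have h1 : c' m ⬝ᵥ x = γ m * (c (σ3 m) ⬝ᵥ x) := by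
        rw [(hγ m).2, smul_dotProduct, smul_eq_mul]
      have h2 : b' m ⬝ᵥ y = β m * (b (σ2 m) ⬝ᵥ y) := by
        rw [(hβ m).2, smul_dotProduct, smul_eq_mul]
      have h3 : a' m i = α m * a (σ1 m) i := by
        have := congrFun ((hα m).2) i
        simpa using this
      rw [h1, h2, h3]
      ring
    rw [Finset.sum_congr rfl (fun m _ => hterm m)]
    rw [← Equiv.sum_comp σ3.symm
      (fun m => (c (σ3 m) ⬝ᵥ x) * ((α m * β m * γ m) * ((b (σ2 m) ⬝ᵥ y) * a (σ1 m) i)))]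
    refine Finset.sum_congr rfl (fun l _ => ?_)
    rw [Equiv.apply_symm_apply]
    rfl
  obtain ⟨hid1, hid2, hκ1⟩ := endgame k1 k2 k3 a b c hkA hkB hkC hk12 hk22 hk32 hk3r
    (by omega) (by omega) ρ1 ρ2 κ hκne key
  have hσ13 : ∀ m, σ1 m = σ3 m := by
    intro m
    have := hid1 (σ3 m)
    rw [hρ1def] at this
    simpa using this
  have hσ23 : ∀ m, σ2 m = σ3 m := by
    intro m
    have := hid2 (σ3 m)
    rw [hρ2def] at this
    simpa using this
  set σ0 : Equiv.Perm (Fin r) := σ3.symm with hσ0def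
  refine ⟨σ0, fun l => α (σ3.symm l), fun l => β (σ3.symm l), fun l => γ (σ3.symm l),
    fun l => (hα (σ3.symm l)).1, fun l => (hβ (σ3.symm l)).1, fun l => (hγ (σ3.symm l)).1,
    ?_, ?_, ?_, ?_⟩
  · rw [Matrix.diagonal_mul_diagonal, Matrix.diagonal_mul_diagonal]
    have : (fun i => α (σ3.symm i) * β (σ3.symm i) * γ (σ3.symm i)) = fun _ => (1:ℝ) := by
      funext l
      exact hκ1 l
    rw [this, Matrix.diagonal_one]
  · -- T1'
    ext i m
    have hperm : ∀ l : Fin r, (σ0.permMatrix ℝ) l m = if σ3.symm l = m then 1 else 0 := by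
      intro l
      show ((σ0 : Equiv.Perm (Fin r)).toPEquiv.toMatrix : Matrix _ _ ℝ) l m = _
      rw [PEquiv.toMatrix_apply, Equiv.toPEquiv_apply]
      rw [hσ0def]
      simp [Option.mem_some_iff, eq_comm]
    rw [Matrix.mul_apply]
    have hstep : ∀ l, (T1 * Matrix.diagonal (fun l => α (σ3.symm l))) i l
        * (σ0.permMatrix ℝ) l m
        = (T1 i l * α (σ3.symm l)) * (if σ3.symm l = m then 1 else 0) := by
      intro l
      rw [Matrix.mul_diagonal, hperm l]
    rw [Finset.sum_congr rfl (fun l _ => hstep l)]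
    have hcollapse : ∑ l, (T1 i l * α (σ3.symm l)) * (if σ3.symm l = m then 1 else 0)
        = T1 i (σ3 m) * α m := by
      rw [Finset.sum_eq_single_of_mem (σ3 m) (Finset.mem_univ _)
        (fun l _ hlne => by
          rw [if_neg (fun h => hlne (by rw [← h]; simp)), mul_zero])]
      rw [if_pos (by simp), mul_one]
      simp
    rw [hcollapse]
    have h3 : a' m i = α m * a (σ1 m) i := by
      have := congrFun ((hα m).2) i
      simpa using this
    show T1' i m = _
    have : T1' i m = a' m i := rfl
    rw [this, h3, hσ13 m]
    show α m * T1 i (σ3 m) = T1 i (σ3 m) * α m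
    ring
  · -- T2'
    ext j m
    have hperm : ∀ l : Fin r, (σ0.permMatrix ℝ) l m = if σ3.symm l = m then 1 else 0 := by
      intro l
      show ((σ0 : Equiv.Perm (Fin r)).toPEquiv.toMatrix : Matrix _ _ ℝ) l m = _
      rw [PEquiv.toMatrix_apply, Equiv.toPEquiv_apply]
      rw [hσ0def]
      simp [Option.mem_some_iff, eq_comm]
    rw [Matrix.mul_apply]
    have hstep : ∀ l, (T2 * Matrix.diagonal (fun l => β (σ3.symm l))) j l
        * (σ0.permMatrix ℝ) l m
        = (T2 j l * β (σ3.symm l)) * (if σ3.symm l = m then 1 else 0) := by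
      intro l
      rw [Matrix.mul_diagonal, hperm l]
    rw [Finset.sum_congr rfl (fun l _ => hstep l)]
    have hcollapse : ∑ l, (T2 j l * β (σ3.symm l)) * (if σ3.symm l = m then 1 else 0)
        = T2 j (σ3 m) * β m := by
      rw [Finset.sum_eq_single_of_mem (σ3 m) (Finset.mem_univ _)
        (fun l _ hlne => by
          rw [if_neg (fun h => hlne (by rw [← h]; simp)), mul_zero])]
      rw [if_pos (by simp), mul_one]
      simp
    rw [hcollapse]
    have h3 : b' m j = β m * b (σ2 m) j := by
      have := congrFun ((hβ m).2) j
      simpa using this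
    show T2' j m = _
    have : T2' j m = b' m j := rfl
    rw [this, h3, hσ23 m]
    show β m * T2 j (σ3 m) = T2 j (σ3 m) * β m
    ring
  · -- T3'
    ext k m
    have hperm : ∀ l : Fin r, (σ0.permMatrix ℝ) l m = if σ3.symm l = m then 1 else 0 := by
      intro l
      show ((σ0 : Equiv.Perm (Fin r)).toPEquiv.toMatrix : Matrix _ _ ℝ) l m = _
      rw [PEquiv.toMatrix_apply, Equiv.toPEquiv_apply]
      rw [hσ0def]
      simp [Option.mem_some_iff, eq_comm]
    rw [Matrix.mul_apply]
    have hstep : ∀ l, (T3 * Matrix.diagonal (fun l => γ (σ3.symm l))) k l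
        * (σ0.permMatrix ℝ) l m
        = (T3 k l * γ (σ3.symm l)) * (if σ3.symm l = m then 1 else 0) := by
      intro l
      rw [Matrix.mul_diagonal, hperm l]
    rw [Finset.sum_congr rfl (fun l _ => hstep l)]
    have hcollapse : ∑ l, (T3 k l * γ (σ3.symm l)) * (if σ3.symm l = m then 1 else 0)
        = T3 k (σ3 m) * γ m := by
      rw [Finset.sum_eq_single_of_mem (σ3 m) (Finset.mem_univ _)
        (fun l _ hlne => by
          rw [if_neg (fun h => hlne (by rw [← h]; simp)), mul_zero])]
      rw [if_pos (by simp), mul_one]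
      simp
    rw [hcollapse]
    have h3 : c' m k = γ m * c (σ3 m) k := by
      have := congrFun ((hγ m).2) k
      simpa using this
    show T3' k m = _
    have : T3' k m = c' m k := rfl
    rw [this, h3]
    show γ m * T3 k (σ3 m) = T3 k (σ3 m) * γ m
    ring
end

section
/- Fix integers L ≥ 2, M ≥ 1, N ≥ 1 and l_0 ∈ {1,…,L−1}. Let p ∈ ℝ^L with p_{l_0} ≠ 0 and p_L ≠ 0, let q ∈ ℝ^{M×L} with Σ_{m=1}^M q_{m,l} = 1 for every l, and let r ∈ ℝ^{N×L} with Σ_{n=1}^N r_{n,l} = 1 for every l. Define δp ∈ ℝ^L by δp_{l_0} = 1, δp_L = −1, and δp_l = 0 otherwise; δq ∈ ℝ^{M×L} by δq_{m,l_0} = −(q_{m,l_0} − q_{m,L})/p_{l_0} and δq_{m,l} = 0 for l ≠ l_0; and δr ∈ ℝ^{N×L} by δr_{n,L} = −(r_{n,l_0} − r_{n,L})/p_L and δr_{n,l} = 0 for l ≠ L. Then (δp, δq, δr) is a nonzero vector satisfying Σ_l δp_l = 0, Σ_m δq_{m,l} = 0 for every l, and Σ_n δr_{n,l} = 0 for every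 l, and for every pair (m,n): Σ_{l=1}^L ( δp_l q_{m,l} r_{n,l} + p_l δq_{m,l} r_{n,l} + p_l q_{m,l} δr_{n,l} ) = 0. Consequently, the differential of the parametrization map θ = (p,q,r) ↦ (Σ_l p_l q_{m,l} r_{n,l})_{m,n}, restricted to the tangent space of the affine constraints Σ_l p_l = 1, Σ_m q_{m,l} = 1, Σ_n r_{n,l} = 1, has a nontrivial kernel at every such parameter. -/
/-- Explicit nonzero kernel direction of the differential of the two-view
latent class model parametrization. Latent classes are indexed by `Fin (n+1)` with `n ≥ 1`
(so there are `L = n + 1 ≥ 2` classes, the last one being `Fin.last n`), and `l0 ≠ Fin.last n`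
plays the role of `l_0 ∈ {1,…,L−1}`. The direction `(δp, δq, δr)` defined below is nonzero,
respects the affine constraints (its `p`-part sums to zero and each column of its `q`- and
`r`-parts sums to zero), and annihilates the derivative of every joint probability entry. -/
theorem stmt15 (n M N : ℕ) (hn : 1 ≤ n) (hM : 1 ≤ M) (hN : 1 ≤ N)
    (l0 : Fin (n + 1)) (hl0 : l0 ≠ Fin.last n)
    (p : Fin (n + 1) → ℝ) (hpl0 : p l0 ≠ 0) (hpL : p (Fin.last n) ≠ 0)
    (q : Fin M → Fin (n + 1) → ℝ) (hq : ∀ l, ∑ m, q m l = 1)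
    (r : Fin N → Fin (n + 1) → ℝ) (hr : ∀ l, ∑ k, r k l = 1)
    (δp : Fin (n + 1) → ℝ)
    (hδp : δp = fun l => if l = l0 then 1 else if l = Fin.last n then -1 else 0)
    (δq : Fin M → Fin (n + 1) → ℝ)
    (hδq : δq = fun m l => if l = l0 then -(q m l0 - q m (Fin.last n)) / p l0 else 0)
    (δr : Fin N → Fin (n + 1) → ℝ)
    (hδr : δr = fun k l =>
      if l = Fin.last n then -(r k l0 - r k (Fin.last n)) / p (Fin.last n) else 0) :
    ¬(δp = 0 ∧ δq = 0 ∧ δr = 0) ∧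
    (∑ l, δp l = 0) ∧
    (∀ l, ∑ m, δq m l = 0) ∧
    (∀ l, ∑ k, δr k l = 0) ∧
    ∀ (m : Fin M) (k : Fin N),
      ∑ l, (δp l * q m l * r k l + p l * δq m l * r k l + p l * q m l * δr k l) = 0 := by
  subst hδp hδq hδr
  refine ⟨?_, ?_, ?_, ?_, ?_⟩
  · rintro ⟨h, -, -⟩
    have := congrFun h l0
    simp at this
  · have : (fun l => if l = l0 then (1:ℝ) else if l = Fin.last n then -1 else 0)
        = fun l => (if l = l0 then (1:ℝ) else 0) + (if l = Fin.last n then -1 else 0) := by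
      funext l
      by_cases h1 : l = l0
      · subst h1; simp [hl0]
      · by_cases h2 : l = Fin.last n <;> simp [h1, h2, Ne.symm hl0]
    rw [this, Finset.sum_add_distrib]
    simp
  · intro l
    by_cases h : l = l0
    · subst h
      simp only [eq_self_iff_true, if_true]
      rw [← Finset.sum_div]
      have : ∑ m, -(q m l - q m (Fin.last n)) = 0 := by
        simp [Finset.sum_sub_distrib, hq]
      rw [this, zero_div]
    · simp [h]
  · intro l
    by_cases h : l = Fin.last n
    · subst h
      simp only [eq_self_iff_true, if_true]
      rw [← Finset.sum_div]
      have : ∑ k, -(r k l0 - r k (Fin.last n)) = 0 := by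
        simp [Finset.sum_sub_distrib, hr]
      rw [this, zero_div]
    · simp [h]
  · intro m k
    have key : ∀ l : Fin (n+1),
        ((if l = l0 then (1:ℝ) else if l = Fin.last n then -1 else 0) * q m l * r k l
        + p l * (if l = l0 then -(q m l0 - q m (Fin.last n)) / p l0 else 0) * r k l
        + p l * q m l * (if l = Fin.last n then -(r k l0 - r k (Fin.last n)) / p (Fin.last n) else 0))
        = (if l = l0 then q m (Fin.last n) * r k l0 else 0)
          + (if l = Fin.last n then -(q m (Fin.last n) * r k l0) else 0) := by
      intro l
      by_cases h1 : l = l0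
      · subst h1
        simp only [if_pos rfl, if_neg hl0, ↓reduceIte]
        field_simp
        ring
      · by_cases h2 : l = Fin.last n
        · subst h2
          simp only [if_neg h1, if_pos rfl, ↓reduceIte]
          field_simp
          ring
        · simp [h1, h2]
    rw [Finset.sum_congr rfl (fun l _ => key l), Finset.sum_add_distrib]
    simp
end

section
/- Let K ≥ 2 and let Γ be a J×K binary matrix with Γ_{j,1} ≥ Γ_{j,2} for all j ∈ {1,…,J} (the children of the second latent variable are a subset of the children of the first, violating the subset condition). Let 𝒳_j be finite sets, π : {0,1}^K → (0,1] strictly positive with Σ_h π_h = 1, and (P_{j,h}) pmfs on 𝒳_j compatible with Γ. Write h = (h_1, h_2, h₊) with h₊ ∈ {0,1}^{K−2}, and define π' by π'_{(1,h_2,h₊)} = π_{(1,1−h_2,h₊)} and π'_{(0,h_2,h₊)} = π_{(0,h_2,h₊)}, and P' by P'_{j,(1,h_2,h₊)} = P_{j,(1,1−h_2,h₊)} and P'_{j,(0,h_2,h₊)} = P_{j,(0,h_2,h₊)}. Then: (a) (P'_{j,h}) is compatible with the same Γ; (b) Σ_h π'_h ∏_j P'_{j,h}(x_j) = Σ_h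 π_h ∏_j P_{j,h}(x_j) for all x ∈ ∏_j 𝒳_j; and (c) if under π the first two latent coordinates are independent, i.e. π(H_1 = a, H_2 = b) = π(H_1 = a)·π(H_2 = b) for all a, b (where π(H_1 = a, H_2 = b) := Σ_{h₊} π_{(a,b,h₊)}), with 0 < π(H_1 = 1) < 1 and π(H_2 = 1) ≠ 1/2, then under π' the first two latent coordinates are dependent. Hence the latent dependence structure is not identifiable when the subset condition fails. -/
/-- The sign flip of the second latent coordinate on the part of the latent space where the
first latent coordinate equals `1`: `flipTwo h = (1, 1 − h₂, h₊)` if `h = (1, h₂, h₊)`, and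
`flipTwo h = h` if `h₁ = 0`. -/
def flipTwo (K : ℕ) (hK : 2 ≤ K) (h : Fin K → Bool) : Fin K → Bool :=
  if h ⟨0, by omega⟩ = true then
    Function.update h ⟨1, by omega⟩ (!(h ⟨1, by omega⟩))
  else h

/-- The joint marginal `ρ(H₁ = a, H₂ = b) = Σ_{h₊} ρ(a, b, h₊)` of the first two latent
coordinates under the latent weight function `ρ`. -/
def marg2 (K : ℕ) (hK : 2 ≤ K) (ρ : (Fin K → Bool) → ℝ) (a b : Bool) : ℝ :=
  ∑ h ∈ Finset.univ.filter
      (fun h : Fin K → Bool => h ⟨0, by omega⟩ = a ∧ h ⟨1, by omega⟩ = b), ρ h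

section aux

variable {K : ℕ} (hK : 2 ≤ K)

lemma flipTwo_apply_ne (h : Fin K → Bool) (k : Fin K) (hk : k ≠ ⟨1, by omega⟩) :
    flipTwo K hK h k = h k := by
  unfold flipTwo
  split
  · exact Function.update_of_ne hk _ _
  · rfl

lemma flipTwo_zero (h : Fin K → Bool) :
    flipTwo K hK h ⟨0, by omega⟩ = h ⟨0, by omega⟩ :=
  flipTwo_apply_ne hK h _ (by simp [Fin.ext_iff])

lemma flipTwo_one (h : Fin K → Bool) :
    flipTwo K hK h ⟨1, by omega⟩
      = if h ⟨0, by omega⟩ = true then !(h ⟨1, by omega⟩) else h ⟨1, by omega⟩ := by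
  unfold flipTwo
  split <;> simp_all

lemma flipTwo_invol : Function.Involutive (flipTwo K hK) := by
  intro h
  by_cases h0 : h ⟨0, by omega⟩ = true
  · have h0' : flipTwo K hK h ⟨0, by omega⟩ = true := by rw [flipTwo_zero]; exact h0
    funext k
    by_cases hk : k = ⟨1, by omega⟩
    · subst hk
      rw [flipTwo_one, if_pos h0', flipTwo_one, if_pos h0, Bool.not_not]
    · rw [flipTwo_apply_ne hK _ _ hk, flipTwo_apply_ne hK _ _ hk]
  · have e : flipTwo K hK h = h := if_neg h0
    rw [e, e]

lemma marg2_flip_true (π : (Fin K → Bool) → ℝ) (b : Bool) :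
    marg2 K hK (fun h => π (flipTwo K hK h)) true b = marg2 K hK π true (!b) := by
  unfold marg2
  refine Finset.sum_nbij' (flipTwo K hK) (flipTwo K hK) ?_ ?_ ?_ ?_ ?_
  · intro h hh
    simp only [Finset.mem_filter, Finset.mem_univ, true_and] at hh ⊢
    refine ⟨by rw [flipTwo_zero]; exact hh.1, ?_⟩
    rw [flipTwo_one, if_pos hh.1, hh.2]
  · intro h hh
    simp only [Finset.mem_filter, Finset.mem_univ, true_and] at hh ⊢
    refine ⟨by rw [flipTwo_zero]; exact hh.1, ?_⟩
    rw [flipTwo_one, if_pos hh.1, hh.2, Bool.not_not]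
  · intro h _; exact flipTwo_invol hK h
  · intro h _; exact flipTwo_invol hK h
  · intro h _; rfl

lemma marg2_flip_false (π : (Fin K → Bool) → ℝ) (b : Bool) :
    marg2 K hK (fun h => π (flipTwo K hK h)) false b = marg2 K hK π false b := by
  unfold marg2
  refine Finset.sum_congr rfl fun h hh => ?_
  simp only [Finset.mem_filter, Finset.mem_univ, true_and] at hh
  have h0 : h ⟨0, by omega⟩ ≠ true := by simp [hh.1]
  have e : flipTwo K hK h = h := if_neg h0
  simp only [e]

lemma marg2_total (π : (Fin K → Bool) → ℝ) :
    marg2 K hK π true true + marg2 K hK π true false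
      + marg2 K hK π false true + marg2 K hK π false false = ∑ h, π h := by
  have := Finset.sum_fiberwise (Finset.univ : Finset (Fin K → Bool))
    (fun h => ((h ⟨0, by omega⟩ : Bool), (h ⟨1, by omega⟩ : Bool))) π
  rw [← this, Fintype.sum_prod_type]
  have key : ∀ a b : Bool, marg2 K hK π a b
      = ∑ h ∈ Finset.univ.filter
          (fun h : Fin K → Bool => (h ⟨0, by omega⟩, h ⟨1, by omega⟩) = (a, b)), π h := by
    intro a b
    unfold marg2
    refine Finset.sum_congr ?_ (fun _ _ => rfl)
    apply Finset.filter_congr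
    intro h _
    simp [Prod.ext_iff]
  simp only [key, Fintype.sum_bool]
  ring

end aux

/-- Necessity of the subset condition. Suppose the children of the second
latent variable are a subset of the children of the first (`Γ j 1 = 1 → Γ j 0 = 1` for all `j`,
0-indexed). Define the alternative parameters `π' = π ∘ flipTwo` and `P'_{j,h} = P_{j, flipTwo h}`.
Then (a) `P'` is compatible with the same `Γ`; (b) `(π', P')` induces the same observed pmf as
`(π, P)`; and (c) if the first two latent coordinates are independent under `π`, with
`0 < π(H₁=1) < 1` and `π(H₂=1) ≠ 1/2`, then they are dependent under `π'`. -/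
theorem stmt18 (J K : ℕ) (hK : 2 ≤ K)
    (X : Fin J → Type*) [∀ j, Fintype (X j)]
    (Γ : Fin J → Fin K → Bool)
    (hdom : ∀ j : Fin J, Γ j ⟨1, by omega⟩ = true → Γ j ⟨0, by omega⟩ = true)
    (π : (Fin K → Bool) → ℝ) (hπpos : ∀ h, 0 < π h) (hπle : ∀ h, π h ≤ 1)
    (hπ1 : ∑ h, π h = 1)
    (P : (j : Fin J) → (Fin K → Bool) → X j → ℝ)
    (hPnn : ∀ j h x, 0 ≤ P j h x) (hPsum : ∀ j h, ∑ x, P j h x = 1)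
    (hPcomp : ∀ j h h', P j h = P j h' ↔ (∀ k, Γ j k = true → h k = h' k)) :
    -- (a) the flipped conditional pmfs are compatible with the same `Γ`
    (∀ (j : Fin J) (h h' : Fin K → Bool),
      P j (flipTwo K hK h) = P j (flipTwo K hK h') ↔ (∀ k, Γ j k = true → h k = h' k)) ∧
    -- (b) the observed pmf is unchanged
    (∀ x : (j : Fin J) → X j,
      ∑ h : Fin K → Bool, π (flipTwo K hK h) * ∏ j, P j (flipTwo K hK h) (x j)
        = ∑ h : Fin K → Bool, π h * ∏ j, P j h (x j)) ∧
    -- (c) independence of the first two latent coordinates under `π` becomes dependence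
    ((∀ a b : Bool, marg2 K hK π a b
        = (marg2 K hK π a true + marg2 K hK π a false)
          * (marg2 K hK π true b + marg2 K hK π false b)) →
      0 < marg2 K hK π true true + marg2 K hK π true false →
      marg2 K hK π true true + marg2 K hK π true false < 1 →
      marg2 K hK π true true + marg2 K hK π false true ≠ 1 / 2 →
      ¬ ∀ a b : Bool, marg2 K hK (fun h => π (flipTwo K hK h)) a b
        = (marg2 K hK (fun h => π (flipTwo K hK h)) a true
            + marg2 K hK (fun h => π (flipTwo K hK h)) a false)
          * (marg2 K hK (fun h => π (flipTwo K hK h)) true b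
            + marg2 K hK (fun h => π (flipTwo K hK h)) false b)) := by
  refine ⟨?_, ?_, ?_⟩
  · -- (a)
    intro j h h'
    rw [hPcomp]
    constructor
    · intro H k hk
      by_cases hk1 : k = ⟨1, by omega⟩
      · subst hk1
        have h0eq : h ⟨0, by omega⟩ = h' ⟨0, by omega⟩ := by
          have := H ⟨0, by omega⟩ (hdom j hk)
          rwa [flipTwo_zero, flipTwo_zero] at this
        have h1 := H ⟨1, by omega⟩ hk
        rw [flipTwo_one, flipTwo_one, h0eq] at h1
        by_cases h0 : h' ⟨0, by omega⟩ = true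
        · rw [if_pos h0, if_pos h0] at h1
          exact Bool.not_inj h1
        · rwa [if_neg h0, if_neg h0] at h1
      · have := H k hk
        rwa [flipTwo_apply_ne hK _ _ hk1, flipTwo_apply_ne hK _ _ hk1] at this
    · intro H k hk
      by_cases hk1 : k = ⟨1, by omega⟩
      · subst hk1
        rw [flipTwo_one, flipTwo_one, H ⟨0, by omega⟩ (hdom j hk), H ⟨1, by omega⟩ hk]
      · rw [flipTwo_apply_ne hK _ _ hk1, flipTwo_apply_ne hK _ _ hk1]
        exact H k hk
  · -- (b)
    intro x
    exact Equiv.sum_comp (Function.Involutive.toPerm _ (flipTwo_invol hK))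
      (fun h => π h * ∏ j, P j h (x j))
  · -- (c)
    intro hind hp0 hp1 hq hind'
    have htot : marg2 K hK π true true + marg2 K hK π true false
        + marg2 K hK π false true + marg2 K hK π false false = 1 := by
      rw [marg2_total hK π, hπ1]
    have e11 : marg2 K hK (fun h => π (flipTwo K hK h)) true true
        = marg2 K hK π true false := by rw [marg2_flip_true hK π true]; norm_num
    have e10 : marg2 K hK (fun h => π (flipTwo K hK h)) true false
        = marg2 K hK π true true := by rw [marg2_flip_true hK π false]; norm_num
    have e01 : marg2 K hK (fun h => π (flipTwo K hK h)) false true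
        = marg2 K hK π false true := marg2_flip_false hK π true
    have key := hind' true true
    rw [e11, e10, e01] at key
    have hBval : marg2 K hK π true false
        = (marg2 K hK π true true + marg2 K hK π true false)
          * (1 - (marg2 K hK π true true + marg2 K hK π false true)) := by
      linear_combination (hind true false)
        + (marg2 K hK π true true + marg2 K hK π true false) * htot
    have hCval : marg2 K hK π false true
        = (1 - (marg2 K hK π true true + marg2 K hK π true false))
          * (marg2 K hK π true true + marg2 K hK π false true) := by
      linear_combination (hind false true)
        + (marg2 K hK π true true + marg2 K hK π false true) * htot
    have hzero : (marg2 K hK π true true + marg2 K hK π true false)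
        * ((1 - (marg2 K hK π true true + marg2 K hK π true false))
          * (1 - 2 * (marg2 K hK π true true + marg2 K hK π false true))) = 0 := by
      linear_combination key
        + ((marg2 K hK π true true + marg2 K hK π true false) - 1) * hBval
        + (marg2 K hK π true true + marg2 K hK π true false) * hCval
    have hp' : marg2 K hK π true true + marg2 K hK π true false ≠ 0 := ne_of_gt hp0
    have h1p : (1 : ℝ) - (marg2 K hK π true true + marg2 K hK π true false) ≠ 0 := by
      intro h; apply absurd hp1; linarith
    have h12q : (1 : ℝ) - 2 * (marg2 K hK π true true + marg2 K hK π false true) ≠ 0 := by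
      intro h; apply hq; linarith
    exact (mul_ne_zero hp' (mul_ne_zero h1p h12q)) hzero
end
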